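/- arXiv:2510.11969 — 5 statements merged into one kernel-verified Lean document; each statement's English description precedes it below -/
import Mathlib

section
/- Let G be a finite connected bipartite undirected graph and let G' be obtained from G by adding a self-loop at one vertex. Then the square group of G' is isomorphic to the free product π1^□(G) ∗ Z/2Z. In particular, every even-length cycle of G' is square-decomposable if and only if every cycle of G is square-decomposable (i.e. the even square group of G' is trivial if and only if the even square group of G is trivial). -/
variable {V : Type}

/-- A walk in a graph: a nonempty list of vertices with consecutive vertices adjacent. -/
def IsWalk (G : V → V → Prop) (p : List V) : Prop := p ≠ [] ∧ List.Chain' G p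

/-- The length (number of steps) of a walk given as its list of vertices. -/
def walkLen (p : List V) : ℕ := p.length - 1

/-- A cycle: a walk whose first and last vertices coincide. -/
def IsCycle (G : V → V → Prop) (p : List V) : Prop := IsWalk G p ∧ p.head? = p.getLast?

/-- A cycle based at the vertex `a`. -/
def IsCycleAt (G : V → V → Prop) (a : V) (p : List V) : Prop := IsCycle G p ∧ p.head? = some a

/-- A walk is non-backtracking when it contains no backtrack `u v u`. -/
def IsNonBacktracking (p : List V) : Prop :=
  ∀ (i : ℕ) (h : i + 2 < p.length), p[i]'(by omega) ≠ p[i + 2]'h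

/-- One elementary move: insertion of a backtrack or of a square into a walk. -/
inductive SqStep (G : V → V → Prop) : List V → List V → Prop
  | backtrack (l₁ l₂ : List V) (u v : V) (huv : G u v) (hvu : G v u) :
      SqStep G (l₁ ++ u :: l₂) (l₁ ++ u :: v :: u :: l₂)
  | square (l₁ l₂ : List V) (u x y z : V)
      (h1 : G u x) (h2 : G x y) (h3 : G y z) (h4 : G z u)
      (hne1 : u ≠ y) (hne2 : x ≠ z) :
      SqStep G (l₁ ++ u :: l₂) (l₁ ++ u :: x :: y :: z :: u :: l₂)

/-- Square-equivalence of walks: the equivalence generated by finitely many insertions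
and deletions of backtracks and of squares. -/
def SquareEquiv (G : V → V → Prop) : List V → List V → Prop :=
  Relation.ReflTransGen (fun p q => SqStep G p q ∨ SqStep G q p)

/-- A cycle is square-decomposable when it is square-equivalent to the trivial cycle
at its base point. -/
def IsSquareDecomposable (G : V → V → Prop) (p : List V) : Prop :=
  ∃ a : V, p.head? = some a ∧ SquareEquiv G p [a]

def GraphConnected (G : V → V → Prop) : Prop :=
  ∀ u v : V, ∃ p : List V, IsWalk G p ∧ p.head? = some u ∧ p.getLast? = some v

def GraphBipartite (G : V → V → Prop) : Prop :=
  ∃ f : V → Bool, ∀ u v : V, G u v → f u ≠ f v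

/-- `w : List V → P` presents the square group `π₁^□(G)[a]` of `G` at `a`:
it is multiplicative on concatenation of cycles at `a`, it identifies exactly the
square-equivalent cycles, and it is surjective. -/
def PresentsSquareGroup (G : V → V → Prop) (a : V) (P : Type) [Group P] (w : List V → P) :
    Prop :=
  (∀ p q : List V, IsCycleAt G a p → IsCycleAt G a q → w (p ++ q.tail) = w p * w q) ∧
  (∀ p q : List V, IsCycleAt G a p → IsCycleAt G a q → (w p = w q ↔ SquareEquiv G p q)) ∧
  (∀ g : P, ∃ p : List V, IsCycleAt G a p ∧ w p = g)

theorem List.chain'_append {R : V → V → Prop} {l₁ l₂ : List V} :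
    List.Chain' R (l₁ ++ l₂) ↔ List.Chain' R l₁ ∧ List.Chain' R l₂ ∧
      ∀ x ∈ l₁.getLast?, ∀ y ∈ l₂.head?, R x y := List.isChain_append

theorem List.chain'_cons {R : V → V → Prop} {x y : V} {l : List V} :
    List.Chain' R (x :: y :: l) ↔ R x y ∧ List.Chain' R (y :: l) := List.isChain_cons_cons

theorem List.chain'_cons' {R : V → V → Prop} {x : V} {l : List V} :
    List.Chain' R (x :: l) ↔ (∀ y ∈ l.head?, R x y) ∧ List.Chain' R l := List.isChain_cons

theorem List.chain'_reverse {R : V → V → Prop} {l : List V} :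
    List.Chain' R l.reverse ↔ List.Chain' (flip R) l := List.isChain_reverse

theorem List.chain'_singleton {R : V → V → Prop} (x : V) : List.Chain' R [x] :=
  List.isChain_singleton x

namespace SqAux
open List

theorem sqe_refl (H : V → V → Prop) (p : List V) : SquareEquiv H p p := Relation.ReflTransGen.refl

theorem sqe_symm {H : V → V → Prop} {p q : List V} (h : SquareEquiv H p q) : SquareEquiv H q p :=
  (@Relation.ReflTransGen.symmetric _ _ ⟨fun _ _ h => h.symm⟩).symm _ _ h

theorem sqe_trans {H : V → V → Prop} {p q r : List V} (h1 : SquareEquiv H p q)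
    (h2 : SquareEquiv H q r) : SquareEquiv H p r := h1.trans h2

theorem sqe_of_step {H : V → V → Prop} {p q : List V} (h : SqStep H p q) : SquareEquiv H p q :=
  Relation.ReflTransGen.single (Or.inl h)

theorem sqstep_congr {H : V → V → Prop} {p q : List V} (A B : List V) (h : SqStep H p q) :
    SqStep H (A ++ p ++ B) (A ++ q ++ B) := by
  cases h with
  | backtrack l₁ l₂ u v huv hvu =>
      have := SqStep.backtrack (G := H) (A ++ l₁) (l₂ ++ B) u v huv hvu
      simpa [List.append_assoc] using this
  | square l₁ l₂ u x y z h1 h2 h3 h4 hne1 hne2 =>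
      have := SqStep.square (G := H) (A ++ l₁) (l₂ ++ B) u x y z h1 h2 h3 h4 hne1 hne2
      simpa [List.append_assoc] using this

theorem sqe_congr {H : V → V → Prop} {p q : List V} (A B : List V) (h : SquareEquiv H p q) :
    SquareEquiv H (A ++ p ++ B) (A ++ q ++ B) := by
  induction h with
  | refl => exact Relation.ReflTransGen.refl
  | tail _ hstep ih => exact ih.tail (hstep.imp (sqstep_congr A B) (sqstep_congr A B))

theorem sqstep_mono {H H' : V → V → Prop} (hm : ∀ u v, H u v → H' u v) {p q : List V}
    (h : SqStep H p q) : SqStep H' p q := by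
  cases h with
  | backtrack l₁ l₂ u v huv hvu => exact SqStep.backtrack l₁ l₂ u v (hm _ _ huv) (hm _ _ hvu)
  | square l₁ l₂ u x y z h1 h2 h3 h4 hne1 hne2 =>
      exact SqStep.square l₁ l₂ u x y z (hm _ _ h1) (hm _ _ h2) (hm _ _ h3) (hm _ _ h4) hne1 hne2

theorem sqe_mono {H H' : V → V → Prop} (hm : ∀ u v, H u v → H' u v) {p q : List V}
    (h : SquareEquiv H p q) : SquareEquiv H' p q := by
  induction h with
  | refl => exact Relation.ReflTransGen.refl
  | tail _ hstep ih => exact ih.tail (hstep.imp (sqstep_mono hm) (sqstep_mono hm))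

theorem head?_mid (A : List V) (x : V) (B C : List V) :
    (A ++ x :: B).head? = (A ++ x :: C).head? := by cases A <;> simp

theorem sqstep_head? {H : V → V → Prop} {p q : List V} (h : SqStep H p q) :
    p.head? = q.head? := by
  cases h with
  | backtrack l₁ l₂ u v _ _ => exact head?_mid l₁ u _ _
  | square l₁ l₂ u x y z _ _ _ _ _ _ => exact head?_mid l₁ u _ _

theorem sqstep_getLast? {H : V → V → Prop} {p q : List V} (h : SqStep H p q) :
    p.getLast? = q.getLast? := by
  cases h with
  | backtrack l₁ l₂ u v _ _ =>
      rw [List.getLast?_append_cons, List.getLast?_append_cons, List.getLast?_cons_cons,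
        List.getLast?_cons_cons]
  | square l₁ l₂ u x y z _ _ _ _ _ _ =>
      rw [List.getLast?_append_cons, List.getLast?_append_cons, List.getLast?_cons_cons,
        List.getLast?_cons_cons, List.getLast?_cons_cons, List.getLast?_cons_cons]

theorem sqstep_chain' {H : V → V → Prop} {p q : List V} (h : SqStep H p q) :
    List.Chain' H p ↔ List.Chain' H q := by
  cases h with
  | backtrack l₁ l₂ u v huv hvu =>
      rw [List.chain'_append, List.chain'_append]
      have key : List.Chain' H (u :: v :: u :: l₂) ↔ List.Chain' H (u :: l₂) := by
        rw [List.chain'_cons, List.chain'_cons]; simp [huv, hvu]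
      simp only [key, List.head?_cons]
  | square l₁ l₂ u x y z h1 h2 h3 h4 _ _ =>
      rw [List.chain'_append, List.chain'_append]
      have key : List.Chain' H (u :: x :: y :: z :: u :: l₂) ↔ List.Chain' H (u :: l₂) := by
        rw [List.chain'_cons, List.chain'_cons, List.chain'_cons, List.chain'_cons]
        simp [h1, h2, h3, h4]
      simp only [key, List.head?_cons]

theorem ne_nil_of_head?_eq_some {l : List V} {x : V} (h : l.head? = some x) : l ≠ [] := by
  intro hn; subst hn; simp at h

theorem sqstep_ne_nil {H : V → V → Prop} {p q : List V} (h : SqStep H p q) :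
    (p ≠ []) ↔ (q ≠ []) := by
  cases h <;> simp

theorem sqstep_cycleAt {H : V → V → Prop} {a : V} {p q : List V} (h : SqStep H p q) :
    IsCycleAt H a p ↔ IsCycleAt H a q := by
  have h1 := sqstep_head? h
  have h2 := sqstep_getLast? h
  have h3 := sqstep_chain' h
  have h4 := sqstep_ne_nil h
  unfold IsCycleAt IsCycle IsWalk
  rw [h1, h2, h3, h4]

theorem sqe_cycleAt {H : V → V → Prop} {a : V} {p q : List V} (h : SquareEquiv H p q)
    (hp : IsCycleAt H a p) : IsCycleAt H a q := by
  induction h with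
  | refl => exact hp
  | tail _ hstep ih =>
      rcases hstep with hstep | hstep
      · exact (sqstep_cycleAt hstep).1 ih
      · exact (sqstep_cycleAt hstep).2 ih

theorem isCycleAt_iff {H : V → V → Prop} {a : V} {p : List V} :
    IsCycleAt H a p ↔ List.Chain' H p ∧ p.head? = some a ∧ p.getLast? = some a := by
  unfold IsCycleAt IsCycle IsWalk
  constructor
  · rintro ⟨⟨⟨hn, hc⟩, he⟩, hh⟩
    exact ⟨hc, hh, he ▸ hh⟩
  · rintro ⟨hc, hh, hl⟩
    exact ⟨⟨⟨ne_nil_of_head?_eq_some hh, hc⟩, hh.trans hl.symm⟩, hh⟩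

theorem cyc_triv (H : V → V → Prop) (a : V) : IsCycleAt H a [a] :=
  isCycleAt_iff.2 ⟨List.chain'_singleton a, rfl, rfl⟩

/-- retrace: a walk followed by its own reverse is square-equivalent to the trivial cycle. -/
theorem retrace2 {H : V → V → Prop} (hs : Symmetric H) :
    ∀ (r : List V) (x : V), List.Chain' H r → r.head? = some x →
      SquareEquiv H [x] (r ++ r.reverse.tail) := by
  intro r
  induction r using List.reverseRecOn with
  | nil => intro x _ hx; simp at hx
  | append_singleton A v ih =>
      intro x hc hx
      rcases eq_or_ne A [] with rfl | hA
      · simp at hx; subst hx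
        simpa using sqe_refl H [v]
      · have hAx : A.head? = some x := by
          rwa [List.head?_append_of_ne_nil _ hA] at hx
        have hcA : List.Chain' H A := (List.chain'_append.1 hc).1
        have ihA := ih x hcA hAx
        obtain ⟨D, u, hDu⟩ : ∃ D u, A = D ++ [u] := by
          rcases A.eq_nil_or_concat with rfl | ⟨D, u, h⟩
          · exact absurd rfl hA
          · exact ⟨D, u, by simpa [List.concat_eq_append] using h⟩
        have huv : H u v := by
          have := (List.chain'_append.1 hc).2.2
          exact this u (by simp [hDu]) v (by simp)
        have step : SqStep H (A ++ A.reverse.tail) ((A ++ [v]) ++ (A ++ [v]).reverse.tail) := by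
          have : SqStep H (D ++ u :: A.reverse.tail)
              (D ++ u :: v :: u :: A.reverse.tail) := SqStep.backtrack D _ u v huv (hs huv)
          simpa [hDu, List.append_assoc] using this
        exact ihA.tail (Or.inl step)

theorem retrace1 {H : V → V → Prop} (hs : Symmetric H) (r : List V) (x : V)
    (hc : List.Chain' H r) (hx : r.getLast? = some x) :
    SquareEquiv H [x] (r.reverse ++ r.tail) := by
  have hc' : List.Chain' H r.reverse := by
    rw [List.chain'_reverse]
    exact hc.imp (fun a b h => hs h)
  have hx' : r.reverse.head? = some x := by rwa [List.head?_reverse]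
  have := retrace2 hs r.reverse x hc' hx'
  rwa [List.reverse_reverse] at this

theorem cyc_cat {H : V → V → Prop} {a : V} {p q : List V} (hp : IsCycleAt H a p)
    (hq : IsCycleAt H a q) : IsCycleAt H a (p ++ q.tail) := by
  rw [isCycleAt_iff] at hp hq ⊢
  obtain ⟨hpc, hph, hpl⟩ := hp
  obtain ⟨hqc, hqh, hql⟩ := hq
  have hq' : q = a :: q.tail := List.eq_cons_of_mem_head? hqh
  rcases eq_or_ne q.tail [] with ht | ht
  · simp [ht, hpc, hph, hpl]
  · refine ⟨?_, ?_, ?_⟩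
    · rw [List.chain'_append]
      refine ⟨hpc, ?_, ?_⟩
      · have := hqc
        rw [hq'] at this
        exact this.tail
      · intro xx hxx yy hyy
        have hxa : xx = a := by rw [hpl] at hxx; exact Option.some.inj hxx.symm ▸ rfl
        have := hqc
        rw [hq', List.chain'_cons'] at this
        subst hxa
        exact this.1 yy hyy
    · rw [List.head?_append_of_ne_nil _ (ne_nil_of_head?_eq_some hph)]
      exact hph
    · rw [List.getLast?_append_of_ne_nil _ ht]
      rw [hq', show a :: q.tail = [a] ++ q.tail from rfl,
        List.getLast?_append_of_ne_nil _ ht] at hql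
      exact hql

theorem cyc_mono {H H' : V → V → Prop} (hm : ∀ u v, H u v → H' u v) {a : V} {p : List V}
    (hp : IsCycleAt H a p) : IsCycleAt H' a p := by
  rw [isCycleAt_iff] at hp ⊢
  exact ⟨hp.1.imp (fun {x y} h => hm x y h), hp.2⟩

end SqAux

section Part2
open List SqAux
variable {V : Type}

def Fprod {M : Type} [Monoid M] (e : V → V → M) : List V → M
  | [] => 1
  | [_] => 1
  | u :: v :: l => e u v * Fprod e (v :: l)

theorem Fprod_nil {M : Type} [Monoid M] (e : V → V → M) : Fprod e [] = 1 := rfl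
theorem Fprod_single {M : Type} [Monoid M] (e : V → V → M) (x : V) : Fprod e [x] = 1 := rfl
theorem Fprod_cons₂ {M : Type} [Monoid M] (e : V → V → M) (u v : V) (l : List V) :
    Fprod e (u :: v :: l) = e u v * Fprod e (v :: l) := rfl

theorem Fprod_append {M : Type} [Monoid M] (e : V → V → M) (A : List V) (x : V) (B : List V) :
    Fprod e (A ++ x :: B) = Fprod e (A ++ [x]) * Fprod e (x :: B) := by
  induction A with
  | nil => simp [Fprod_single]
  | cons a A ih =>
      cases A with
      | nil => simp [Fprod_cons₂, Fprod_single, mul_assoc]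
      | cons a' A' =>
          simp only [List.cons_append, Fprod_cons₂] at *
          rw [ih, mul_assoc]

def loopCount [DecidableEq V] : List V → ℕ
  | u :: v :: l => (if u = v then 1 else 0) + loopCount (v :: l)
  | _ => 0

theorem loopCount_nil [DecidableEq V] : (loopCount ([] : List V)) = 0 := rfl
theorem loopCount_single [DecidableEq V] (x : V) : loopCount [x] = 0 := rfl
theorem loopCount_cons₂ [DecidableEq V] (u v : V) (l : List V) :
    loopCount (u :: v :: l) = (if u = v then 1 else 0) + loopCount (v :: l) := rfl

theorem loopCount_append [DecidableEq V] (A : List V) (x : V) (B : List V) :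
    loopCount (A ++ x :: B) = loopCount (A ++ [x]) + loopCount (x :: B) := by
  induction A with
  | nil => simp [loopCount_single]
  | cons a A ih =>
      cases A with
      | nil => simp [loopCount_cons₂, loopCount_single, Nat.add_assoc]
      | cons a' A' =>
          simp only [List.cons_append, loopCount_cons₂] at *
          rw [ih, Nat.add_assoc]

theorem loopCount_eq_zero [DecidableEq V] {H : V → V → Prop} (hne : ∀ u, ¬ H u u) :
    ∀ l : List V, List.Chain' H l → loopCount l = 0 := by
  intro l
  induction l with
  | nil => intro; rfl
  | cons u l ih =>
      cases l with
      | nil => intro; rfl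
      | cons v l' =>
          intro hc
          rw [List.chain'_cons] at hc
          have : u ≠ v := fun h => hne u (h ▸ hc.1)
          rw [loopCount_cons₂, if_neg this, ih hc.2]

/-- The "dance": transporting decomposability along the chosen path. -/
theorem dance {H : V → V → Prop} (hs : Symmetric H) {a c : V} {r : List V}
    (hrc : List.Chain' H r) (hrh : r.head? = some a) (hrl : r.getLast? = some c)
    {l : List V} (hlast : (c :: l).getLast? = some c)
    (h : SquareEquiv H (r ++ l ++ r.reverse.tail) [a]) :
    SquareEquiv H (c :: l) [c] := by
  rcases eq_or_ne l [] with rfl | hl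
  · exact sqe_refl H [c]
  · obtain ⟨W, hW⟩ : ∃ W, l = W ++ [c] := by
      rw [show c :: l = [c] ++ l from rfl, List.getLast?_append_of_ne_nil _ hl] at hlast
      exact ⟨l.dropLast, (List.dropLast_append_getLast? _ hlast).symm⟩
    have hr' : r = a :: r.tail := List.eq_cons_of_mem_head? hrh
    have hrev : r.reverse = r.tail.reverse ++ [a] := by
      conv_lhs => rw [hr']
      simp
    have hR1 : SquareEquiv H [c] (r.reverse ++ r.tail) := retrace1 hs r c hrc hrl
    -- X := r.tail.reverse ++ (r ++ l ++ r.reverse.tail) ++ r.tail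
    have A1 : SquareEquiv H (r.tail.reverse ++ (r ++ l ++ r.reverse.tail) ++ r.tail)
        (r.tail.reverse ++ [a] ++ r.tail) := sqe_congr _ _ h
    have A2 : SquareEquiv H (r.tail.reverse ++ [a] ++ r.tail) [c] := by
      have : r.tail.reverse ++ [a] ++ r.tail = r.reverse ++ r.tail := by
        simp [hrev, List.append_assoc]
      rw [this]; exact sqe_symm hR1
    have A3 : SquareEquiv H (r.tail.reverse ++ (r ++ l ++ r.reverse.tail) ++ r.tail)
        (c :: l) := by
      have e1 : r.tail.reverse ++ (r ++ l ++ r.reverse.tail) ++ r.tail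
          = ([] : List V) ++ (r.reverse ++ r.tail) ++ (l ++ (r.reverse.tail ++ r.tail)) := by
        conv_lhs => rw [hr']
        rw [hrev]
        simp [List.append_assoc]
      have step1 : SquareEquiv H (r.tail.reverse ++ (r ++ l ++ r.reverse.tail) ++ r.tail)
          (([] : List V) ++ [c] ++ (l ++ (r.reverse.tail ++ r.tail))) := by
        rw [e1]
        exact sqe_congr [] _ (sqe_symm hR1)
      have hrevc : r.reverse = c :: r.reverse.tail := by
        refine List.eq_cons_of_mem_head? ?_
        rw [List.head?_reverse, hrl]; rfl
      have e2 : ([] : List V) ++ [c] ++ (l ++ (r.reverse.tail ++ r.tail))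
          = (c :: W) ++ (r.reverse ++ r.tail) ++ ([] : List V) := by
        rw [hW]
        conv_rhs => rw [hrevc]
        simp [List.append_assoc]
      have step2 : SquareEquiv H (([] : List V) ++ [c] ++ (l ++ (r.reverse.tail ++ r.tail)))
          ((c :: W) ++ [c] ++ ([] : List V)) := by
        rw [e2]
        exact sqe_congr _ _ (sqe_symm hR1)
      have e3 : (c :: W) ++ [c] ++ ([] : List V) = c :: l := by simp [hW]
      rw [e3] at step2
      exact sqe_trans step1 step2
    exact sqe_trans (sqe_symm A3) (sqe_trans A1 A2)

end Part2

section Part3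
open List SqAux

variable {V : Type} [DecidableEq V] {G : V → V → Prop} {a : V} {ρ : V → List V}

/-- The edge labels used to build the map to the free product. -/
noncomputable def eFun {P : Type} [Group P] (w : List V → P) (ρ : V → List V) [DecidableEq V] :
    V → V → Monoid.Coprod P (Multiplicative (ZMod 2)) := fun u v =>
  if u = v then Monoid.Coprod.inr (Multiplicative.ofAdd (1 : ZMod 2))
  else Monoid.Coprod.inl (w (ρ u ++ (ρ v).reverse))

theorem eFun_loop {P : Type} [Group P] (w : List V → P) (ρ : V → List V) (u : V) :
    eFun w ρ u u = Monoid.Coprod.inr (Multiplicative.ofAdd (1 : ZMod 2)) := if_pos rfl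

theorem eFun_edge {P : Type} [Group P] (w : List V → P) (ρ : V → List V) {u v : V} (h : u ≠ v) :
    eFun w ρ u v = Monoid.Coprod.inl (w (ρ u ++ (ρ v).reverse)) := if_neg h

theorem sqe_cast {H : V → V → Prop} {p p' q q' : List V} (hp : p = p') (hq : q = q')
    (h : SquareEquiv H p q) : SquareEquiv H p' q' := hp ▸ hq ▸ h

variable (hsym : Symmetric G) (hρc : ∀ v, List.Chain' G (ρ v))
  (hρh : ∀ v, (ρ v).head? = some a) (hρl : ∀ v, (ρ v).getLast? = some v)

set_option linter.unusedSectionVars false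

section basic
include hsym hρc hρh hρl

theorem rho_ne (v : V) : ρ v ≠ [] := ne_nil_of_head?_eq_some (hρh v)

theorem rho_cons (v : V) : ∃ t, ρ v = a :: t := ⟨_, List.eq_cons_of_mem_head? (hρh v)⟩

theorem rho_concat (v : V) : ∃ D, ρ v = D ++ [v] :=
  ⟨_, (List.dropLast_append_getLast? v (by simp [hρl v])).symm⟩

theorem rho_rev_chain (v : V) : List.Chain' G (ρ v).reverse := by
  rw [List.chain'_reverse]
  exact (hρc v).imp (fun {x y} h => hsym h)

/-- `cyc u v := ρ u ++ (ρ v).reverse` is a cycle at `a` when `G u v`. -/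
theorem E1 {u v : V} (huv : G u v) : IsCycleAt G a (ρ u ++ (ρ v).reverse) := by
  rw [isCycleAt_iff]
  refine ⟨?_, ?_, ?_⟩
  · rw [List.chain'_append]
    refine ⟨hρc u, rho_rev_chain hsym hρc hρh hρl v, ?_⟩
    intro xx hxx yy hyy
    rw [hρl u] at hxx
    rw [List.head?_reverse, hρl v] at hyy
    cases hxx; cases hyy
    exact huv
  · rw [List.head?_append_of_ne_nil _ (rho_ne hsym hρc hρh hρl u)]
    exact hρh u
  · rw [List.getLast?_append_of_ne_nil _ (by simp [rho_ne hsym hρc hρh hρl v])]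
    rw [List.getLast?_reverse]
    exact hρh v

/-- Expansion of a vertex into a retraced excursion to the basepoint. -/
theorem RC (x : V) (A B : List V) :
    SquareEquiv G (A ++ [x] ++ B) (A ++ ((ρ x).reverse ++ (ρ x).tail) ++ B) :=
  sqe_congr A B (retrace1 hsym (ρ x) x (hρc x) (hρl x))

end basic

section wlayer

variable {P : Type} [Group P] {w : List V → P} (hw : PresentsSquareGroup G a P w)
include hsym hρc hρh hρl hw

theorem wa1 : w [a] = 1 := by
  have h := hw.1 [a] [a] (cyc_triv G a) (cyc_triv G a)
  simp only [List.tail_cons, List.append_nil] at h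
  exact left_eq_mul.mp h

theorem wcongr {p q : List V} (hp : IsCycleAt G a p) (hq : IsCycleAt G a q)
    (h : SquareEquiv G p q) : w p = w q := (hw.2.1 p q hp hq).2 h

theorem w_of_equiv_triv {p : List V} (h : SquareEquiv G [a] p) : w p = 1 := by
  have hp := sqe_cycleAt h (cyc_triv G a)
  rw [← wcongr hsym hρc hρh hρl hw (cyc_triv G a) hp h, wa1 hsym hρc hρh hρl hw]

/-- Cancellation of a backtrack. -/
theorem E2 {u v : V} (huv : G u v) (hvu : G v u) :
    w (ρ u ++ (ρ v).reverse) * w (ρ v ++ (ρ u).reverse) = 1 := by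
  rw [← hw.1 _ _ (E1 hsym hρc hρh hρl huv) (E1 hsym hρc hρh hρl hvu)]
  apply w_of_equiv_triv hsym hρc hρh hρl hw
  obtain ⟨D, hD⟩ := rho_concat hsym hρc hρh hρl u
  obtain ⟨tv, hv⟩ := rho_cons hsym hρc hρh hρl v
  have eq1 : SquareEquiv G [a] (ρ u ++ (ρ u).reverse.tail) :=
    retrace2 hsym (ρ u) a (hρc u) (hρh u)
  have hr'c : List.Chain' G (ρ v ++ [u]) := by
    rw [List.chain'_append]
    refine ⟨hρc v, List.chain'_singleton u, ?_⟩
    intro xx hxx yy hyy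
    rw [hρl v] at hxx
    simp at hyy
    cases hxx; cases hyy
    exact hvu
  have hr'l : (ρ v ++ [u]).getLast? = some u := by
    rw [List.getLast?_append_of_ne_nil _ (by simp)]; rfl
  have eq2 : SquareEquiv G [u] ((ρ v ++ [u]).reverse ++ (ρ v ++ [u]).tail) :=
    retrace1 hsym (ρ v ++ [u]) u hr'c hr'l
  have eq3 := sqe_congr D ((ρ u).reverse.tail) eq2
  refine sqe_trans eq1 (sqe_cast ?_ ?_ eq3)
  · simp [hD]
  · simp [hD, hv, List.append_assoc]

/-- Cancellation of a square. -/
theorem E3 {u x y z : V} (h1 : G u x) (h2 : G x y) (h3 : G y z) (h4 : G z u)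
    (hne1 : u ≠ y) (hne2 : x ≠ z) :
    w (ρ u ++ (ρ x).reverse) * w (ρ x ++ (ρ y).reverse) * w (ρ y ++ (ρ z).reverse)
      * w (ρ z ++ (ρ u).reverse) = 1 := by
  have c1 := E1 (G := G) hsym hρc hρh hρl h1
  have c2 := E1 (G := G) hsym hρc hρh hρl h2
  have c3 := E1 (G := G) hsym hρc hρh hρl h3
  have c4 := E1 (G := G) hsym hρc hρh hρl h4
  rw [← hw.1 _ _ c1 c2, ← hw.1 _ _ (cyc_cat c1 c2) c3,
    ← hw.1 _ _ (cyc_cat (cyc_cat c1 c2) c3) c4]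
  apply w_of_equiv_triv hsym hρc hρh hρl hw
  obtain ⟨D, hD⟩ := rho_concat hsym hρc hρh hρl u
  obtain ⟨tx, hx⟩ := rho_cons hsym hρc hρh hρl x
  obtain ⟨ty, hy⟩ := rho_cons hsym hρc hρh hρl y
  obtain ⟨tz, hz⟩ := rho_cons hsym hρc hρh hρl z
  have eqA : SquareEquiv G [a] (ρ u ++ (ρ u).reverse.tail) :=
    retrace2 hsym (ρ u) a (hρc u) (hρh u)
  have eqB : SquareEquiv G (D ++ u :: (ρ u).reverse.tail)
      (D ++ u :: x :: y :: z :: u :: (ρ u).reverse.tail) :=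
    sqe_of_step (SqStep.square D ((ρ u).reverse.tail) u x y z h1 h2 h3 h4 hne1 hne2)
  have step1 := sqe_trans eqA (sqe_cast (by simp [hD]) rfl eqB)
  have rcx := RC (G := G) hsym hρc hρh hρl x (D ++ [u]) (y :: z :: u :: (ρ u).reverse.tail)
  have step2 := sqe_trans step1 (sqe_cast (by simp [List.append_assoc]) rfl rcx)
  have rcy := RC (G := G) hsym hρc hρh hρl y (D ++ [u] ++ ((ρ x).reverse ++ (ρ x).tail))
    (z :: u :: (ρ u).reverse.tail)
  have step3 := sqe_trans step2 (sqe_cast (by simp [List.append_assoc]) rfl rcy)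
  have rcz := RC (G := G) hsym hρc hρh hρl z
    (D ++ [u] ++ ((ρ x).reverse ++ (ρ x).tail) ++ ((ρ y).reverse ++ (ρ y).tail))
    (u :: (ρ u).reverse.tail)
  have step4 := sqe_trans step3 (sqe_cast (by simp [List.append_assoc]) rfl rcz)
  refine sqe_cast rfl ?_ step4
  simp [hD, hx, hy, hz, List.append_assoc]

/-- The fundamental computation: `Fprod` of a `G`-walk is `inl` of the conjugated cycle. -/
theorem L1 (hnl : ∀ t : V, ¬ G t t) :
    ∀ (l : List V) (u v : V), List.Chain' G (u :: l) → (u :: l).getLast? = some v →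
      IsCycleAt G a (ρ u ++ l ++ (ρ v).reverse.tail) ∧
      Fprod (eFun w ρ) (u :: l)
        = Monoid.Coprod.inl (w (ρ u ++ l ++ (ρ v).reverse.tail)) := by
  intro l
  induction l with
  | nil =>
      intro u v _ hl
      have huv : u = v := by simpa using hl
      subst huv
      have heq : SquareEquiv G [a] (ρ u ++ [] ++ (ρ u).reverse.tail) :=
    sqe_cast rfl (by simp) (retrace2 hsym (ρ u) a (hρc u) (hρh u))
      refine ⟨sqe_cycleAt heq (cyc_triv G a), ?_⟩
      rw [Fprod_single, w_of_equiv_triv hsym hρc hρh hρl hw heq, map_one]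
  | cons x l' ih =>
      intro u v hc hl
      rw [List.chain'_cons] at hc
      have hGux : G u x := hc.1
      have hlx : (x :: l').getLast? = some v := by
        rw [← hl, List.getLast?_cons_cons]
      obtain ⟨ihcyc, ihF⟩ := ih x v hc.2 hlx
      have hux : u ≠ x := fun h => hnl u (h ▸ hGux)
      have ecyc := E1 (G := G) hsym hρc hρh hρl hGux
      obtain ⟨tx, hx⟩ := rho_cons hsym hρc hρh hρl x
      have key : SquareEquiv G ((ρ u ++ (ρ x).reverse) ++ (ρ x ++ l' ++ (ρ v).reverse.tail).tail)
          (ρ u ++ (x :: l') ++ (ρ v).reverse.tail) := by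
        refine sqe_symm (sqe_cast ?_ ?_
          (RC (G := G) hsym hρc hρh hρl x (ρ u) (l' ++ (ρ v).reverse.tail)))
        · simp
        · simp [hx, List.append_assoc]
      have catcyc := cyc_cat ecyc ihcyc
      refine ⟨sqe_cycleAt key catcyc, ?_⟩
      rw [Fprod_cons₂, eFun_edge w ρ hux, ihF, ← map_mul, ← hw.1 _ _ ecyc ihcyc,
        wcongr hsym hρc hρh hρl hw catcyc (sqe_cycleAt key catcyc) key]

end wlayer
end Part3

section Part4
open List SqAux

variable {V : Type} [DecidableEq V] {G G' : V → V → Prop} {a b : V} {ρ : V → List V}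
  {f : V → Bool}

variable (hsym : Symmetric G) (hρc : ∀ v, List.Chain' G (ρ v))
  (hρh : ∀ v, (ρ v).head? = some a) (hρl : ∀ v, (ρ v).getLast? = some v)
  (hf : ∀ u v : V, G u v → f u ≠ f v)
  (hG' : ∀ u v : V, G' u v ↔ (G u v ∨ (u = b ∧ v = b)))

set_option linter.unusedSectionVars false

section gprime

include hf hG'

theorem noTri {p q r : V} (h1 : G p q) (h2 : G q r) (h3 : G r p) : False := by
  have a1 := hf _ _ h1
  have a2 := hf _ _ h2
  have a3 := hf _ _ h3
  cases hp : f p <;> cases hq : f q <;> cases hr : f r <;> simp_all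

theorem Gnl (t : V) : ¬ G t t := fun h => hf t t h rfl

theorem Gmono : ∀ u v : V, G u v → G' u v := fun u v h => (hG' u v).2 (Or.inl h)

theorem Gsym' (hs : Symmetric G) : Symmetric G' := by
  intro u v h
  rcases (hG' u v).1 h with h | ⟨h1, h2⟩
  · exact (hG' v u).2 (Or.inl (hs h))
  · exact (hG' v u).2 (Or.inr ⟨h2, h1⟩)

theorem bloop {u : V} (h : G' u u) : u = b := by
  rcases (hG' u u).1 h with h | ⟨h1, _⟩
  · exact absurd h (Gnl hf hG' u)
  · exact h1

theorem edgeG {u v : V} (h : G' u v) (hne : u ≠ v) : G u v := by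
  rcases (hG' u v).1 h with h | ⟨h1, h2⟩
  · exact h
  · exact absurd (h1.trans h2.symm) hne

/-- In a bipartite graph with one loop added, a square uses no loops. -/
theorem square_distinct {u x y z : V} (h1 : G' u x) (h2 : G' x y) (h3 : G' y z) (h4 : G' z u)
    (hne1 : u ≠ y) (hne2 : x ≠ z) :
    u ≠ x ∧ x ≠ y ∧ y ≠ z ∧ z ≠ u := by
  refine ⟨?_, ?_, ?_, ?_⟩
  · intro h
    subst h
    have hub : u = b := bloop hf hG' h1
    subst hub
    have hyz : y ≠ z := by
      intro h
      subst h
      have := bloop hf hG' h3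
      simp_all
    refine noTri hf hG' (edgeG hf hG' h2 hne1) (edgeG hf hG' h3 hyz)
      (edgeG hf hG' h4 ?_)
    intro h
    subst h
    simp_all
  · intro h
    subst h
    have hxb : x = b := bloop hf hG' h2
    subst hxb
    have hzu : z ≠ u := by
      intro h
      subst h
      have := bloop hf hG' h4
      simp_all
    exact noTri hf hG' (edgeG hf hG' h1 hne1) (edgeG hf hG' h3 hne2)
      (edgeG hf hG' h4 hzu)
  · intro h
    subst h
    have hyb : y = b := bloop hf hG' h3
    subst hyb
    have hux : u ≠ x := by
      intro h
      subst h
      have := bloop hf hG' h1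
      simp_all
    refine noTri hf hG' (edgeG hf hG' h1 hux) (edgeG hf hG' h2 hne2)
      (edgeG hf hG' h4 ?_)
    intro h
    subst h
    simp_all
  · intro h
    subst h
    have hzb : z = b := bloop hf hG' h4
    subst hzb
    have hxy : x ≠ y := by
      intro h
      subst h
      have := bloop hf hG' h2
      simp_all
    refine noTri hf hG' (edgeG hf hG' h1 ?_) (edgeG hf hG' h2 hxy)
      (edgeG hf hG' h3 ?_)
    · intro h
      subst h
      simp_all
    · intro h
      subst h
      simp_all

end gprime

theorem Fprod_split {M : Type} [Monoid M] (e : V → V → M) {p q : List V} {c : V}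
    (hp : p.getLast? = some c) (hq : q.head? = some c) :
    Fprod e (p ++ q.tail) = Fprod e p * Fprod e q := by
  obtain ⟨D, hD⟩ : ∃ D, p = D ++ [c] :=
    ⟨_, (List.dropLast_append_getLast? c (by simp [hp])).symm⟩
  have hq' : q = c :: q.tail := List.eq_cons_of_mem_head? hq
  rw [hD, show D ++ [c] ++ q.tail = D ++ c :: q.tail by simp]
  rw [Fprod_append e D c q.tail, ← hq']

section parity
include hf hG'

/-- Parity of walks in `G'`: each `G`-step flips the colour, each loop keeps it. -/
theorem par : ∀ (l : List V) (u v : V), List.Chain' G' (u :: l) →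
    (u :: l).getLast? = some v →
    (f u = f v ↔ Even (l.length + loopCount (u :: l))) := by
  intro l
  induction l with
  | nil =>
      intro u v _ hl
      have huv : u = v := by simpa using hl
      subst huv
      simp [loopCount_single]
  | cons x l' ih =>
      intro u v hc hl
      rw [List.chain'_cons] at hc
      have hlx : (x :: l').getLast? = some v := by rw [← hl, List.getLast?_cons_cons]
      have ihx := ih x v hc.2 hlx
      rcases (hG' u x).1 hc.1 with hG | ⟨hub, hxb⟩
      · have hne : u ≠ x := fun h => hf u u (h ▸ hG) rfl
        have hff : f u ≠ f x := hf _ _ hG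
        rw [loopCount_cons₂, if_neg hne, List.length_cons, Nat.zero_add,
          show l'.length + 1 + loopCount (x :: l') = l'.length + loopCount (x :: l') + 1
            by omega, Nat.even_add_one, ← ihx]
        cases hfu : f u <;> cases hfx : f x <;> cases hfv : f v <;> simp_all
      · have hux : u = x := hub.trans hxb.symm
        rw [loopCount_cons₂, if_pos hux, List.length_cons,
          show l'.length + 1 + (1 + loopCount (x :: l'))
            = l'.length + loopCount (x :: l') + 1 + 1 by omega,
          Nat.even_add_one, Nat.even_add_one, not_not, ← ihx, hux]

end parity

section gamma
include hsym hρc hρh hρl hf hG'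

theorem gammaCyc : IsCycleAt G' a (ρ b ++ (ρ b).reverse) := by
  rw [isCycleAt_iff]
  refine ⟨?_, ?_, ?_⟩
  · rw [List.chain'_append]
    refine ⟨(hρc b).imp (fun {x y} h => Gmono hf hG' x y h),
      ?_, ?_⟩
    · rw [List.chain'_reverse]
      exact (hρc b).imp (fun {x y} h => Gsym' hf hG' hsym (Gmono hf hG' x y h))
    · intro xx hxx yy hyy
      rw [hρl b] at hxx
      rw [List.head?_reverse, hρl b] at hyy
      cases hxx; cases hyy
      exact (hG' b b).2 (Or.inr ⟨rfl, rfl⟩)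
  · rw [List.head?_append_of_ne_nil _ (rho_ne hsym hρc hρh hρl b)]
    exact hρh b
  · rw [List.getLast?_append_of_ne_nil _ (by simp [rho_ne hsym hρc hρh hρl b]),
      List.getLast?_reverse]
    exact hρh b

end gamma

section bstep

variable {P : Type} [Group P] {w : List V → P} (hw : PresentsSquareGroup G a P w)
include hsym hρc hρh hρl hf hG' hw

/-- `Fprod (eFun w ρ)` is invariant under a single square/backtrack insertion in `G'`. -/
theorem Bstep {p q : List V} (h : SqStep G' p q) :
    Fprod (eFun w ρ) p = Fprod (eFun w ρ) q := by
  cases h with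
  | backtrack l₁ l₂ u v huv hvu =>
      rw [Fprod_append (eFun w ρ) l₁ u l₂, Fprod_append (eFun w ρ) l₁ u (v :: u :: l₂),
        Fprod_cons₂, Fprod_cons₂]
      have hee : eFun w ρ u v * eFun w ρ v u = 1 := by
        by_cases huv' : u = v
        · subst huv'
          rw [eFun_loop, ← map_mul,
            show Multiplicative.ofAdd (1 : ZMod 2) * Multiplicative.ofAdd (1 : ZMod 2) = 1
              by decide, map_one]
        · rw [eFun_edge w ρ huv', eFun_edge w ρ (Ne.symm huv'), ← map_mul,
            E2 hsym hρc hρh hρl hw (edgeG hf hG' huv huv') (edgeG hf hG' hvu (Ne.symm huv')),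
            map_one]
      rw [← mul_assoc (eFun w ρ u v), hee, one_mul]
  | square l₁ l₂ u x y z h1 h2 h3 h4 hne1 hne2 =>
      obtain ⟨d1, d2, d3, d4⟩ := square_distinct hf hG' h1 h2 h3 h4 hne1 hne2
      rw [Fprod_append (eFun w ρ) l₁ u l₂,
        Fprod_append (eFun w ρ) l₁ u (x :: y :: z :: u :: l₂),
        Fprod_cons₂, Fprod_cons₂, Fprod_cons₂, Fprod_cons₂]
      have hee : eFun w ρ u x * eFun w ρ x y * eFun w ρ y z * eFun w ρ z u = 1 := by
        rw [eFun_edge w ρ d1, eFun_edge w ρ d2, eFun_edge w ρ d3, eFun_edge w ρ d4,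
          ← map_mul, ← map_mul, ← map_mul,
          E3 hsym hρc hρh hρl hw (edgeG hf hG' h1 d1) (edgeG hf hG' h2 d2)
            (edgeG hf hG' h3 d3) (edgeG hf hG' h4 d4) hne1 hne2, map_one]
      have : eFun w ρ u x * (eFun w ρ x y * (eFun w ρ y z * (eFun w ρ z u
          * Fprod (eFun w ρ) (u :: l₂))))
          = (eFun w ρ u x * eFun w ρ x y * eFun w ρ y z * eFun w ρ z u)
            * Fprod (eFun w ρ) (u :: l₂) := by
        simp [mul_assoc]
      rw [this, hee, one_mul]

theorem Binv {p q : List V} (h : SquareEquiv G' p q) :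
    Fprod (eFun w ρ) p = Fprod (eFun w ρ) q := by
  induction h with
  | refl => rfl
  | tail _ hstep ih =>
      rcases hstep with hstep | hstep
      · exact ih.trans (Bstep hsym hρc hρh hρl hf hG' hw hstep)
      · exact ih.trans (Bstep hsym hρc hρh hρl hf hG' hw hstep).symm

/-- When `P` is trivial, `Fprod` only counts loops. -/
theorem Ftriv (htriv : ∀ g : P, g = 1) :
    ∀ l : List V, Fprod (eFun w ρ) l
      = Monoid.Coprod.inr (Multiplicative.ofAdd ((loopCount l : ZMod 2))) := by
  intro l
  induction l with
  | nil => simp [Fprod_nil, loopCount_nil]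
  | cons u l ih =>
      cases l with
      | nil => simp [Fprod_single, loopCount_single]
      | cons v l' =>
          rw [Fprod_cons₂, ih, loopCount_cons₂]
          by_cases huv : u = v
          · subst huv
            rw [eFun_loop, if_pos rfl, ← map_mul]
            congr 1
            rw [Nat.cast_add, Nat.cast_one]
            rfl
          · rw [eFun_edge w ρ huv, if_neg huv, htriv (w (ρ u ++ (ρ v).reverse)), map_one,
              one_mul, Nat.zero_add]

end bstep

section ltwo

variable {P : Type} [Group P] {w : List V → P} (hw : PresentsSquareGroup G a P w)
variable {P' : Type} [Group P'] {w' : List V → P'} (hw' : PresentsSquareGroup G' a P' w')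
variable (Ψ : Monoid.Coprod P (Multiplicative (ZMod 2)) →* P')
  (hΨinl : ∀ p : List V, IsCycleAt G a p → Ψ (Monoid.Coprod.inl (w p)) = w' p)
  (hΨinr : Ψ (Monoid.Coprod.inr (Multiplicative.ofAdd (1 : ZMod 2)))
      = w' (ρ b ++ (ρ b).reverse))
include hsym hρc hρh hρl hf hG' hw hw' hΨinl hΨinr

/-- The main computation in `G'`: `Ψ ∘ Fprod` evaluates walks like `w'` on conjugated cycles. -/
theorem L2 : ∀ (l : List V) (u v : V), List.Chain' G' (u :: l) →
    (u :: l).getLast? = some v →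
      IsCycleAt G' a (ρ u ++ l ++ (ρ v).reverse.tail) ∧
      Ψ (Fprod (eFun w ρ) (u :: l)) = w' (ρ u ++ l ++ (ρ v).reverse.tail) := by
  have hsym' : Symmetric G' := Gsym' hf hG' hsym
  have hρc' : ∀ v, List.Chain' G' (ρ v) := fun v => (hρc v).imp
    (fun {x y} h => Gmono hf hG' x y h)
  intro l
  induction l with
  | nil =>
      intro u v _ hl
      have huv : u = v := by simpa using hl
      subst huv
      have heq : SquareEquiv G' [a] (ρ u ++ [] ++ (ρ u).reverse.tail) :=
        sqe_cast rfl (by simp) (retrace2 hsym' (ρ u) a (hρc' u) (hρh u))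
      refine ⟨sqe_cycleAt heq (cyc_triv G' a), ?_⟩
      rw [Fprod_single, map_one, w_of_equiv_triv hsym' hρc' hρh hρl hw' heq]
  | cons x l' ih =>
      intro u v hc hl
      rw [List.chain'_cons] at hc
      have hlx : (x :: l').getLast? = some v := by rw [← hl, List.getLast?_cons_cons]
      obtain ⟨ihcyc, ihF⟩ := ih x v hc.2 hlx
      by_cases hux : u = x
      · -- loop step
        subst hux
        have hub : u = b := bloop hf hG' hc.1
        subst hub
        have key : SquareEquiv G'
            ((ρ u ++ (ρ u).reverse) ++ (ρ u ++ l' ++ (ρ v).reverse.tail).tail)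
            (ρ u ++ (u :: l') ++ (ρ v).reverse.tail) := by
          obtain ⟨tb, hb⟩ := rho_cons hsym hρc hρh hρl u
          refine sqe_symm (sqe_cast ?_ ?_
            (sqe_congr (ρ u) (l' ++ (ρ v).reverse.tail)
              (retrace1 hsym' (ρ u) u (hρc' u) (hρl u))))
          · simp
          · simp [hb, List.append_assoc]
        have catcyc := cyc_cat (gammaCyc hsym hρc hρh hρl hf hG') ihcyc
        refine ⟨sqe_cycleAt key catcyc, ?_⟩
        rw [Fprod_cons₂, eFun_loop, map_mul, hΨinr, ihF,
          ← hw'.1 _ _ (gammaCyc hsym hρc hρh hρl hf hG') ihcyc,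
          wcongr hsym' hρc' hρh hρl hw' catcyc (sqe_cycleAt key catcyc) key]
      · -- G-edge step
        have hGux : G u x := edgeG hf hG' hc.1 hux
        have ecyc := E1 (G := G) hsym hρc hρh hρl hGux
        have ecyc' : IsCycleAt G' a (ρ u ++ (ρ x).reverse) := cyc_mono (Gmono hf hG') ecyc
        obtain ⟨tx, hx⟩ := rho_cons hsym hρc hρh hρl x
        have key : SquareEquiv G'
            ((ρ u ++ (ρ x).reverse) ++ (ρ x ++ l' ++ (ρ v).reverse.tail).tail)
            (ρ u ++ (x :: l') ++ (ρ v).reverse.tail) := by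
          refine sqe_symm (sqe_cast ?_ ?_
            (sqe_congr (ρ u) (l' ++ (ρ v).reverse.tail)
              (retrace1 hsym' (ρ x) x (hρc' x) (hρl x))))
          · simp
          · simp [hx, List.append_assoc]
        have catcyc := cyc_cat ecyc' ihcyc
        refine ⟨sqe_cycleAt key catcyc, ?_⟩
        rw [Fprod_cons₂, eFun_edge w ρ hux, map_mul, hΨinl _ ecyc, ihF,
          ← hw'.1 _ _ ecyc' ihcyc,
          wcongr hsym' hρc' hρh hρl hw' catcyc (sqe_cycleAt key catcyc) key]

end ltwo
end Part4


open List SqAux in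
/-- If `G` is a finite connected bipartite graph and `G'` is obtained
from `G` by adding a self-loop at the vertex `b`, then the square group of `G'` is the
free product of the square group of `G` with `ℤ/2ℤ`; in particular every even-length
cycle of `G'` is square-decomposable iff every cycle of `G` is square-decomposable. -/
theorem squareGroup_add_loop {V : Type} [Fintype V] (G : V → V → Prop)
    (hsym : Symmetric G) (hconn : GraphConnected G) (hbip : GraphBipartite G)
    (b : V) (G' : V → V → Prop) (hG' : ∀ u v : V, G' u v ↔ (G u v ∨ (u = b ∧ v = b)))
    (a : V)
    (P : Type) [Group P] (w : List V → P) (hw : PresentsSquareGroup G a P w)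
    (P' : Type) [Group P'] (w' : List V → P') (hw' : PresentsSquareGroup G' a P' w') :
    Nonempty (P' ≃* Monoid.Coprod P (Multiplicative (ZMod 2))) ∧
    ((∀ p : List V, IsCycle G' p → Even (walkLen p) → IsSquareDecomposable G' p) ↔
      (∀ p : List V, IsCycle G p → IsSquareDecomposable G p)) := by
  letI : DecidableEq V := Classical.decEq V
  obtain ⟨f, hf⟩ := hbip
  -- choice of paths from the base point
  obtain ⟨ρ, hρc, hρh, hρl, hρa⟩ :
      ∃ ρ : V → List V, (∀ v, List.Chain' G (ρ v)) ∧ (∀ v, (ρ v).head? = some a)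
        ∧ (∀ v, (ρ v).getLast? = some v) ∧ ρ a = [a] := by
    refine ⟨fun v => if v = a then [a] else Classical.choose (hconn a v), ?_, ?_, ?_, ?_⟩
    · intro v
      by_cases h : v = a
      · simp [h, List.Chain', List.isChain_singleton]
      · simpa [h] using (Classical.choose_spec (hconn a v)).1.2
    · intro v
      by_cases h : v = a
      · simp [h]
      · simpa [h] using (Classical.choose_spec (hconn a v)).2.1
    · intro v
      by_cases h : v = a
      · simp [h]
      · simpa [h] using (Classical.choose_spec (hconn a v)).2.2
    · simp
  have hnl : ∀ t : V, ¬ G t t := Gnl hf hG'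
  have hsym' : Symmetric G' := Gsym' hf hG' hsym
  have hρc' : ∀ v, List.Chain' G' (ρ v) := fun v => (hρc v).imp
    (fun {x y} h => Gmono hf hG' x y h)
  have cyc_last : ∀ {H : V → V → Prop} {p : List V}, IsCycleAt H a p → p.getLast? = some a :=
    fun h => h.1.2.symm.trans h.2
  -- the homomorphism P →* P'
  obtain ⟨ψP, hψP⟩ : ∃ ψP : P →* P', ∀ p : List V, IsCycleAt G a p → ψP (w p) = w' p := by
    have key : ∀ (g : P) (p : List V), IsCycleAt G a p → w p = g →
        w' (Classical.choose (hw.2.2 g)) = w' p := by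
      intro g p hp hv
      obtain ⟨hc, hval⟩ := Classical.choose_spec (hw.2.2 g)
      exact wcongr hsym' hρc' hρh hρl hw' (cyc_mono (Gmono hf hG') hc)
        (cyc_mono (Gmono hf hG') hp)
        (sqe_mono (Gmono hf hG') ((hw.2.1 _ _ hc hp).1 (by rw [hval, hv])))
    refine ⟨MonoidHom.mk' (fun g => w' (Classical.choose (hw.2.2 g))) ?_, ?_⟩
    · intro g h
      obtain ⟨hcg, hvg⟩ := Classical.choose_spec (hw.2.2 g)
      obtain ⟨hch, hvh⟩ := Classical.choose_spec (hw.2.2 h)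
      rw [key (g * h) _ (cyc_cat hcg hch) (by rw [hw.1 _ _ hcg hch, hvg, hvh]),
        hw'.1 _ _ (cyc_mono (Gmono hf hG') hcg) (cyc_mono (Gmono hf hG') hch)]
    · intro p hp
      exact key (w p) p hp rfl
  -- the loop cycle γ and its order-2 image
  have hγcyc : IsCycleAt G' a (ρ b ++ (ρ b).reverse) := gammaCyc hsym hρc hρh hρl hf hG'
  have hγ2 : w' (ρ b ++ (ρ b).reverse) * w' (ρ b ++ (ρ b).reverse) = 1 := by
    rw [← hw'.1 _ _ hγcyc hγcyc]
    apply w_of_equiv_triv hsym' hρc' hρh hρl hw'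
    obtain ⟨Db, hDb⟩ : ∃ D, ρ b = D ++ [b] :=
      ⟨_, (List.dropLast_append_getLast? b (by simp [hρl b])).symm⟩
    obtain ⟨tb, htb⟩ : ∃ t, ρ b = a :: t := ⟨_, List.eq_cons_of_mem_head? (hρh b)⟩
    have hloop : G' b b := (hG' b b).2 (Or.inr ⟨rfl, rfl⟩)
    have t1 : SquareEquiv G' [a] (ρ b ++ (ρ b).reverse.tail) :=
      retrace2 hsym' (ρ b) a (hρc' b) (hρh b)
    have t2 : SqStep G' (Db ++ b :: (ρ b).reverse.tail)
        (Db ++ b :: b :: b :: (ρ b).reverse.tail) :=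
      SqStep.backtrack Db _ b b hloop hloop
    have t3 := sqe_trans t1 (sqe_cast (by simp [hDb]) rfl (sqe_of_step t2))
    have t4 := sqe_congr (Db ++ [b]) (b :: (ρ b).reverse.tail)
      (retrace1 hsym' (ρ b) b (hρc' b) (hρl b))
    have t5 := sqe_trans t3 (sqe_cast (by simp [List.append_assoc]) rfl t4)
    refine sqe_cast rfl ?_ t5
    have htail : (ρ b ++ (ρ b).reverse).tail = (ρ b).tail ++ (ρ b).reverse := by
      rw [htb]; simp
    rw [htail]
    conv_rhs => rw [show (ρ b).reverse = b :: (ρ b).reverse.tail from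
      List.eq_cons_of_mem_head? (by rw [List.head?_reverse, hρl b]; rfl)]
    rw [show ρ b = Db ++ [b] from hDb]
    simp [List.append_assoc]
  -- the homomorphism ℤ/2 →* P'
  have hne1t : (1 : Multiplicative (ZMod 2)) ≠ Multiplicative.ofAdd (1 : ZMod 2) := by decide
  obtain ⟨ψZ, hψZ⟩ : ∃ ψZ : Multiplicative (ZMod 2) →* P',
      ψZ (Multiplicative.ofAdd (1 : ZMod 2)) = w' (ρ b ++ (ρ b).reverse) := by
    have hmul : ∀ x y : Multiplicative (ZMod 2),
        (if x * y = Multiplicative.ofAdd (1 : ZMod 2) then w' (ρ b ++ (ρ b).reverse) else 1)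
        = (if x = Multiplicative.ofAdd (1 : ZMod 2) then w' (ρ b ++ (ρ b).reverse) else 1)
          * (if y = Multiplicative.ofAdd (1 : ZMod 2) then w' (ρ b ++ (ρ b).reverse) else 1) := by
      intro x y
      have hx : x = 1 ∨ x = Multiplicative.ofAdd (1 : ZMod 2) := by revert x; decide
      have hy : y = 1 ∨ y = Multiplicative.ofAdd (1 : ZMod 2) := by revert y; decide
      rcases hx with rfl | rfl <;> rcases hy with rfl | rfl
      · simp [hne1t]
      · simp [hne1t]
      · simp [hne1t]
      · rw [show Multiplicative.ofAdd (1 : ZMod 2) * Multiplicative.ofAdd (1 : ZMod 2) = 1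
          by decide, if_neg hne1t, if_pos rfl, hγ2]
    exact ⟨{ toFun := fun x => if x = Multiplicative.ofAdd (1 : ZMod 2)
                then w' (ρ b ++ (ρ b).reverse) else 1,
             map_one' := if_neg hne1t,
             map_mul' := hmul }, by simp⟩
  set ψ : Monoid.Coprod P (Multiplicative (ZMod 2)) →* P' := Monoid.Coprod.lift ψP ψZ with hψdef
  have hΨinl : ∀ p : List V, IsCycleAt G a p → ψ (Monoid.Coprod.inl (w p)) = w' p := by
    intro p hp
    rw [hψdef, Monoid.Coprod.lift_apply_inl]
    exact hψP p hp
  have hΨinr : ψ (Monoid.Coprod.inr (Multiplicative.ofAdd (1 : ZMod 2)))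
      = w' (ρ b ++ (ρ b).reverse) := by
    rw [hψdef, Monoid.Coprod.lift_apply_inr]
    exact hψZ
  have L2' := L2 hsym hρc hρh hρl hf hG' hw hw' ψ hΨinl hΨinr
  have L1' := L1 hsym hρc hρh hρl hw hnl
  -- surjectivity of ψ
  have hsurj : Function.Surjective ψ := by
    intro h
    obtain ⟨p, hp, hv⟩ := hw'.2.2 h
    have hpc : p = a :: p.tail := List.eq_cons_of_mem_head? hp.2
    obtain ⟨-, hL⟩ := L2' p.tail a a (by rw [← hpc]; exact hp.1.1.2)
      (by rw [← hpc]; exact cyc_last hp)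
    refine ⟨Fprod (eFun w ρ) p, ?_⟩
    have hlist : ρ a ++ p.tail ++ (ρ a).reverse.tail = p := by
      rw [hρa, hpc]; simp
    rw [show p = a :: p.tail from hpc] at hv ⊢
    rw [hL, ← hv]
    congr 1
    rw [hρa]; simp [← hpc]
  -- the inverse homomorphism via Fprod
  obtain ⟨φ, hφ⟩ : ∃ φ : P' →* Monoid.Coprod P (Multiplicative (ZMod 2)),
      ∀ p : List V, IsCycleAt G' a p → φ (w' p) = Fprod (eFun w ρ) p := by
    have key : ∀ (g : P') (p : List V), IsCycleAt G' a p → w' p = g →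
        Fprod (eFun w ρ) (Classical.choose (hw'.2.2 g)) = Fprod (eFun w ρ) p := by
      intro g p hp hv
      obtain ⟨hc, hval⟩ := Classical.choose_spec (hw'.2.2 g)
      exact Binv hsym hρc hρh hρl hf hG' hw
        ((hw'.2.1 _ _ hc hp).1 (by rw [hval, hv]))
    refine ⟨MonoidHom.mk' (fun g => Fprod (eFun w ρ) (Classical.choose (hw'.2.2 g))) ?_, ?_⟩
    · intro g h
      obtain ⟨hcg, hvg⟩ := Classical.choose_spec (hw'.2.2 g)
      obtain ⟨hch, hvh⟩ := Classical.choose_spec (hw'.2.2 h)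
      rw [key (g * h) _ (cyc_cat hcg hch) (by rw [hw'.1 _ _ hcg hch, hvg, hvh])]
      exact Fprod_split _ (cyc_last hcg) hch.2
    · intro p hp
      exact key (w' p) p hp rfl
  -- computation of Fprod on γ
  have hFγ : Fprod (eFun w ρ) (ρ b ++ (ρ b).reverse)
      = Monoid.Coprod.inr (Multiplicative.ofAdd (1 : ZMod 2)) := by
    obtain ⟨Db, hDb⟩ : ∃ D, ρ b = D ++ [b] :=
      ⟨_, (List.dropLast_append_getLast? b (by simp [hρl b])).symm⟩
    have hrevb : (ρ b).reverse = b :: (ρ b).reverse.tail :=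
      List.eq_cons_of_mem_head? (by rw [List.head?_reverse, hρl b]; rfl)
    have hFrho : Fprod (eFun w ρ) (ρ b) = 1 := by
      obtain ⟨tb, htb⟩ : ∃ t, ρ b = a :: t := ⟨_, List.eq_cons_of_mem_head? (hρh b)⟩
      obtain ⟨-, hF⟩ := L1' tb a b (by rw [← htb]; exact hρc b) (by rw [← htb]; exact hρl b)
      rw [htb, hF, hρa]
      have heq : SquareEquiv G [a] ([a] ++ tb ++ (ρ b).reverse.tail) := by
        refine sqe_cast rfl ?_ (retrace2 hsym (ρ b) a (hρc b) (hρh b))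
        rw [htb]
        simp
      rw [w_of_equiv_triv hsym hρc hρh hρl hw heq, map_one]
    have hFrev : Fprod (eFun w ρ) ((ρ b).reverse) = 1 := by
      have hcrev : List.Chain' G ((ρ b).reverse) := rho_rev_chain hsym hρc hρh hρl b
      have hlrev : ((ρ b).reverse).getLast? = some a := by
        rw [List.getLast?_reverse]; exact hρh b
      obtain ⟨-, hF⟩ := L1' ((ρ b).reverse.tail) b a (by rw [← hrevb]; exact hcrev) (by rw [← hrevb]; exact hlrev)
      rw [hrevb, hF, hρa]
      have heq : SquareEquiv G [a] (ρ b ++ (ρ b).reverse.tail ++ ([a] : List V).reverse.tail) :=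
        sqe_cast rfl (by simp) (retrace2 hsym (ρ b) a (hρc b) (hρh b))
      rw [w_of_equiv_triv hsym hρc hρh hρl hw heq, map_one]
    have h1 : Fprod (eFun w ρ) (ρ b ++ [b])
        = Fprod (eFun w ρ) (ρ b) * eFun w ρ b b := by
      conv_lhs => rw [hDb, show (Db ++ [b]) ++ [b] = Db ++ b :: [b] by simp]
      rw [Fprod_append _ Db b [b], Fprod_cons₂, Fprod_single, mul_one, ← hDb]
    calc Fprod (eFun w ρ) (ρ b ++ (ρ b).reverse)
        = Fprod (eFun w ρ) (ρ b ++ b :: (ρ b).reverse.tail) := by rw [← hrevb]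
      _ = Fprod (eFun w ρ) (ρ b ++ [b]) * Fprod (eFun w ρ) (b :: (ρ b).reverse.tail) :=
          Fprod_append _ (ρ b) b _
      _ = Monoid.Coprod.inr (Multiplicative.ofAdd (1 : ZMod 2)) := by
          rw [h1, hFrho, one_mul, ← hrevb, hFrev, mul_one, eFun_loop]
  -- φ ∘ ψ = id
  have hφψ : ∀ x, φ (ψ x) = x := by
    have hcomp : φ.comp ψ = MonoidHom.id _ := by
      apply Monoid.Coprod.hom_ext
      · ext g
        simp only [MonoidHom.comp_apply, MonoidHom.id_apply]
        obtain ⟨hcg, hvg⟩ := Classical.choose_spec (hw.2.2 g)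
        set pg := Classical.choose (hw.2.2 g) with hpg
        have h1 : ψ (Monoid.Coprod.inl g) = w' pg := by
          rw [← hvg]; exact hΨinl pg hcg
        rw [h1, hφ pg (cyc_mono (Gmono hf hG') hcg)]
        have hpgc : pg = a :: pg.tail := List.eq_cons_of_mem_head? hcg.2
        obtain ⟨-, hF⟩ := L1' pg.tail a a (by rw [← hpgc]; exact hcg.1.1.2)
          (by rw [← hpgc]; exact cyc_last hcg)
        rw [show pg = a :: pg.tail from hpgc, hF, hρa]
        rw [show ([a] : List V) ++ pg.tail ++ ([a] : List V).reverse.tail = a :: pg.tail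
          by simp, ← hpgc, hvg]
      · refine MonoidHom.ext fun x => ?_
        simp only [MonoidHom.comp_apply, MonoidHom.id_apply]
        have hx : x = 1 ∨ x = Multiplicative.ofAdd (1 : ZMod 2) := by revert x; decide
        rcases hx with rfl | rfl
        · simp
        · rw [hΨinr, hφ _ hγcyc, hFγ]
    intro x
    have := DFunLike.congr_fun hcomp x
    simpa using this
  have hinj : Function.Injective ψ := fun x y hxy => by
    rw [← hφψ x, ← hφψ y, hxy]
  refine ⟨⟨(MulEquiv.ofBijective ψ ⟨hinj, hsurj⟩).symm⟩, ?_, ?_⟩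
  · -- even cycles of G' decomposable → cycles of G decomposable
    intro heven p hp
    obtain ⟨c, l, rfl⟩ := List.exists_cons_of_ne_nil hp.1.1
    have hchain : List.Chain' G (c :: l) := hp.1.2
    have hchain' : List.Chain' G' (c :: l) := hchain.imp (fun {x y} h => Gmono hf hG' x y h)
    have hlast : (c :: l).getLast? = some c := hp.2.symm ▸ rfl
    have hlc : loopCount (c :: l) = 0 := loopCount_eq_zero hnl _ hchain
    have hlenEven : Even l.length := by
      have := (par hf hG' l c c hchain' hlast).1 rfl
      rwa [hlc, Nat.add_zero] at this
    have hcyc' : IsCycle G' (c :: l) := ⟨⟨List.cons_ne_nil c l, hchain'⟩, hp.2⟩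
    obtain ⟨c', hc', hequiv'⟩ := heven (c :: l) hcyc' (by simpa [walkLen] using hlenEven)
    have hcc : c' = c := by simpa using hc'.symm
    rw [hcc] at hequiv'
    obtain ⟨cloCyc', hL2⟩ := L2' l c c hchain' hlast
    obtain ⟨cloCycG, hL1⟩ := L1' l c c hchain hlast
    obtain ⟨Dc, hDc⟩ : ∃ D, ρ c = D ++ [c] :=
      ⟨_, (List.dropLast_append_getLast? c (by simp [hρl c])).symm⟩
    have hclo' : SquareEquiv G' (ρ c ++ l ++ (ρ c).reverse.tail) [a] := by
      have s1 := sqe_congr Dc ((ρ c).reverse.tail) hequiv'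
      refine sqe_trans (sqe_cast ?_ rfl s1) ?_
      · simp [hDc]
      · refine sqe_cast ?_ rfl (sqe_symm (retrace2 hsym' (ρ c) a (hρc' c) (hρh c)))
        simp [hDc]
    have hwclo' : w' (ρ c ++ l ++ (ρ c).reverse.tail) = 1 := by
      rw [wcongr hsym' hρc' hρh hρl hw' cloCyc' (cyc_triv G' a) hclo',
        wa1 hsym' hρc' hρh hρl hw']
    have h1 : ψ (Monoid.Coprod.inl (w (ρ c ++ l ++ (ρ c).reverse.tail))) = ψ 1 := by
      rw [← hL1, hL2, hwclo', map_one]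
    have h3 : w (ρ c ++ l ++ (ρ c).reverse.tail) = 1 :=
      Monoid.Coprod.inl_injective ((hinj h1).trans (map_one _).symm)
    have h4 : SquareEquiv G (ρ c ++ l ++ (ρ c).reverse.tail) [a] :=
      (hw.2.1 _ _ cloCycG (cyc_triv G a)).1
        (h3.trans (wa1 hsym hρc hρh hρl hw).symm)
    exact ⟨c, rfl, dance hsym (hρc c) (hρh c) (hρl c) hlast h4⟩
  · -- cycles of G decomposable → even cycles of G' decomposable
    intro hdecG p hp heven
    have htriv : ∀ g : P, g = 1 := by
      intro g
      obtain ⟨hcg, hvg⟩ := Classical.choose_spec (hw.2.2 g)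
      obtain ⟨c', hc', he⟩ := hdecG _ hcg.1
      have hca : c' = a := by
        rw [hcg.2] at hc'
        exact (Option.some.inj hc').symm
      rw [hca] at he
      rw [← hvg, wcongr hsym hρc hρh hρl hw hcg (cyc_triv G a) he,
        wa1 hsym hρc hρh hρl hw]
    obtain ⟨c, l, rfl⟩ := List.exists_cons_of_ne_nil hp.1.1
    have hchain' : List.Chain' G' (c :: l) := hp.1.2
    have hlast : (c :: l).getLast? = some c := hp.2.symm ▸ rfl
    have hpar := (par hf hG' l c c hchain' hlast).1 rfl
    have hlenEven : Even l.length := by simpa [walkLen] using heven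
    have hlcEven : Even (loopCount (c :: l)) := by
      rw [Nat.even_iff] at hpar hlenEven ⊢
      omega
    obtain ⟨cloCyc', hL2⟩ := L2' l c c hchain' hlast
    have hF : Fprod (eFun w ρ) (c :: l) = 1 := by
      rw [Ftriv hsym hρc hρh hρl hf hG' hw htriv (c :: l)]
      have hcast : ((loopCount (c :: l) : ZMod 2)) = 0 := by
        rw [ZMod.natCast_eq_zero_iff]
        obtain ⟨k, hk⟩ := hlcEven
        exact ⟨k, by omega⟩
      rw [hcast, show Multiplicative.ofAdd (0 : ZMod 2) = 1 from rfl, map_one]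
    have hwclo : w' (ρ c ++ l ++ (ρ c).reverse.tail) = 1 := by
      rw [← hL2, hF, map_one]
    have hclo : SquareEquiv G' (ρ c ++ l ++ (ρ c).reverse.tail) [a] :=
      (hw'.2.1 _ _ cloCyc' (cyc_triv G' a)).1
        (hwclo.trans (wa1 hsym' hρc' hρh hρl hw').symm)
    exact ⟨c, rfl, dance hsym' (hρc' c) (hρh c) (hρl c) hlast hclo⟩
end

section
/- Let G be a finite connected undirected graph that is not bipartite, and let G' be its bipartite cover: V(G') = V(G) × {0,1} with an edge between (v,i) and (w,1−i) for every edge (v,w) of G and i ∈ {0,1}. Then the even square group of G is isomorphic to the even square group of G', which equals the square group of G' since G' is bipartite. In particular, every even-length cycle of G is square-decomposable if and only if every cycle of G' is square-decomposable. -/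
variable {V : Type}

/-- `w : List V → P` presents the even square group `𝓔^□_G[a]` of `G` at `a`:
it is multiplicative on concatenation of even-length cycles at `a`, it identifies exactly
the square-equivalent even-length cycles, and it is surjective. -/
def PresentsEvenSquareGroup (G : V → V → Prop) (a : V) (P : Type) [Group P]
    (w : List V → P) : Prop :=
  (∀ p q : List V, IsCycleAt G a p → Even (walkLen p) → IsCycleAt G a q → Even (walkLen q) →
      w (p ++ q.tail) = w p * w q) ∧
  (∀ p q : List V, IsCycleAt G a p → Even (walkLen p) → IsCycleAt G a q → Even (walkLen q) →
      (w p = w q ↔ SquareEquiv G p q)) ∧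
  (∀ g : P, ∃ p : List V, IsCycleAt G a p ∧ Even (walkLen p) ∧ w p = g)

/-- The bipartite cover of a graph `G`. -/
def coverRel (G : V → V → Prop) : (V × Bool) → (V × Bool) → Prop :=
  fun p q => G p.1 q.1 ∧ q.2 = !p.2

namespace SqCoverAux

/-- parity of a natural number as a Bool -/
def npar (n : ℕ) : Bool := n % 2 == 1

lemma npar_succ (n : ℕ) : npar (n + 1) = !npar n := by
  rcases Nat.mod_two_eq_zero_or_one n with h | h <;> simp [npar, Nat.add_mod, h]

lemma npar_eq_false_iff {n : ℕ} : npar n = false ↔ Even n := by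
  rcases Nat.mod_two_eq_zero_or_one n with h | h <;>
    simp [npar, h, Nat.even_iff]

/-- The canonical lift of a list of vertices to the bipartite cover, starting at parity `b`. -/
def liftW : List V → Bool → List (V × Bool)
  | [], _ => []
  | v :: r, b => (v, b) :: liftW r (!b)

@[simp] lemma liftW_nil (b : Bool) : liftW ([] : List V) b = [] := rfl
@[simp] lemma liftW_cons (v : V) (r : List V) (b : Bool) :
    liftW (v :: r) b = (v, b) :: liftW r (!b) := rfl

@[simp] lemma length_liftW : ∀ (p : List V) (b : Bool), (liftW p b).length = p.length
  | [], _ => rfl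
  | _ :: r, b => by simp [length_liftW r (!b)]

@[simp] lemma map_fst_liftW : ∀ (p : List V) (b : Bool), (liftW p b).map Prod.fst = p
  | [], _ => rfl
  | _ :: r, b => by simp [map_fst_liftW r (!b)]

lemma liftW_append : ∀ (p q : List V) (b : Bool),
    liftW (p ++ q) b = liftW p b ++ liftW q (Bool.xor b (npar p.length))
  | [], q, b => by simp [npar]
  | v :: p, q, b => by
      simp only [List.cons_append, liftW_cons, liftW_append p q (!b), List.length_cons,
        npar_succ]
      cases b <;> cases npar p.length <;> rfl

@[simp] lemma liftW_tail : ∀ (p : List V) (b : Bool), (liftW p b).tail = liftW p.tail (!b)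
  | [], _ => rfl
  | _ :: _, _ => rfl

lemma head?_liftW (p : List V) (b : Bool) :
    (liftW p b).head? = p.head?.map (fun v => (v, b)) := by
  cases p <;> rfl

lemma getLast?_liftW : ∀ (p : List V) (b : Bool),
    (liftW p b).getLast? = p.getLast?.map (fun v => (v, Bool.xor b (npar (p.length - 1))))
  | [], _ => rfl
  | [v], b => by simp [npar]
  | v :: v' :: r, b => by
      have e : liftW (v :: v' :: r) b = (v, b) :: (v', !b) :: liftW r (!!b) := rfl
      have e2 : (v', !b) :: liftW r (!!b) = liftW (v' :: r) (!b) := rfl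
      rw [e, List.getLast?_cons_cons, e2, getLast?_liftW (v' :: r) (!b),
        List.getLast?_cons_cons]
      have h1 : (v :: v' :: r).length - 1 = ((v' :: r).length - 1) + 1 := by
        simp
      rw [h1, npar_succ]
      cases b <;> cases npar ((v' :: r).length - 1) <;> rfl

lemma chain'_liftW (G : V → V → Prop) :
    ∀ (p : List V) (b : Bool), List.Chain' G p → List.Chain' (coverRel G) (liftW p b)
  | [], _, _ => by exact List.isChain_nil
  | [v], b, _ => by exact List.isChain_singleton _
  | v :: v' :: r, b, h => by
      rw [List.Chain', List.isChain_cons_cons] at h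
      exact List.isChain_cons_cons.mpr ⟨⟨h.1, rfl⟩, chain'_liftW G (v' :: r) (!b) h.2⟩

lemma eq_liftW (G : V → V → Prop) :
    ∀ (q : List (V × Bool)), List.Chain' (coverRel G) q →
      ∀ x, q.head? = some x → q = liftW (q.map Prod.fst) x.2
  | [], _, x, hx => by simp at hx
  | [y], _, x, hx => by
      simp only [List.head?_cons, Option.some.injEq] at hx
      subst hx; simp
  | y :: z :: r, h, x, hx => by
      simp only [List.head?_cons, Option.some.injEq] at hx
      subst hx
      rw [List.Chain', List.isChain_cons_cons] at h
      have ih := eq_liftW G (z :: r) h.2 z rfl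
      have hz2 : z.2 = !y.2 := h.1.2
      have e : liftW ((y :: z :: r).map Prod.fst) y.2
          = (y.1, y.2) :: liftW ((z :: r).map Prod.fst) (!y.2) := rfl
      rw [e, ← hz2, ← ih]

lemma sqStep_liftW {G : V → V → Prop} {p q : List V} (h : SqStep G p q) (b : Bool) :
    SqStep (coverRel G) (liftW p b) (liftW q b) := by
  cases h with
  | backtrack l₁ l₂ u v huv hvu =>
      rw [liftW_append, liftW_append]
      simp only [liftW_cons, Bool.not_not]
      exact SqStep.backtrack _ _ _ _ ⟨huv, rfl⟩ ⟨hvu, (Bool.not_not _).symm⟩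
  | square l₁ l₂ u x y z h1 h2 h3 h4 hne1 hne2 =>
      rw [liftW_append, liftW_append]
      simp only [liftW_cons, Bool.not_not]
      exact SqStep.square _ _ _ _ _ _ ⟨h1, rfl⟩ ⟨h2, (Bool.not_not _).symm⟩ ⟨h3, rfl⟩
        ⟨h4, (Bool.not_not _).symm⟩
        (fun h => hne1 (congrArg Prod.fst h)) (fun h => hne2 (congrArg Prod.fst h))

lemma sqStep_proj {G : V → V → Prop} {p q : List (V × Bool)}
    (h : SqStep (coverRel G) p q) : SqStep G (p.map Prod.fst) (q.map Prod.fst) := by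
  cases h with
  | backtrack l₁ l₂ u v huv hvu =>
      simp only [List.map_append, List.map_cons]
      exact SqStep.backtrack _ _ _ _ huv.1 hvu.1
  | square l₁ l₂ u x y z h1 h2 h3 h4 hne1 hne2 =>
      have hy2 : y.2 = u.2 := by rw [h2.2, h1.2, Bool.not_not]
      have hz2 : z.2 = x.2 := by rw [h3.2, h2.2, Bool.not_not]
      simp only [List.map_append, List.map_cons]
      exact SqStep.square _ _ _ _ _ _ h1.1 h2.1 h3.1 h4.1
        (fun h => hne1 (Prod.ext h hy2.symm)) (fun h => hne2 (Prod.ext h hz2.symm))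

lemma squareEquiv_liftW {G : V → V → Prop} {p q : List V} (h : SquareEquiv G p q)
    (b : Bool) : SquareEquiv (coverRel G) (liftW p b) (liftW q b) :=
  Relation.ReflTransGen.lift (fun l => liftW l b)
    (fun _ _ h => h.elim (fun h => Or.inl (sqStep_liftW h b))
      (fun h => Or.inr (sqStep_liftW h b))) _ _ h

lemma squareEquiv_proj {G : V → V → Prop} {p q : List (V × Bool)}
    (h : SquareEquiv (coverRel G) p q) :
    SquareEquiv G (p.map Prod.fst) (q.map Prod.fst) :=
  Relation.ReflTransGen.lift
    (p := fun l₁ l₂ : List V => SqStep G l₁ l₂ ∨ SqStep G l₂ l₁)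
    (fun l : List (V × Bool) => l.map Prod.fst)
    (fun _ _ h => h.elim (fun h => Or.inl (sqStep_proj h))
      (fun h => Or.inr (sqStep_proj h))) _ _ h

lemma isCycleAt_liftW {G : V → V → Prop} {p : List V} {u : V} (b : Bool)
    (hp : IsCycleAt G u p) (he : Even (walkLen p)) :
    IsCycleAt (coverRel G) (u, b) (liftW p b) := by
  obtain ⟨⟨⟨hne, hch⟩, hcyc⟩, hhead⟩ := hp
  have hlast : p.getLast? = some u := hcyc ▸ hhead
  have hpar : npar (p.length - 1) = false := npar_eq_false_iff.mpr he
  have hh : (liftW p b).head? = some (u, b) := by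
    rw [head?_liftW, hhead]; rfl
  refine ⟨⟨⟨?_, chain'_liftW G p b hch⟩, ?_⟩, hh⟩
  · intro h
    exact hne (List.length_eq_zero_iff.mp (by simpa using congrArg List.length h))
  · rw [hh, getLast?_liftW, hlast, hpar]
    simp

lemma isCycleAt_proj {G : V → V → Prop} {q : List (V × Bool)} {x : V × Bool}
    (hq : IsCycleAt (coverRel G) x q) :
    IsCycleAt G x.1 (q.map Prod.fst) ∧ Even (walkLen (q.map Prod.fst)) := by
  obtain ⟨⟨⟨hne, hch⟩, hcyc⟩, hhead⟩ := hq
  have hlast : q.getLast? = some x := hcyc ▸ hhead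
  have heq : q = liftW (q.map Prod.fst) x.2 := eq_liftW G q hch x hhead
  have hlastm : (q.map Prod.fst).getLast? = some x.1 := by
    rw [List.getLast?_map, hlast]; rfl
  have heven : Even (walkLen (q.map Prod.fst)) := by
    have h2 : q.getLast? =
        (q.map Prod.fst).getLast?.map
          (fun v => (v, Bool.xor x.2 (npar ((q.map Prod.fst).length - 1)))) := by
      conv_lhs => rw [heq]
      rw [getLast?_liftW]
    rw [hlast, hlastm] at h2
    simp only [Option.map_some, Option.some.injEq] at h2
    have h3 : x.2 = Bool.xor x.2 (npar ((q.map Prod.fst).length - 1)) :=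
      congrArg Prod.snd h2
    have h4 : npar ((q.map Prod.fst).length - 1) = false := by
      revert h3
      cases x.2 <;> cases hnp : npar ((q.map Prod.fst).length - 1) <;> simp
    exact npar_eq_false_iff.mp h4
  refine ⟨⟨⟨⟨?_, List.isChain_map_of_isChain Prod.fst (fun a b h => h.1) hch⟩, ?_⟩, ?_⟩, heven⟩
  · simp [hne]
  · rw [List.head?_map, List.getLast?_map, hhead, hlast]
  · rw [List.head?_map, hhead]; rfl

lemma cycleAt_append {G : V → V → Prop} {a : V} {p q : List V}
    (hp : IsCycleAt G a p) (hq : IsCycleAt G a q) :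
    IsCycleAt G a (p ++ q.tail) ∧ walkLen (p ++ q.tail) = walkLen p + walkLen q := by
  obtain ⟨⟨⟨hpne, hpch⟩, hpc⟩, hph⟩ := hp
  obtain ⟨⟨⟨hqne, hqch⟩, hqc⟩, hqh⟩ := hq
  have hplast : p.getLast? = some a := hpc ▸ hph
  have hqlast : q.getLast? = some a := hqc ▸ hqh
  obtain ⟨t, hq'⟩ : ∃ t, q = a :: t := by
    cases q with
    | nil => simp at hqh
    | cons v t =>
        simp only [List.head?_cons, Option.some.injEq] at hqh
        exact ⟨t, by rw [hqh]⟩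
  subst hq'
  rw [List.Chain', List.isChain_cons] at hqch
  have hhead : (p ++ (a :: t).tail).head? = some a := by
    cases p with
    | nil => simp at hpne
    | cons v r =>
        simp only [List.head?_cons, Option.some.injEq] at hph
        simp [hph]
  have hchain : List.Chain' G (p ++ (a :: t).tail) := by
    rw [List.Chain', List.isChain_append]
    refine ⟨hpch, hqch.2, ?_⟩
    intro x hx y hy
    rw [hplast] at hx
    simp only [Option.mem_def, Option.some.injEq] at hx
    subst hx
    exact hqch.1 y hy
  have hlast : (p ++ (a :: t).tail).getLast? = some a := by
    cases t with
    | nil => simpa using hplast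
    | cons y t' =>
        rw [List.getLast?_cons_cons] at hqlast
        rw [List.tail_cons, List.getLast?_append_of_ne_nil _ (by simp)]
        exact hqlast
  have hlen : walkLen (p ++ (a :: t).tail) = walkLen p + walkLen (a :: t) := by
    have h1 : 1 ≤ p.length := List.length_pos_iff.mpr hpne
    simp only [walkLen, List.length_append, List.tail_cons, List.length_cons]
    omega
  exact ⟨⟨⟨⟨by simp [hpne], hchain⟩, hhead.trans hlast.symm⟩, hhead⟩, hlen⟩

lemma liftW_append_tail {p q : List V} (hp : p ≠ []) (he : Even (walkLen p)) :
    liftW (p ++ q.tail) false = liftW p false ++ (liftW q false).tail := by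
  rw [liftW_append, liftW_tail]
  have h1 : 1 ≤ p.length := List.length_pos_iff.mpr hp
  have h2 : (p.length - 1) % 2 = 0 := Nat.even_iff.mp he
  have h3 : npar p.length = true := by
    simp only [npar, beq_iff_eq]
    omega
  rw [h3]
  rfl

end SqCoverAux

open SqCoverAux in
/-- For `G` finite connected non-bipartite with bipartite cover `G'`,
the even square group of `G` is isomorphic to the (even) square group of `G'`,
and `G'` is bipartite; in particular every even-length cycle of `G` is square-decomposable
iff every cycle of `G'` is square-decomposable. -/
theorem evenSquareGroup_bipartite_cover {V : Type} [Fintype V] (G : V → V → Prop)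
    (hsym : Symmetric G) (hconn : GraphConnected G) (hnbip : ¬ GraphBipartite G) (a : V)
    (P : Type) [Group P] (w : List V → P) (hw : PresentsEvenSquareGroup G a P w)
    (P' : Type) [Group P'] (w' : List (V × Bool) → P')
    (hw' : PresentsSquareGroup (coverRel G) (a, false) P' w') :
    GraphBipartite (coverRel G) ∧
    Nonempty (P ≃* P') ∧
    ((∀ p : List V, IsCycle G p → Even (walkLen p) → IsSquareDecomposable G p) ↔
      (∀ p : List (V × Bool), IsCycle (coverRel G) p → IsSquareDecomposable (coverRel G) p)) := by
  obtain ⟨wmul, wiff, wsurj⟩ := hw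
  obtain ⟨w'mul, w'iff, w'surj⟩ := hw'
  refine ⟨⟨Prod.snd, fun u v h hf => by rw [h.2] at hf; simp at hf⟩, ?_, ?_⟩
  · classical
    choose pf hpf hef hwf using wsurj
    choose qf hqf hwqf using w'surj
    set φ : P → P' := fun g => w' (liftW (pf g) false) with hφ
    set ψ : P' → P := fun h => w ((qf h).map Prod.fst) with hψ
    have key1 : ∀ p, IsCycleAt G a p → Even (walkLen p) → φ (w p) = w' (liftW p false) := by
      intro p hp he
      have hse : SquareEquiv G (pf (w p)) p :=
        (wiff _ _ (hpf _) (hef _) hp he).mp (hwf _)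
      exact (w'iff _ _ (isCycleAt_liftW false (hpf _) (hef _))
        (isCycleAt_liftW false hp he)).mpr (squareEquiv_liftW hse false)
    have key2 : ∀ q, IsCycleAt (coverRel G) (a, false) q →
        ψ (w' q) = w (q.map Prod.fst) := by
      intro q hq
      have hse : SquareEquiv (coverRel G) (qf (w' q)) q :=
        (w'iff _ _ (hqf _) hq).mp (hwqf _)
      have h1 := isCycleAt_proj (hqf (w' q))
      have h2 := isCycleAt_proj hq
      exact (wiff _ _ h1.1 h1.2 h2.1 h2.2).mpr (squareEquiv_proj hse)
    have hom : ∀ g h : P, φ (g * h) = φ g * φ h := by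
      intro g h
      have hc := cycleAt_append (hpf g) (hpf h)
      have hepq : Even (walkLen (pf g ++ (pf h).tail)) := by
        rw [hc.2]; exact (hef g).add (hef h)
      have hmul : w (pf g ++ (pf h).tail) = g * h := by
        rw [wmul _ _ (hpf g) (hef g) (hpf h) (hef h), hwf, hwf]
      have hne : pf g ≠ [] := (hpf g).1.1.1
      calc φ (g * h) = φ (w (pf g ++ (pf h).tail)) := by rw [hmul]
        _ = w' (liftW (pf g ++ (pf h).tail) false) := key1 _ hc.1 hepq
        _ = w' (liftW (pf g) false ++ (liftW (pf h) false).tail) := by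
              rw [liftW_append_tail hne (hef g)]
        _ = w' (liftW (pf g) false) * w' (liftW (pf h) false) :=
              w'mul _ _ (isCycleAt_liftW false (hpf g) (hef g))
                (isCycleAt_liftW false (hpf h) (hef h))
        _ = φ g * φ h := by
              rw [← key1 _ (hpf g) (hef g), ← key1 _ (hpf h) (hef h), hwf, hwf]
    have linv : Function.LeftInverse ψ φ := by
      intro g
      have hk := key2 _ (isCycleAt_liftW false (hpf g) (hef g))
      calc ψ (φ g) = w ((liftW (pf g) false).map Prod.fst) := hk
        _ = w (pf g) := by rw [map_fst_liftW]
        _ = g := hwf g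
    have rinv : Function.RightInverse ψ φ := by
      intro h
      have h1 := isCycleAt_proj (hqf h)
      have h2 : qf h = liftW ((qf h).map Prod.fst) false :=
        eq_liftW G (qf h) (hqf h).1.1.2 (a, false) (hqf h).2
      calc φ (ψ h) = w' (liftW ((qf h).map Prod.fst) false) := key1 _ h1.1 h1.2
        _ = w' (qf h) := by rw [← h2]
        _ = h := hwqf h
    exact ⟨⟨⟨φ, ψ, linv, rinv⟩, hom⟩⟩
  · constructor
    · intro H p' hp'
      obtain ⟨⟨hne, hch⟩, hcy⟩ := hp'
      obtain ⟨x, t, rfl⟩ : ∃ x t, p' = x :: t := by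
        cases p' with
        | nil => exact absurd rfl hne
        | cons x t => exact ⟨x, t, rfl⟩
      have hcyc' : IsCycleAt (coverRel G) x (x :: t) := ⟨⟨⟨hne, hch⟩, hcy⟩, rfl⟩
      have hproj := isCycleAt_proj hcyc'
      obtain ⟨u, hu, hse⟩ := H _ hproj.1.1 hproj.2
      have hu' : u = x.1 := by
        simp only [List.map_cons, List.head?_cons, Option.some.injEq] at hu
        exact hu.symm
      subst hu'
      have heq : x :: t = liftW ((x :: t).map Prod.fst) x.2 :=
        eq_liftW G _ hch x rfl
      refine ⟨x, rfl, ?_⟩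
      have hl := squareEquiv_liftW hse x.2
      rw [← heq] at hl
      simpa using hl
    · intro H p hp he
      obtain ⟨⟨hne, hch⟩, hcy⟩ := hp
      obtain ⟨u, t, rfl⟩ : ∃ u t, p = u :: t := by
        cases p with
        | nil => exact absurd rfl hne
        | cons u t => exact ⟨u, t, rfl⟩
      have hcyc : IsCycleAt G u (u :: t) := ⟨⟨⟨hne, hch⟩, hcy⟩, rfl⟩
      have hlift := isCycleAt_liftW false hcyc he
      obtain ⟨v', hv', hse⟩ := H _ hlift.1
      have hv2 : v' = (u, false) := by
        rw [head?_liftW] at hv'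
        simp only [List.head?_cons, Option.map_some, Option.some.injEq] at hv'
        exact hv'.symm
      subst hv2
      have hpr := squareEquiv_proj hse
      rw [map_fst_liftW] at hpr
      exact ⟨u, rfl, by simpa using hpr⟩
end

section
/- Let G be a finite undirected graph, r ≥ 0, and let p : ⟦−r,r⟧² → V(G) be a graph homomorphism from the grid box (positions at l¹-distance 1 are mapped to adjacent vertices of G). Then the backtrack-reduction of the closed walk in G obtained by reading p clockwise along the boundary ∂B²(r) = ⟦−r,r⟧² ∖ ⟦−r+1,r−1⟧² is square-decomposable. -/
variable {V : Type}

/-- Concatenation of walks (the second walk starts where the first one ends). -/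
def wconcat (p q : List V) : List V := p ++ q.tail

/-- `k`-fold concatenation of the cycle `c` based at `a`. -/
def wpow (a : V) (c : List V) : ℕ → List V
  | 0 => [a]
  | k + 1 => wconcat (wpow a c k) c

/-- The list of vertices read in the pattern `Q` starting at `s`, in direction `dir`,
for `len` steps. -/
def readSeg (Q : ℤ × ℤ → V) (s : ℤ × ℤ) (dir : ℤ × ℤ) (len : ℕ) : List V :=
  (List.range (len + 1)).map fun i => Q (s + (i : ℤ) • dir)

section Aux
variable {V : Type} {G : V → V → Prop}

lemma sqe_refl (p : List V) : SquareEquiv G p p := Relation.ReflTransGen.refl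

lemma sqe_symm {p q : List V} (h : SquareEquiv G p q) : SquareEquiv G q p := by
  induction h with
  | refl => exact Relation.ReflTransGen.refl
  | tail _ h ih => exact Relation.ReflTransGen.head h.symm ih

lemma sqe_trans {p q s : List V} (h : SquareEquiv G p q) (h' : SquareEquiv G q s) :
    SquareEquiv G p s := Relation.ReflTransGen.trans h h'

lemma sqe_of_step {p q : List V} (h : SqStep G p q) : SquareEquiv G p q :=
  Relation.ReflTransGen.single (Or.inl h)

lemma sqe_insert_bt (l₁ l₂ : List V) (u v : V) (huv : G u v) (hvu : G v u) :
    SquareEquiv G (l₁ ++ u :: l₂) (l₁ ++ u :: v :: u :: l₂) :=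
  sqe_of_step (SqStep.backtrack l₁ l₂ u v huv hvu)

lemma sqe_delete_bt (l₁ l₂ : List V) (u v : V) (huv : G u v) (hvu : G v u) :
    SquareEquiv G (l₁ ++ u :: v :: u :: l₂) (l₁ ++ u :: l₂) :=
  sqe_symm (sqe_insert_bt l₁ l₂ u v huv hvu)

/-- Generalized square insertion, allowing degenerate squares. -/
lemma sqe_insert_sq (hsym : Symmetric G) (l₁ l₂ : List V) (u x y z : V)
    (h1 : G u x) (h2 : G x y) (h3 : G y z) (h4 : G z u) :
    SquareEquiv G (l₁ ++ u :: l₂) (l₁ ++ u :: x :: y :: z :: u :: l₂) := by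
  by_cases hxz : x = z
  · subst hxz
    have s1 := sqe_insert_bt l₁ l₂ u x h1 (hsym h1)
    have s2 := sqe_insert_bt (l₁ ++ [u]) (u :: l₂) x y h2 h3
    refine sqe_trans s1 (by simpa using s2)
  · by_cases huy : u = y
    · subst huy
      have s1 := sqe_insert_bt l₁ l₂ u x h1 h2
      have s2 := sqe_insert_bt (l₁ ++ [u, x]) l₂ u z h3 h4
      refine sqe_trans s1 (by simpa using s2)
    · exact sqe_of_step (SqStep.square l₁ l₂ u x y z h1 h2 h3 h4 huy hxz)

/-- The flip move: replace the path `u x w` by `u z w` across a (possibly degenerate) square. -/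
lemma sqe_flip (hsym : Symmetric G) (l₁ l₂ : List V) (u x w z : V)
    (h1 : G u x) (h2 : G x w) (h3 : G u z) (h4 : G z w) :
    SquareEquiv G (l₁ ++ u :: x :: w :: l₂) (l₁ ++ u :: z :: w :: l₂) := by
  have s1 := sqe_insert_sq hsym l₁ (x :: w :: l₂) u z w x h3 h4 (hsym h2) (hsym h1)
  have s2 := sqe_delete_bt (l₁ ++ [u, z, w]) (w :: l₂) x u (hsym h1) h1
  have s3 := sqe_delete_bt (l₁ ++ [u, z]) l₂ w x (hsym h2) h2
  refine sqe_trans s1 (sqe_trans (by simpa using s2) (by simpa using s3))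

end Aux

section Aux2
variable {V : Type} {G : V → V → Prop}

lemma rev_map_range (n : ℕ) (f : ℕ → V) :
    (List.range n).map (fun i => f (n - 1 - i)) = ((List.range n).map f).reverse := by
  apply List.ext_getElem
  · simp
  · intro i h1 h2
    simp [List.getElem_reverse]

/-- Contracting a palindromic walk. -/
lemma sqe_pal (f : ℕ → V) (n : ℕ) (hf : ∀ i < n, G (f i) (f (i + 1))) (hsym : Symmetric G) :
    SquareEquiv G [f 0]
      ((List.range n).map f ++ f n :: ((List.range n).map f).reverse) := by
  induction n with
  | zero => simp [sqe_refl]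
  | succ n ih =>
    refine sqe_trans (ih (fun i hi => hf i (by omega))) ?_
    have := sqe_insert_bt (G := G) ((List.range n).map f) (((List.range n).map f).reverse)
      (f n) (f (n + 1)) (hf n (by omega)) (hsym (hf n (by omega)))
    simpa [List.range_succ] using this

/-- The strip move: replace a path along the top row of a strip by
down, along the bottom row, up. -/
lemma sqe_strip (hsym : Symmetric G) (t b : ℕ → V) (n : ℕ)
    (hT : ∀ i < n, G (t i) (t (i + 1))) (hB : ∀ i < n, G (b i) (b (i + 1)))
    (hV : ∀ i ≤ n, G (t i) (b i)) :
    ∀ l₁ l₂ : List V, SquareEquiv G (l₁ ++ (List.range (n + 1)).map t ++ l₂)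
      (l₁ ++ t 0 :: ((List.range (n + 1)).map b ++ t n :: l₂)) := by
  induction n with
  | zero =>
    intro l₁ l₂
    simpa using sqe_insert_bt l₁ l₂ (t 0) (b 0) (hV 0 le_rfl) (hsym (hV 0 le_rfl))
  | succ n ih =>
    intro l₁ l₂
    have step1 := ih (fun i hi => hT i (by omega)) (fun i hi => hB i (by omega))
      (fun i hi => hV i (by omega)) l₁ (t (n + 1) :: l₂)
    have step2 := sqe_flip hsym (l₁ ++ t 0 :: (List.range n).map b) l₂
      (b n) (t n) (t (n + 1)) (b (n + 1))
      (hsym (hV n (by omega))) (hT n (by omega)) (hB n (by omega)) (hsym (hV (n + 1) le_rfl))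
    refine sqe_trans (by simpa [List.range_succ] using step1) ?_
    simpa [List.range_succ] using step2
end Aux2

section Aux3
variable {V : Type} {G : V → V → Prop}

lemma mr_front (n : ℕ) (f : ℕ → V) :
    (List.range (n + 1)).map f = f 0 :: (List.range n).map fun i => f (i + 1) := by
  rw [List.range_succ_eq_map]
  simp [List.map_map, Function.comp_def]

lemma mr_back (n : ℕ) (f : ℕ → V) :
    (List.range (n + 1)).map f = (List.range n).map f ++ [f n] := by
  rw [List.range_succ]; simp

lemma sqe_pal' (f : ℕ → V) (n : ℕ) (hf : ∀ i < n, G (f i) (f (i + 1))) (hsym : Symmetric G) :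
    SquareEquiv G [f 0]
      (f 0 :: ((List.range n).map (fun i => f (i + 1)) ++
        (List.range n).map (fun i => f (n - 1 - i)))) := by
  have h := sqe_pal f n hf hsym
  have e : ((List.range n).map f ++ f n :: ((List.range n).map f).reverse)
      = (f 0 :: ((List.range n).map (fun i => f (i + 1)) ++
        (List.range n).map (fun i => f (n - 1 - i)))) := by
    rw [← rev_map_range]
    apply List.ext_getElem
    · simp; omega
    · intro i h1 h2
      simp only [List.getElem_append, List.getElem_cons, List.getElem_map, List.getElem_range,
        List.length_append, List.length_cons, List.length_map, List.length_range]
      split_ifs <;> first | rfl | (congr 1 <;> omega)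
  rw [e] at h
  exact h

lemma sqe_box (hsym : Symmetric G) (q : ℕ → ℕ → V) (M : ℕ)
    (hH : ∀ i j, i < M + 1 → j ≤ M + 1 → G (q i j) (q (i + 1) j))
    (hV : ∀ i j, i ≤ M + 1 → j < M + 1 → G (q i j) (q i (j + 1))) :
    ∀ j, j ≤ M + 1 → SquareEquiv G
      ((List.range (j + 1)).map (fun s => q 0 s) ++
       ((List.range (M + 1 + 1)).map (fun i => q i j)).tail ++
       ((List.range (j + 1)).map (fun s => q (M + 1) (j - s))).tail ++
       ((List.range (M + 1 + 1)).map (fun i => q (M + 1 - i) 0)).tail) [q 0 0] := by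
  intro j
  induction j with
  | zero =>
    intro _
    have hpal := sqe_pal' (G := G) (fun i => q i 0) (M + 1)
      (fun i hi => hH i 0 hi (by omega)) hsym
    apply sqe_symm
    have e : ((List.range (0 + 1)).map (fun s => q 0 s) ++
       ((List.range (M + 1 + 1)).map (fun i => q i 0)).tail ++
       ((List.range (0 + 1)).map (fun s => q (M + 1) (0 - s))).tail ++
       ((List.range (M + 1 + 1)).map (fun i => q (M + 1 - i) 0)).tail)
        = (q 0 0 :: ((List.range (M + 1)).map (fun i => q (i + 1) 0) ++
            (List.range (M + 1)).map (fun i => q (M + 1 - 1 - i) 0))) := by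
      simp only [mr_front (M + 1) (fun i => q i 0), mr_front (M + 1) (fun i => q (M + 1 - i) 0),
        mr_front 0 (fun s => q 0 s), mr_front 0 (fun s => q (M + 1) (0 - s)),
        Nat.succ_sub_succ, Nat.add_sub_cancel, Nat.sub_zero, List.tail_cons, List.range_zero,
        List.map_nil, List.append_assoc, List.cons_append, List.nil_append, List.append_nil]
    rw [e]
    exact (by simpa using hpal)
  | succ j ih =>
    intro hj
    have hjN : j ≤ M + 1 := by omega
    have hjM : j < M + 1 := by omega
    refine sqe_trans ?_ (ih (by omega))
    have eA : ((List.range (j + 1 + 1)).map (fun s => q 0 s) ++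
       ((List.range (M + 1 + 1)).map (fun i => q i (j + 1))).tail ++
       ((List.range (j + 1 + 1)).map (fun s => q (M + 1) (j + 1 - s))).tail ++
       ((List.range (M + 1 + 1)).map (fun i => q (M + 1 - i) 0)).tail)
        = ((List.range (j + 1)).map (fun s => q 0 s) ++
           (List.range (M + 1 + 1)).map (fun i => q i (j + 1)) ++
           (((List.range (j + 1)).map (fun s => q (M + 1) (j - s))) ++
            ((List.range (M + 1 + 1)).map (fun i => q (M + 1 - i) 0)).tail)) := by
      simp only [mr_back (j + 1) (fun s => q 0 s), mr_front (M + 1) (fun i => q i (j + 1)),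
        mr_front (j + 1) (fun s => q (M + 1) (j + 1 - s)), Nat.succ_sub_succ, List.tail_cons,
        List.append_assoc, List.cons_append, List.singleton_append, List.nil_append]
    rw [eA]
    have hstrip := sqe_strip hsym (fun i => q i (j + 1)) (fun i => q i j) (M + 1)
      (fun i hi => hH i (j + 1) hi hj) (fun i hi => hH i j hi hjN)
      (fun i _ => hsym (hV i j (by omega) hjM))
      ((List.range (j + 1)).map (fun s => q 0 s))
      (((List.range (j + 1)).map (fun s => q (M + 1) (j - s))) ++
       ((List.range (M + 1 + 1)).map (fun i => q (M + 1 - i) 0)).tail)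
    refine sqe_trans hstrip ?_
    have e1 : ((List.range (j + 1)).map (fun s => q 0 s) ++
        q 0 (j + 1) :: ((List.range (M + 1 + 1)).map (fun i => q i j) ++
          q (M + 1) (j + 1) :: (((List.range (j + 1)).map (fun s => q (M + 1) (j - s))) ++
            ((List.range (M + 1 + 1)).map (fun i => q (M + 1 - i) 0)).tail)))
        = ((List.range j).map (fun s => q 0 s) ++
            q 0 j :: q 0 (j + 1) :: q 0 j ::
              ((List.range (M + 1)).map (fun i => q (i + 1) j) ++
                q (M + 1) (j + 1) :: (((List.range (j + 1)).map (fun s => q (M + 1) (j - s))) ++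
                  ((List.range (M + 1 + 1)).map (fun i => q (M + 1 - i) 0)).tail))) := by
      simp only [mr_back j (fun s => q 0 s), mr_front (M + 1) (fun i => q i j),
        List.tail_cons, List.append_assoc, List.cons_append, List.singleton_append,
        List.nil_append]
    rw [e1]
    refine sqe_trans (sqe_delete_bt _ _ _ _ (hV 0 j (by omega) hjM)
      (hsym (hV 0 j (by omega) hjM))) ?_
    have e2 : ((List.range j).map (fun s => q 0 s) ++
            q 0 j :: ((List.range (M + 1)).map (fun i => q (i + 1) j) ++
                q (M + 1) (j + 1) :: (((List.range (j + 1)).map (fun s => q (M + 1) (j - s))) ++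
                  ((List.range (M + 1 + 1)).map (fun i => q (M + 1 - i) 0)).tail)))
        = (((List.range (j + 1)).map (fun s => q 0 s) ++
             (List.range M).map (fun i => q (i + 1) j)) ++
            q (M + 1) j :: q (M + 1) (j + 1) :: q (M + 1) j ::
              ((List.range j).map (fun s => q (M + 1) (j - (s + 1))) ++
                ((List.range (M + 1 + 1)).map (fun i => q (M + 1 - i) 0)).tail)) := by
      simp only [mr_back M (fun i => q (i + 1) j), mr_front j (fun s => q (M + 1) (j - s)),
        mr_back j (fun s => q 0 s), Nat.sub_zero, List.tail_cons, List.append_assoc,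
        List.cons_append, List.singleton_append, List.nil_append]
    rw [e2]
    refine sqe_trans (sqe_delete_bt _ _ _ _ (hV (M + 1) j le_rfl hjM)
      (hsym (hV (M + 1) j le_rfl hjM))) ?_
    have e3 : (((List.range (j + 1)).map (fun s => q 0 s) ++
             (List.range M).map (fun i => q (i + 1) j)) ++
            q (M + 1) j ::
              ((List.range j).map (fun s => q (M + 1) (j - (s + 1))) ++
                ((List.range (M + 1 + 1)).map (fun i => q (M + 1 - i) 0)).tail))
        = ((List.range (j + 1)).map (fun s => q 0 s) ++
       ((List.range (M + 1 + 1)).map (fun i => q i j)).tail ++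
       ((List.range (j + 1)).map (fun s => q (M + 1) (j - s))).tail ++
       ((List.range (M + 1 + 1)).map (fun i => q (M + 1 - i) 0)).tail) := by
      simp only [mr_front (M + 1) (fun i => q i j), mr_back M (fun i => q (i + 1) j),
        mr_front j (fun s => q (M + 1) (j - s)), Nat.succ_sub_succ, List.tail_cons,
        List.append_assoc, List.cons_append, List.singleton_append, List.nil_append]
    rw [e3]
    exact sqe_refl _
end Aux3


section Final
variable {V : Type}

lemma readSeg_eq (Q : ℤ × ℤ → V) (s dir : ℤ × ℤ) (len : ℕ) :
    readSeg Q s dir len = (List.range (len + 1)).map (fun i : ℕ => Q (s + (i : ℤ) • dir)) := by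
  unfold readSeg
  induction (List.range (len + 1)) with
  | nil => rfl
  | cons a l ih => simp_all

end Final


/-- For a graph homomorphism `p` from the grid box `⟦-r,r⟧²` to `G`,
the closed walk obtained by reading `p` clockwise along the boundary of the box
(left side bottom-to-top, top side left-to-right, right side top-to-bottom,
bottom side right-to-left) is square-decomposable. -/
theorem boundary_of_box_squareDecomposable {V : Type} [Fintype V] (G : V → V → Prop)
    (hsym : Symmetric G) (r : ℕ) (p : ℤ × ℤ → V)
    (hp : ∀ u v : ℤ × ℤ, |u.1| ≤ (r : ℤ) → |u.2| ≤ (r : ℤ) → |v.1| ≤ (r : ℤ) →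
      |v.2| ≤ (r : ℤ) → |u.1 - v.1| + |u.2 - v.2| = 1 → G (p u) (p v)) :
    IsSquareDecomposable G
      (wconcat (wconcat (wconcat
        (readSeg p (-(r : ℤ), -(r : ℤ)) (0, 1) (2 * r))
        (readSeg p (-(r : ℤ), (r : ℤ)) (1, 0) (2 * r)))
        (readSeg p ((r : ℤ), (r : ℤ)) (0, -1) (2 * r)))
        (readSeg p ((r : ℤ), -(r : ℤ)) (-1, 0) (2 * r))) := by
  rcases Nat.eq_zero_or_pos r with hr | hr
  · subst hr
    have gen : ∀ L : List V, L = [p 0] → IsSquareDecomposable G L := by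
      rintro L rfl
      exact ⟨p 0, rfl, sqe_refl _⟩
    apply gen
    rw [readSeg_eq, readSeg_eq, readSeg_eq, readSeg_eq]
    simp [wconcat, List.range_succ, Prod.mk_zero_zero]
  · -- main case
    set q : ℕ → ℕ → V := fun i j => p ((i : ℤ) - r, (j : ℤ) - r) with hq
    have keyH : ∀ a b c d : ℤ, (a - c = -1 ∨ a - c = 1) → b = d → |a - c| + |b - d| = 1 := by
      intro a b c d h e
      subst e
      rcases h with h | h <;> rw [h] <;> simp
    have keyV : ∀ a b c d : ℤ, a = c → (b - d = -1 ∨ b - d = 1) → |a - c| + |b - d| = 1 := by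
      intro a b c d e h
      subst e
      rcases h with h | h <;> rw [h] <;> simp
    have habs : ∀ k : ℕ, k ≤ 2 * r → |(k : ℤ) - r| ≤ (r : ℤ) := by
      intro k hk
      rw [abs_le]
      constructor <;> push_cast <;> omega
    have hH : ∀ i j, i < 2 * r - 1 + 1 → j ≤ 2 * r - 1 + 1 → G (q i j) (q (i + 1) j) := by
      intro i j hi hj
      refine hp _ _ (habs i (by omega)) (habs j (by omega)) (habs (i + 1) (by omega))
        (habs j (by omega)) (keyH _ _ _ _ (Or.inl (by push_cast; ring)) rfl)
    have hV : ∀ i j, i ≤ 2 * r - 1 + 1 → j < 2 * r - 1 + 1 → G (q i j) (q i (j + 1)) := by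
      intro i j hi hj
      refine hp _ _ (habs i (by omega)) (habs j (by omega)) (habs i (by omega))
        (habs (j + 1) (by omega)) (keyV _ _ _ _ rfl (Or.inl (by push_cast; ring)))
    have main := sqe_box hsym q (2 * r - 1) hH hV (2 * r - 1 + 1) le_rfl
    have hM : 2 * r - 1 + 1 = 2 * r := by omega
    rw [hM] at main
    have eL : readSeg p (-(r : ℤ), -(r : ℤ)) (0, 1) (2 * r)
        = (List.range (2 * r + 1)).map (fun s => q 0 s) := by
      rw [readSeg_eq]
      refine List.map_congr_left ?_
      intro s hs
      rw [List.mem_range] at hs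
      simp only [hq]
      congr 1
      simp only [Prod.ext_iff, Prod.fst_add, Prod.snd_add, Prod.smul_fst, Prod.smul_snd]
      constructor <;> push_cast <;> simp <;> omega
    have eT : readSeg p (-(r : ℤ), (r : ℤ)) (1, 0) (2 * r)
        = (List.range (2 * r + 1)).map (fun i => q i (2 * r)) := by
      rw [readSeg_eq]
      refine List.map_congr_left ?_
      intro s hs
      rw [List.mem_range] at hs
      simp only [hq]
      congr 1
      simp only [Prod.ext_iff, Prod.fst_add, Prod.snd_add, Prod.smul_fst, Prod.smul_snd]
      constructor <;> push_cast <;> simp <;> omega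
    have eR : readSeg p ((r : ℤ), (r : ℤ)) (0, -1) (2 * r)
        = (List.range (2 * r + 1)).map (fun s => q (2 * r) (2 * r - s)) := by
      rw [readSeg_eq]
      refine List.map_congr_left ?_
      intro s hs
      rw [List.mem_range] at hs
      simp only [hq]
      congr 1
      simp only [Prod.ext_iff, Prod.fst_add, Prod.snd_add, Prod.smul_fst, Prod.smul_snd]
      constructor <;> push_cast [Nat.cast_sub (by omega : s ≤ 2 * r)] <;> simp <;> omega
    have eB : readSeg p ((r : ℤ), -(r : ℤ)) (-1, 0) (2 * r)
        = (List.range (2 * r + 1)).map (fun i => q (2 * r - i) 0) := by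
      rw [readSeg_eq]
      refine List.map_congr_left ?_
      intro s hs
      rw [List.mem_range] at hs
      simp only [hq]
      congr 1
      simp only [Prod.ext_iff, Prod.fst_add, Prod.snd_add, Prod.smul_fst, Prod.smul_snd]
      constructor <;> push_cast [Nat.cast_sub (by omega : s ≤ 2 * r)] <;> simp <;> omega
    refine ⟨q 0 0, ?_, ?_⟩
    · rw [wconcat, wconcat, wconcat, eL]
      rw [mr_front (2 * r) (fun s => q 0 s)]
      simp
    · have ew : (wconcat (wconcat (wconcat
        (readSeg p (-(r : ℤ), -(r : ℤ)) (0, 1) (2 * r))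
        (readSeg p (-(r : ℤ), (r : ℤ)) (1, 0) (2 * r)))
        (readSeg p ((r : ℤ), (r : ℤ)) (0, -1) (2 * r)))
        (readSeg p ((r : ℤ), -(r : ℤ)) (-1, 0) (2 * r)))
          = ((List.range (2 * r + 1)).map (fun s => q 0 s) ++
            ((List.range (2 * r + 1)).map (fun i => q i (2 * r))).tail ++
            ((List.range (2 * r + 1)).map (fun s => q (2 * r) (2 * r - s))).tail ++
            ((List.range (2 * r + 1)).map (fun i => q (2 * r - i) 0)).tail) := by
        rw [wconcat, wconcat, wconcat, eL, eT, eR, eB]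
      rw [ew]
      exact main
end

section
/- Let G be a finite connected undirected graph in which every cycle of even length is square-decomposable (i.e. the even square group of G is trivial). Then for any edge (t0, t1) of G, the two-dimensional homshift X²_G has the strip-gluing property relative to the (t0, t1)-chessboard configuration. -/
variable {V : Type}

/-- The shift action on configurations: `(shiftc n x) j = x (n + j)`. -/
def shiftc {A : Type} {d : ℕ} (n : Fin d → ℤ) (x : (Fin d → ℤ) → A) : (Fin d → ℤ) → A :=
  fun j => x (n + j)

/-- The product topology on the full shift, the alphabet being discrete. -/
def cfgTop (A : Type) (d : ℕ) : TopologicalSpace ((Fin d → ℤ) → A) :=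
  @Pi.topologicalSpace (Fin d → ℤ) (fun _ => A) (fun _ => ⊥)

/-- Two configurations differ at only finitely many coordinates. -/
def FinDiff {A ι : Type} (x y : ι → A) : Prop := {n : ι | x n ≠ y n}.Finite

/-- A configuration of the `d`-dimensional homshift on `G`: a graph homomorphism
from the grid `ℤ^d` to `G`. -/
def IsHomConfig (G : V → V → Prop) (d : ℕ) (x : (Fin d → ℤ) → V) : Prop :=
  ∀ u v : Fin d → ℤ, (∑ i, |u i - v i|) = 1 → G (x u) (x v)

/-- The `d`-dimensional homshift on `G`, as a set of configurations. -/
def homSet (G : V → V → Prop) (d : ℕ) : Set ((Fin d → ℤ) → V) := {x | IsHomConfig G d x}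

/-- The `(t0, t1)`-chessboard configuration. -/
def chessboard (t0 t1 : V) (d : ℕ) : (Fin d → ℤ) → V :=
  fun n => if Even (∑ i, n i) then t0 else t1

/-- The strip-gluing property of a two-dimensional subshift `X` relative to `x''`:
configurations of the Gibbs class of `x''` agreeing on a box `⟦-r,r⟧²` can be glued
along the horizontal strip `ℤ × ⟦-r,r⟧`. -/
def StripGluingOn {A : Type} (X : Set ((Fin 2 → ℤ) → A)) (x'' : (Fin 2 → ℤ) → A) : Prop :=
  ∀ (r : ℕ) (x x' : (Fin 2 → ℤ) → A), x ∈ X → x' ∈ X → FinDiff x x'' → FinDiff x' x'' →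
    (∀ n : Fin 2 → ℤ, |n 0| ≤ (r : ℤ) → |n 1| ≤ (r : ℤ) → x n = x' n) →
    ∃ y ∈ X, FinDiff y x'' ∧
      (∀ n : Fin 2 → ℤ, -(r : ℤ) ≤ n 0 → -(r : ℤ) ≤ n 1 → n 1 ≤ (r : ℤ) → y n = x n) ∧
      (∀ n : Fin 2 → ℤ, n 0 ≤ (r : ℤ) → -(r : ℤ) ≤ n 1 → n 1 ≤ (r : ℤ) → y n = x' n)

namespace SGP

variable {V : Type}

def chessRow (t0 t1 : V) (h : ℤ) : ℤ → V := fun i => if Even (i + h) then t0 else t1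

def RowOK (G : V → V → Prop) (f : ℤ → V) : Prop := ∀ i, G (f i) (f (i + 1))

def RowAdj (G : V → V → Prop) (f g : ℤ → V) : Prop := ∀ i, G (f i) (g i)

def ChainTo (G : V → V → Prop) (t0 t1 : V) (h : ℤ) (f : ℤ → V) : Prop :=
  ∃ (k : ℕ) (F : ℕ → ℤ → V), F 0 = f ∧ (∀ j, RowOK G (F j)) ∧
    (∀ j : ℕ, FinDiff (F j) (chessRow t0 t1 (h + j))) ∧
    (∀ j, RowAdj G (F j) (F (j + 1))) ∧
    (∀ j, k ≤ j → F j = chessRow t0 t1 (h + j))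

variable {G : V → V → Prop} {t0 t1 : V}

lemma chessRow_congr (t0 t1 : V) {h h' i i' : ℤ} (hp : Even (i + h - i' - h')) :
    chessRow t0 t1 h i = chessRow t0 t1 h' i' := by
  unfold chessRow
  have hiff : Even (i + h) ↔ Even (i' + h') := by
    obtain ⟨c, hc⟩ := hp
    constructor
    · rintro ⟨d, hd⟩; exact ⟨d - c, by omega⟩
    · rintro ⟨d, hd⟩; exact ⟨d + c, by omega⟩
  by_cases hE : Even (i + h)
  · rw [if_pos hE, if_pos (hiff.mp hE)]
  · rw [if_neg hE, if_neg fun hE' => hE (hiff.mpr hE')]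

lemma chessRow_adj (hsym : Symmetric G) (he : G t0 t1) {h h' i i' : ℤ}
    (hp : ¬ Even (i + h - i' - h')) :
    G (chessRow t0 t1 h i) (chessRow t0 t1 h' i') := by
  unfold chessRow
  by_cases hE : Even (i + h)
  · have h2 : ¬ Even (i' + h') := by
      rw [Int.even_iff] at hE hp ⊢; omega
    rw [if_pos hE, if_neg h2]; exact he
  · have h2 : Even (i' + h') := by
      rw [Int.even_iff] at hE hp ⊢; omega
    rw [if_neg hE, if_pos h2]; exact hsym he

lemma finDiff_of_bound {f g : ℤ → V} (N : ℕ) (hb : ∀ i : ℤ, N ≤ i.natAbs → f i = g i) :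
    FinDiff f g := by
  apply Set.Finite.subset (Set.finite_Icc (-(N : ℤ)) N)
  intro i hi
  simp only [Set.mem_setOf_eq] at hi
  simp only [Set.mem_Icc]
  by_contra hc
  exact hi (hb i (by omega))

lemma bound_of_finDiff {f g : ℤ → V} (hfd : FinDiff f g) :
    ∃ N : ℕ, ∀ i : ℤ, N ≤ i.natAbs → f i = g i := by
  classical
  refine ⟨hfd.toFinset.sup (fun i => i.natAbs) + 1, fun i hi => ?_⟩
  by_contra hne
  have hmem : i ∈ hfd.toFinset := by
    exact (Set.Finite.mem_toFinset (s := {n | f n ≠ g n}) hfd).mpr hne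
  have h2 : i.natAbs ≤ hfd.toFinset.sup (fun i => i.natAbs) := by
    simpa using Finset.le_sup (f := fun i : ℤ => i.natAbs) hmem
  omega

lemma finDiff_self (f : ℤ → V) : FinDiff f f := by
  have : {n : ℤ | f n ≠ f n} = ∅ := by ext n; simp
  rw [FinDiff, this]; exact Set.finite_empty

lemma rowAdj_symm (hsym : Symmetric G) {f g : ℤ → V} (h : RowAdj G f g) : RowAdj G g f :=
  fun i => hsym (h i)

lemma chessRow_rowOK (hsym : Symmetric G) (he : G t0 t1) (h : ℤ) :
    RowOK G (chessRow t0 t1 h) :=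
  fun i => chessRow_adj hsym he (by rw [Int.even_iff]; omega)

lemma chainTo_chess (hsym : Symmetric G) (he : G t0 t1) (h : ℤ) :
    ChainTo G t0 t1 h (chessRow t0 t1 h) := by
  refine ⟨0, fun j => chessRow t0 t1 (h + j), by norm_num, fun j => chessRow_rowOK hsym he _,
    fun j => ?_, fun j i => chessRow_adj hsym he ?_, fun j _ => rfl⟩
  · exact finDiff_self _
  · push_cast; rw [Int.even_iff]; omega

lemma chainTo_congr {h h' : ℤ} (hp : Even (h - h')) {f : ℤ → V}
    (hc : ChainTo G t0 t1 h f) : ChainTo G t0 t1 h' f := by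
  obtain ⟨k, F, h0, hrow, hfd, hadj, htail⟩ := hc
  have hcr : ∀ j : ℕ, chessRow t0 t1 (h + j) = chessRow t0 t1 (h' + j) := fun j =>
    funext fun i => chessRow_congr t0 t1 (by obtain ⟨c, hc'⟩ := hp; exact ⟨c, by omega⟩)
  exact ⟨k, F, h0, hrow, fun j => (hcr j) ▸ hfd j, hadj, fun j hj => (hcr j) ▸ htail j hj⟩

lemma chainTo_prepend2 {f m g : ℤ → V} {h : ℤ}
    (hmrow : RowOK G m) (hfm : RowAdj G f m) (hmg : RowAdj G m g)
    (hfrow : RowOK G f) (hffd : FinDiff f (chessRow t0 t1 h))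
    (hmfd : FinDiff m (chessRow t0 t1 (h + 1)))
    (hg : ChainTo G t0 t1 h g) : ChainTo G t0 t1 h f := by
  obtain ⟨k, F, h0, hrow, hfd, hadj, htail⟩ := hg
  have hcr : ∀ j : ℕ, chessRow t0 t1 (h + j) = chessRow t0 t1 (h + (j + 2 : ℕ)) := fun j =>
    funext fun i => chessRow_congr t0 t1 (by push_cast; exact ⟨-1, by ring⟩)
  refine ⟨k + 2, fun j => match j with
    | 0 => f
    | 1 => m
    | (j + 2) => F j, rfl, ?_, ?_, ?_, ?_⟩
  · rintro (_ | _ | j)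
    · exact hfrow
    · exact hmrow
    · exact hrow j
  · rintro (_ | _ | j)
    · simpa using hffd
    · simpa using hmfd
    · exact (hcr j) ▸ hfd j
  · rintro (_ | _ | j)
    · exact hfm
    · show RowAdj G m (F 0); rw [h0]; exact hmg
    · exact hadj j
  · intro j hj
    obtain ⟨j', rfl⟩ : ∃ j', j = j' + 2 := ⟨j - 2, by omega⟩
    show F j' = _
    rw [htail j' (by omega), hcr j']

section Pleat
variable {G : V → V → Prop} {t0 t1 : V} {f : ℤ → V} {s : ℤ} {v x y z : V} {h : ℤ}

def pleat (f : ℤ → V) (s : ℤ) (v : V) : ℤ → V :=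
  fun i => if i ≤ s then f i else if i = s + 1 then v else f (i - 2)

def pleatMid (f : ℤ → V) (s : ℤ) : ℤ → V :=
  fun i => if i ≤ s then f (i + 1) else if i = s + 1 then f s else f (i - 1)

def sqIns (f : ℤ → V) (s : ℤ) (x y z : V) : ℤ → V :=
  fun i => if i ≤ s then f i else if i = s + 1 then x else if i = s + 2 then y
           else if i = s + 3 then z else f (i - 4)

def sqMid (f : ℤ → V) (s : ℤ) (x : V) : ℤ → V :=
  fun i => if i ≤ s then f (i + 1) else if i = s + 1 then f s else if i = s + 2 then x
           else if i = s + 3 then f s else f (i - 3)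

lemma pleat_rowOK (hsym : Symmetric G) (hf : RowOK G f) (hv : G (f s) v) :
    RowOK G (pleat f s v) := by
  intro i
  unfold pleat
  by_cases h1 : i ≤ s - 1
  · rw [if_pos (by omega), if_pos (by omega)]; exact hf i
  by_cases h2 : i = s
  · rw [h2]
    rw [if_pos le_rfl, if_neg (by omega), if_pos rfl]; exact hv
  by_cases h3 : i = s + 1
  · rw [h3]
    rw [if_neg (by omega), if_pos rfl, if_neg (by omega), if_neg (by omega)]
    have he2 : s + 1 + 1 - 2 = s := by ring
    rw [he2]; exact hsym hv
  · rw [if_neg (by omega), if_neg (by omega), if_neg (by omega), if_neg (by omega)]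
    have he2 : i + 1 - 2 = (i - 2) + 1 := by ring
    rw [he2]; exact hf (i - 2)

lemma pleatMid_rowOK (hsym : Symmetric G) (hf : RowOK G f) : RowOK G (pleatMid f s) := by
  intro i
  unfold pleatMid
  by_cases h1 : i ≤ s - 1
  · rw [if_pos (by omega), if_pos (by omega)]; exact hf (i + 1)
  by_cases h2 : i = s
  · rw [h2]
    rw [if_pos le_rfl, if_neg (by omega), if_pos rfl]; exact hsym (hf s)
  by_cases h3 : i = s + 1
  · rw [h3]
    rw [if_neg (by omega), if_pos rfl, if_neg (by omega), if_neg (by omega)]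
    have he2 : s + 1 + 1 - 1 = s + 1 := by ring
    rw [he2]; exact hf s
  · rw [if_neg (by omega), if_neg (by omega), if_neg (by omega), if_neg (by omega)]
    have he2 : i + 1 - 1 = (i - 1) + 1 := by ring
    rw [he2]; exact hf (i - 1)

lemma rowAdj_pleat_pleatMid (hsym : Symmetric G) (hf : RowOK G f) (hv : G (f s) v) :
    RowAdj G (pleat f s v) (pleatMid f s) := by
  intro i
  unfold pleat pleatMid
  by_cases h1 : i ≤ s
  · rw [if_pos h1, if_pos h1]; exact hf i
  by_cases h2 : i = s + 1
  · rw [h2]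
    rw [if_neg (by omega), if_pos rfl, if_neg (by omega), if_pos rfl]; exact hsym hv
  · rw [if_neg h1, if_neg h2, if_neg h1, if_neg h2]
    have he2 : i - 2 = (i - 2) := rfl
    have he3 : i - 1 = (i - 2) + 1 := by ring
    rw [he3]; exact hf (i - 2)

lemma rowAdj_pleatMid_f (hsym : Symmetric G) (hf : RowOK G f) :
    RowAdj G (pleatMid f s) f := by
  intro i
  unfold pleatMid
  by_cases h1 : i ≤ s
  · rw [if_pos h1]; exact hsym (hf i)
  by_cases h2 : i = s + 1
  · rw [h2]
    rw [if_neg (by omega), if_pos rfl]; exact hf s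
  · rw [if_neg h1, if_neg h2]
    have he3 : i = (i - 1) + 1 := by ring
    conv_rhs => rw [he3]
    exact hf (i - 1)

lemma sqIns_rowOK (hsym : Symmetric G) (hf : RowOK G f)
    (h1 : G (f s) x) (h2 : G x y) (h3 : G y z) (h4 : G z (f s)) :
    RowOK G (sqIns f s x y z) := by
  intro i
  unfold sqIns
  by_cases c1 : i ≤ s - 1
  · rw [if_pos (by omega), if_pos (by omega)]; exact hf i
  by_cases c2 : i = s
  · rw [c2]
    rw [if_pos le_rfl, if_neg (by omega), if_pos rfl]; exact h1
  by_cases c3 : i = s + 1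
  · rw [c3]
    rw [show s + 1 + 1 = s + 2 from by ring]
    rw [if_neg (by omega), if_pos rfl, if_neg (by omega), if_neg (by omega), if_pos rfl]
    exact h2
  by_cases c4 : i = s + 2
  · rw [c4]
    rw [show s + 2 + 1 = s + 3 from by ring]
    rw [if_neg (by omega), if_neg (by omega), if_pos rfl, if_neg (by omega), if_neg (by omega),
      if_neg (by omega), if_pos rfl]
    exact h3
  by_cases c5 : i = s + 3
  · rw [c5]
    rw [show s + 3 + 1 = s + 4 from by ring]
    rw [if_neg (by omega), if_neg (by omega), if_neg (by omega), if_pos rfl, if_neg (by omega),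
      if_neg (by omega), if_neg (by omega), if_neg (by omega)]
    rw [show s + 4 - 4 = s from by ring]
    exact h4
  · rw [if_neg (by omega), if_neg (by omega), if_neg (by omega), if_neg (by omega),
      if_neg (by omega), if_neg (by omega), if_neg (by omega), if_neg (by omega)]
    rw [show i + 1 - 4 = (i - 4) + 1 from by ring]
    exact hf (i - 4)

lemma sqMid_rowOK (hsym : Symmetric G) (hf : RowOK G f) (h1 : G (f s) x) :
    RowOK G (sqMid f s x) := by
  intro i
  unfold sqMid
  by_cases c1 : i ≤ s - 1
  · rw [if_pos (by omega), if_pos (by omega)]; exact hf (i + 1)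
  by_cases c2 : i = s
  · rw [c2]
    rw [if_pos le_rfl, if_neg (by omega), if_pos rfl]; exact hsym (hf s)
  by_cases c3 : i = s + 1
  · rw [c3]
    rw [show s + 1 + 1 = s + 2 from by ring]
    rw [if_neg (by omega), if_pos rfl, if_neg (by omega), if_neg (by omega), if_pos rfl]
    exact h1
  by_cases c4 : i = s + 2
  · rw [c4]
    rw [show s + 2 + 1 = s + 3 from by ring]
    rw [if_neg (by omega), if_neg (by omega), if_pos rfl, if_neg (by omega), if_neg (by omega),
      if_neg (by omega), if_pos rfl]
    exact hsym h1
  by_cases c5 : i = s + 3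
  · rw [c5]
    rw [show s + 3 + 1 = s + 4 from by ring]
    rw [if_neg (by omega), if_neg (by omega), if_neg (by omega), if_pos rfl, if_neg (by omega),
      if_neg (by omega), if_neg (by omega), if_neg (by omega)]
    rw [show s + 4 - 3 = s + 1 from by ring]
    exact hf s
  · rw [if_neg (by omega), if_neg (by omega), if_neg (by omega), if_neg (by omega),
      if_neg (by omega), if_neg (by omega), if_neg (by omega), if_neg (by omega)]
    rw [show i + 1 - 3 = (i - 3) + 1 from by ring]
    exact hf (i - 3)

lemma rowAdj_sqIns_sqMid (hsym : Symmetric G) (hf : RowOK G f)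
    (h1 : G (f s) x) (h2 : G x y) (h3 : G y z) (h4 : G z (f s)) :
    RowAdj G (sqIns f s x y z) (sqMid f s x) := by
  intro i
  unfold sqIns sqMid
  by_cases c1 : i ≤ s
  · rw [if_pos c1, if_pos c1]; exact hf i
  by_cases c2 : i = s + 1
  · rw [c2]
    rw [if_neg (by omega), if_pos rfl, if_neg (by omega), if_pos rfl]; exact hsym h1
  by_cases c3 : i = s + 2
  · rw [c3]
    rw [if_neg (by omega), if_neg (by omega), if_pos rfl, if_neg (by omega), if_neg (by omega),
      if_pos rfl]
    exact hsym h2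
  by_cases c4 : i = s + 3
  · rw [c4]
    rw [if_neg (by omega), if_neg (by omega), if_neg (by omega), if_pos rfl, if_neg (by omega),
      if_neg (by omega), if_neg (by omega), if_pos rfl]
    exact h4
  · rw [if_neg (by omega), if_neg (by omega), if_neg (by omega), if_neg (by omega),
      if_neg (by omega), if_neg (by omega), if_neg (by omega), if_neg (by omega)]
    have he2 : i - 3 = (i - 4) + 1 := by ring
    rw [he2]; exact hf (i - 4)

lemma rowAdj_sqMid_pleat (hsym : Symmetric G) (hf : RowOK G f) (h1 : G (f s) x) :
    RowAdj G (sqMid f s x) (pleat f s x) := by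
  intro i
  unfold sqMid pleat
  by_cases c1 : i ≤ s
  · rw [if_pos c1, if_pos c1]; exact hsym (hf i)
  by_cases c2 : i = s + 1
  · rw [c2]
    rw [if_neg (by omega), if_pos rfl, if_neg (by omega), if_pos rfl]; exact h1
  by_cases c3 : i = s + 2
  · rw [c3]
    rw [if_neg (by omega), if_neg (by omega), if_pos rfl, if_neg (by omega), if_neg (by omega)]
    rw [show s + 2 - 2 = s from by ring]
    exact hsym h1
  by_cases c4 : i = s + 3
  · rw [c4]
    rw [if_neg (by omega), if_neg (by omega), if_neg (by omega), if_pos rfl, if_neg (by omega),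
      if_neg (by omega)]
    rw [show s + 3 - 2 = s + 1 from by ring]
    exact hf s
  · rw [if_neg (by omega), if_neg (by omega), if_neg (by omega), if_neg (by omega),
      if_neg (by omega), if_neg (by omega)]
    rw [show i - 2 = (i - 3) + 1 from by ring]
    exact hf (i - 3)

lemma pleat_finDiff (hfd : FinDiff f (chessRow t0 t1 h)) :
    FinDiff (pleat f s v) (chessRow t0 t1 h) := by
  obtain ⟨N, hN⟩ := bound_of_finDiff hfd
  apply finDiff_of_bound (N + s.natAbs + 5)
  intro i hi
  unfold pleat
  by_cases c1 : i ≤ s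
  · rw [if_pos c1]; exact hN i (by omega)
  · rw [if_neg c1, if_neg (by omega)]
    rw [hN (i - 2) (by omega)]
    exact chessRow_congr t0 t1 ⟨-1, by ring⟩

lemma pleatMid_finDiff (hfd : FinDiff f (chessRow t0 t1 h)) :
    FinDiff (pleatMid f s) (chessRow t0 t1 (h + 1)) := by
  obtain ⟨N, hN⟩ := bound_of_finDiff hfd
  apply finDiff_of_bound (N + s.natAbs + 5)
  intro i hi
  unfold pleatMid
  by_cases c1 : i ≤ s
  · rw [if_pos c1, hN (i + 1) (by omega)]
    exact chessRow_congr t0 t1 ⟨0, by ring⟩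
  · rw [if_neg c1, if_neg (by omega), hN (i - 1) (by omega)]
    exact chessRow_congr t0 t1 ⟨-1, by ring⟩

lemma sqIns_finDiff (hfd : FinDiff f (chessRow t0 t1 h)) :
    FinDiff (sqIns f s x y z) (chessRow t0 t1 h) := by
  obtain ⟨N, hN⟩ := bound_of_finDiff hfd
  apply finDiff_of_bound (N + s.natAbs + 9)
  intro i hi
  unfold sqIns
  by_cases c1 : i ≤ s
  · rw [if_pos c1]; exact hN i (by omega)
  · rw [if_neg c1, if_neg (by omega), if_neg (by omega), if_neg (by omega),
      hN (i - 4) (by omega)]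
    exact chessRow_congr t0 t1 ⟨-2, by ring⟩

lemma sqMid_finDiff (hfd : FinDiff f (chessRow t0 t1 h)) :
    FinDiff (sqMid f s x) (chessRow t0 t1 (h + 1)) := by
  obtain ⟨N, hN⟩ := bound_of_finDiff hfd
  apply finDiff_of_bound (N + s.natAbs + 9)
  intro i hi
  unfold sqMid
  by_cases c1 : i ≤ s
  · rw [if_pos c1, hN (i + 1) (by omega)]
    exact chessRow_congr t0 t1 ⟨0, by ring⟩
  · rw [if_neg c1, if_neg (by omega), if_neg (by omega), if_neg (by omega),
      hN (i - 3) (by omega)]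
    exact chessRow_congr t0 t1 ⟨-2, by ring⟩

lemma pleat_transport (hsym : Symmetric G) (hfrow : RowOK G f)
    (hfd : FinDiff f (chessRow t0 t1 h)) (hv : G (f s) v) :
    ChainTo G t0 t1 h f ↔ ChainTo G t0 t1 h (pleat f s v) := by
  constructor
  · intro hc
    exact chainTo_prepend2 (pleatMid_rowOK hsym hfrow)
      (rowAdj_pleat_pleatMid hsym hfrow hv) (rowAdj_pleatMid_f hsym hfrow)
      (pleat_rowOK hsym hfrow hv) (pleat_finDiff hfd) (pleatMid_finDiff hfd) hc
  · intro hc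
    exact chainTo_prepend2 (pleatMid_rowOK hsym hfrow)
      (rowAdj_symm hsym (rowAdj_pleatMid_f hsym hfrow))
      (rowAdj_symm hsym (rowAdj_pleat_pleatMid hsym hfrow hv))
      hfrow hfd (pleatMid_finDiff hfd) hc

lemma sqIns_transport (hsym : Symmetric G) (hfrow : RowOK G f)
    (hfd : FinDiff f (chessRow t0 t1 h))
    (h1 : G (f s) x) (h2 : G x y) (h3 : G y z) (h4 : G z (f s)) :
    ChainTo G t0 t1 h f ↔ ChainTo G t0 t1 h (sqIns f s x y z) := by
  have step1 : ChainTo G t0 t1 h f ↔ ChainTo G t0 t1 h (pleat f s x) :=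
    pleat_transport hsym hfrow hfd h1
  have step2 : ChainTo G t0 t1 h (pleat f s x) ↔ ChainTo G t0 t1 h (sqIns f s x y z) := by
    constructor
    · intro hc
      exact chainTo_prepend2 (sqMid_rowOK hsym hfrow h1)
        (rowAdj_sqIns_sqMid hsym hfrow h1 h2 h3 h4)
        (rowAdj_sqMid_pleat hsym hfrow h1)
        (sqIns_rowOK hsym hfrow h1 h2 h3 h4) (sqIns_finDiff hfd) (sqMid_finDiff hfd) hc
    · intro hc
      exact chainTo_prepend2 (sqMid_rowOK hsym hfrow h1)
        (rowAdj_symm hsym (rowAdj_sqMid_pleat hsym hfrow h1))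
        (rowAdj_symm hsym (rowAdj_sqIns_sqMid hsym hfrow h1 h2 h3 h4))
        (pleat_rowOK hsym hfrow h1) (pleat_finDiff hfd) (sqMid_finDiff hfd) hc
  exact step1.trans step2

end Pleat
section Lists
variable {G : V → V → Prop} {t0 t1 : V}

lemma getLast?_append_cons (l₁ : List V) (x : V) (l₂ : List V) :
    (l₁ ++ x :: l₂).getLast? = (x :: l₂).getLast? := by
  induction l₁ with
  | nil => rfl
  | cons a tl ih =>
    rw [List.cons_append]
    cases htl : tl ++ x :: l₂ with
    | nil => exact absurd htl (by simp)
    | cons b M =>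
      rw [List.getLast?_cons_cons, ← htl, ih]

lemma head?_append_cons (l₁ : List V) (x : V) (l₂ l₂' : List V) :
    (l₁ ++ x :: l₂).head? = (l₁ ++ x :: l₂').head? := by
  cases l₁ <;> simp

lemma getD_at_len (l₁ : List V) (u : V) (l₂ : List V) (a : V) :
    (l₁ ++ u :: l₂).getD l₁.length a = u := by
  rw [List.getD_append_right _ _ _ _ le_rfl]
  simp

lemma getD_insert2 (l₁ l₂ : List V) (u v a : V) (j : ℕ) :
    (l₁ ++ u :: v :: u :: l₂).getD j a =
      if j ≤ l₁.length then (l₁ ++ u :: l₂).getD j a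
      else if j = l₁.length + 1 then v
      else (l₁ ++ u :: l₂).getD (j - 2) a := by
  rcases lt_or_ge j l₁.length with hj | hj
  · rw [if_pos (le_of_lt hj), List.getD_append _ _ _ _ hj, List.getD_append _ _ _ _ hj]
  · obtain ⟨m, rfl⟩ : ∃ m, j = l₁.length + m := ⟨j - l₁.length, by omega⟩
    rw [List.getD_append_right _ _ _ _ (by omega)]
    rw [show l₁.length + m - l₁.length = m from by omega]
    match m with
    | 0 =>
      rw [if_pos (by omega), show l₁.length + 0 = l₁.length from by omega, getD_at_len]
      rfl
    | 1 => rw [if_neg (by omega), if_pos (by omega)]; rfl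
    | (m + 2) =>
      rw [if_neg (by omega), if_neg (by omega),
        show l₁.length + (m + 2) - 2 = l₁.length + m from by omega,
        List.getD_append_right _ _ _ _ (by omega),
        show l₁.length + m - l₁.length = m from by omega]
      rfl

lemma getD_insert4 (l₁ l₂ : List V) (u x y z a : V) (j : ℕ) :
    (l₁ ++ u :: x :: y :: z :: u :: l₂).getD j a =
      if j ≤ l₁.length then (l₁ ++ u :: l₂).getD j a
      else if j = l₁.length + 1 then x
      else if j = l₁.length + 2 then y
      else if j = l₁.length + 3 then z
      else (l₁ ++ u :: l₂).getD (j - 4) a := by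
  rcases lt_or_ge j l₁.length with hj | hj
  · rw [if_pos (le_of_lt hj), List.getD_append _ _ _ _ hj, List.getD_append _ _ _ _ hj]
  · obtain ⟨m, rfl⟩ : ∃ m, j = l₁.length + m := ⟨j - l₁.length, by omega⟩
    rw [List.getD_append_right _ _ _ _ (by omega)]
    rw [show l₁.length + m - l₁.length = m from by omega]
    match m with
    | 0 =>
      rw [if_pos (by omega), show l₁.length + 0 = l₁.length from by omega, getD_at_len]
      rfl
    | 1 => rw [if_neg (by omega), if_pos (by omega)]; rfl
    | 2 => rw [if_neg (by omega), if_neg (by omega), if_pos (by omega)]; rfl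
    | 3 =>
      rw [if_neg (by omega), if_neg (by omega), if_neg (by omega), if_pos (by omega)]
      rfl
    | (m + 4) =>
      rw [if_neg (by omega), if_neg (by omega), if_neg (by omega), if_neg (by omega),
        show l₁.length + (m + 4) - 4 = l₁.length + m from by omega,
        List.getD_append_right _ _ _ _ (by omega),
        show l₁.length + m - l₁.length = m from by omega]
      rfl

lemma chain'_insert2 {l₁ l₂ : List V} {u v : V} (huv : G u v) (hvu : G v u) :
    List.Chain' G (l₁ ++ u :: v :: u :: l₂) ↔ List.Chain' G (l₁ ++ u :: l₂) := by
  unfold List.Chain'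
  rw [List.isChain_append, List.isChain_append]
  simp only [List.head?_cons, List.isChain_cons_cons]
  tauto

lemma chain'_insert4 {l₁ l₂ : List V} {u x y z : V}
    (h1 : G u x) (h2 : G x y) (h3 : G y z) (h4 : G z u) :
    List.Chain' G (l₁ ++ u :: x :: y :: z :: u :: l₂) ↔ List.Chain' G (l₁ ++ u :: l₂) := by
  unfold List.Chain'
  rw [List.isChain_append, List.isChain_append]
  simp only [List.head?_cons, List.isChain_cons_cons]
  tauto

lemma head?_getD {q : List V} {a : V} (h : q.head? = some a) : q.getD 0 a = a := by
  cases q with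
  | nil => simp at h
  | cons b l => simp at h; simp [h]

lemma getLast?_getD {q : List V} {a : V} (h : q.getLast? = some a) :
    q.getD (q.length - 1) a = a := by
  induction q with
  | nil => simp at h
  | cons b l ih =>
    cases l with
    | nil => simp at h; simp [h]
    | cons c m =>
      rw [List.getLast?_cons_cons] at h
      have := ih h
      have e : (b :: c :: m).length - 1 = ((c :: m).length - 1) + 1 := by
        simp only [List.length_cons]; omega
      rw [e, List.getD_cons_succ]
      exact this

end Lists

section Rrow
variable {G : V → V → Prop} (t0 t1 : V) (N : ℕ) (h : ℤ) (a : V)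

def Rrow (q : List V) : ℤ → V :=
  fun i => if -(N:ℤ) ≤ i ∧ i < -(N:ℤ) + q.length then q.getD (i + N).toNat a
           else chessRow t0 t1 h i

variable {t0 t1 N h a}

def QW (G : V → V → Prop) (a : V) (q : List V) : Prop :=
  q ≠ [] ∧ List.Chain' G q ∧ q.head? = some a ∧ q.getLast? = some a ∧ Odd q.length

lemma Rrow_rowOK (hsym : Symmetric G) (he : G t0 t1)
    (ha : a = chessRow t0 t1 h (-(N:ℤ))) {q : List V} (hq : QW G a q) :
    RowOK G (Rrow t0 t1 N h a q) := by
  obtain ⟨hne, hchain, hhead, hlast, hodd⟩ := hq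
  have hlen : 1 ≤ q.length := List.length_pos_iff.mpr hne
  have hget0 : q.getD 0 a = a := head?_getD hhead
  have hgetlast : q.getD (q.length - 1) a = a := getLast?_getD hlast
  intro i
  unfold Rrow
  by_cases w1 : -(N:ℤ) ≤ i ∧ i < -(N:ℤ) + q.length
  · rw [if_pos w1]
    by_cases w2 : -(N:ℤ) ≤ i + 1 ∧ i + 1 < -(N:ℤ) + q.length
    · rw [if_pos w2]
      have hj1 : (i + N).toNat < q.length - 1 := by omega
      have hj2 : (i + 1 + N).toNat = (i + N).toNat + 1 := by omega
      rw [hj2, List.getD_eq_getElem _ a (by omega), List.getD_eq_getElem _ a (by omega)]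
      have := List.isChain_iff_getElem.mp hchain (i + N).toNat (by omega)
      simpa using this
    · -- i is the last window position
      rw [if_neg w2]
      have hi : (i + N).toNat = q.length - 1 := by omega
      rw [List.getD_eq_getElem _ a (by omega)]
      have : q[(i + N).toNat] = a := by
        rw [← List.getD_eq_getElem _ a (by omega), hi, hgetlast]
      rw [this, ha]
      apply chessRow_adj hsym he
      have : i = -(N:ℤ) + q.length - 1 := by omega
      obtain ⟨c, hc⟩ := hodd
      rw [Int.even_iff]
      omega
  · rw [if_neg w1]
    by_cases w2 : -(N:ℤ) ≤ i + 1 ∧ i + 1 < -(N:ℤ) + q.length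
    · -- i + 1 = -N is the first window position
      rw [if_pos w2]
      have hi : (i + 1 + N).toNat = 0 := by omega
      rw [hi, hget0, ha]
      apply chessRow_adj hsym he
      have : i + 1 = -(N:ℤ) := by omega
      rw [Int.even_iff]
      omega
    · rw [if_neg w2]
      apply chessRow_adj hsym he
      rw [Int.even_iff]
      omega

lemma Rrow_finDiff {q : List V} :
    FinDiff (Rrow t0 t1 N h a q) (chessRow t0 t1 h) := by
  apply finDiff_of_bound (N + q.length)
  intro i hi
  unfold Rrow
  rw [if_neg (by omega)]

lemma Rrow_singleton (ha : a = chessRow t0 t1 h (-(N:ℤ))) :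
    Rrow t0 t1 N h a [a] = chessRow t0 t1 h := by
  funext i
  unfold Rrow
  by_cases w : -(N:ℤ) ≤ i ∧ i < -(N:ℤ) + ([a] : List V).length
  · rw [if_pos w]
    have : i = -(N:ℤ) := by simp at w; omega
    have h0 : (i + N).toNat = 0 := by omega
    rw [h0, this, ha]
    rfl
  · rw [if_neg w]

lemma Rrow_window {q : List V} {j : ℕ} (hj : j < q.length) :
    Rrow t0 t1 N h a q (-(N:ℤ) + j) = q.getD j a := by
  unfold Rrow
  rw [if_pos (by constructor <;> omega)]
  congr 1
  omega

lemma Rrow_insert2 (l₁ l₂ : List V) (u v : V) :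
    Rrow t0 t1 N h a (l₁ ++ u :: v :: u :: l₂)
      = pleat (Rrow t0 t1 N h a (l₁ ++ u :: l₂)) (-(N:ℤ) + l₁.length) v := by
  funext i
  set q := l₁ ++ u :: l₂ with hqdef
  set q' := l₁ ++ u :: v :: u :: l₂ with hq'def
  have hlq : q.length = l₁.length + l₂.length + 1 := by simp [hqdef]; omega
  have hlq' : q'.length = l₁.length + l₂.length + 3 := by simp [hq'def]; omega
  have hgetD : ∀ j : ℕ, q'.getD j a =
      if j ≤ l₁.length then q.getD j a
      else if j = l₁.length + 1 then v
      else q.getD (j - 2) a := fun j => getD_insert2 l₁ l₂ u v a j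
  unfold pleat Rrow
  by_cases c1 : i ≤ -(N:ℤ) + l₁.length
  · rw [if_pos c1]
    by_cases w : -(N:ℤ) ≤ i
    · rw [if_pos (by constructor <;> omega), if_pos (by constructor <;> omega), hgetD,
        if_pos (by omega)]
    · rw [if_neg (by omega), if_neg (by omega)]
  by_cases c2 : i = -(N:ℤ) + l₁.length + 1
  · rw [if_neg c1, if_pos c2]
    rw [if_pos (by constructor <;> omega), hgetD, if_neg (by omega), if_pos (by omega)]
  · rw [if_neg c1, if_neg c2]
    by_cases w : i - 2 < -(N:ℤ) + q.length
    · rw [if_pos (by constructor <;> omega), if_pos (by constructor <;> omega), hgetD,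
        if_neg (by omega), if_neg (by omega)]
      congr 1
      omega
    · rw [if_neg (by omega), if_neg (by omega)]
      exact chessRow_congr t0 t1 ⟨1, by ring⟩

lemma Rrow_insert4 (l₁ l₂ : List V) (u x y z : V) :
    Rrow t0 t1 N h a (l₁ ++ u :: x :: y :: z :: u :: l₂)
      = sqIns (Rrow t0 t1 N h a (l₁ ++ u :: l₂)) (-(N:ℤ) + l₁.length) x y z := by
  funext i
  set q := l₁ ++ u :: l₂ with hqdef
  set q' := l₁ ++ u :: x :: y :: z :: u :: l₂ with hq'def
  have hlq : q.length = l₁.length + l₂.length + 1 := by simp [hqdef]; omega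
  have hlq' : q'.length = l₁.length + l₂.length + 5 := by simp [hq'def]; omega
  have hgetD : ∀ j : ℕ, q'.getD j a =
      if j ≤ l₁.length then q.getD j a
      else if j = l₁.length + 1 then x
      else if j = l₁.length + 2 then y
      else if j = l₁.length + 3 then z
      else q.getD (j - 4) a := fun j => getD_insert4 l₁ l₂ u x y z a j
  unfold sqIns Rrow
  by_cases c1 : i ≤ -(N:ℤ) + l₁.length
  · rw [if_pos c1]
    by_cases w : -(N:ℤ) ≤ i
    · rw [if_pos (by constructor <;> omega), if_pos (by constructor <;> omega), hgetD,
        if_pos (by omega)]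
    · rw [if_neg (by omega), if_neg (by omega)]
  by_cases c2 : i = -(N:ℤ) + l₁.length + 1
  · rw [if_neg c1, if_pos c2]
    rw [if_pos (by constructor <;> omega), hgetD, if_neg (by omega), if_pos (by omega)]
  by_cases c3 : i = -(N:ℤ) + l₁.length + 2
  · rw [if_neg c1, if_neg c2, if_pos c3]
    rw [if_pos (by constructor <;> omega), hgetD, if_neg (by omega), if_neg (by omega),
      if_pos (by omega)]
  by_cases c4 : i = -(N:ℤ) + l₁.length + 3
  · rw [if_neg c1, if_neg c2, if_neg c3, if_pos c4]
    rw [if_pos (by constructor <;> omega), hgetD, if_neg (by omega), if_neg (by omega),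
      if_neg (by omega), if_pos (by omega)]
  · rw [if_neg c1, if_neg c2, if_neg c3, if_neg c4]
    by_cases w : i - 4 < -(N:ℤ) + q.length
    · rw [if_pos (by constructor <;> omega), if_pos (by constructor <;> omega), hgetD,
        if_neg (by omega), if_neg (by omega), if_neg (by omega), if_neg (by omega)]
      congr 1
      omega
    · rw [if_neg (by omega), if_neg (by omega)]
      exact chessRow_congr t0 t1 ⟨2, by ring⟩

end Rrow
section Induction
variable {G : V → V → Prop} {t0 t1 : V}

def QQ (G : V → V → Prop) (t0 t1 : V) (N : ℕ) (h : ℤ) (a : V) (q : List V) : Prop :=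
  QW G a q ∧ ChainTo G t0 t1 h (Rrow t0 t1 N h a q)

lemma qw_step {q q' : List V} {a : V} (hstep : SqStep G q q') : QW G a q ↔ QW G a q' := by
  cases hstep with
  | backtrack l₁ l₂ u v huv hvu =>
    unfold QW
    have h1 : (l₁ ++ u :: l₂) ≠ [] := by simp
    have h1' : (l₁ ++ u :: v :: u :: l₂) ≠ [] := by simp
    have h2 : List.Chain' G (l₁ ++ u :: v :: u :: l₂) ↔ List.Chain' G (l₁ ++ u :: l₂) :=
      chain'_insert2 huv hvu
    have h3 : (l₁ ++ u :: v :: u :: l₂).head? = (l₁ ++ u :: l₂).head? :=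
      (head?_append_cons l₁ u (v :: u :: l₂) l₂).symm ▸ rfl
    have h4 : (l₁ ++ u :: v :: u :: l₂).getLast? = (l₁ ++ u :: l₂).getLast? := by
      rw [getLast?_append_cons l₁ u l₂,
        show l₁ ++ u :: v :: u :: l₂ = (l₁ ++ [u, v]) ++ u :: l₂ from by simp,
        getLast?_append_cons]
    have h5 : (l₁ ++ u :: v :: u :: l₂).length = (l₁ ++ u :: l₂).length + 2 := by
      simp; omega
    rw [h2, h3, h4, h5]
    constructor
    · rintro ⟨_, hc, hh, hl, ho⟩
      exact ⟨h1', hc, hh, hl, by rw [Nat.odd_iff] at *; omega⟩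
    · rintro ⟨_, hc, hh, hl, ho⟩
      exact ⟨h1, hc, hh, hl, by rw [Nat.odd_iff] at *; omega⟩
  | square l₁ l₂ u x y z h1G h2G h3G h4G hne1 hne2 =>
    unfold QW
    have h1 : (l₁ ++ u :: l₂) ≠ [] := by simp
    have h1' : (l₁ ++ u :: x :: y :: z :: u :: l₂) ≠ [] := by simp
    have h2 : List.Chain' G (l₁ ++ u :: x :: y :: z :: u :: l₂) ↔
        List.Chain' G (l₁ ++ u :: l₂) := chain'_insert4 h1G h2G h3G h4G
    have h3 : (l₁ ++ u :: x :: y :: z :: u :: l₂).head? = (l₁ ++ u :: l₂).head? :=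
      head?_append_cons l₁ u (x :: y :: z :: u :: l₂) l₂
    have h4 : (l₁ ++ u :: x :: y :: z :: u :: l₂).getLast? = (l₁ ++ u :: l₂).getLast? := by
      rw [getLast?_append_cons l₁ u l₂,
        show l₁ ++ u :: x :: y :: z :: u :: l₂ = (l₁ ++ [u, x, y, z]) ++ u :: l₂ from by simp,
        getLast?_append_cons]
    have h5 : (l₁ ++ u :: x :: y :: z :: u :: l₂).length = (l₁ ++ u :: l₂).length + 4 := by
      simp; omega
    rw [h2, h3, h4, h5]
    constructor
    · rintro ⟨_, hc, hh, hl, ho⟩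
      exact ⟨h1', hc, hh, hl, by rw [Nat.odd_iff] at *; omega⟩
    · rintro ⟨_, hc, hh, hl, ho⟩
      exact ⟨h1, hc, hh, hl, by rw [Nat.odd_iff] at *; omega⟩

lemma qq_step (hsym : Symmetric G) (he : G t0 t1) {N : ℕ} {h : ℤ} {a : V}
    (ha : a = chessRow t0 t1 h (-(N:ℤ))) {q q' : List V} (hstep : SqStep G q q') :
    QQ G t0 t1 N h a q ↔ QQ G t0 t1 N h a q' := by
  have hqw : QW G a q ↔ QW G a q' := qw_step hstep
  have hct : QW G a q →
      (ChainTo G t0 t1 h (Rrow t0 t1 N h a q) ↔ ChainTo G t0 t1 h (Rrow t0 t1 N h a q')) := by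
    intro hq
    have hrow : RowOK G (Rrow t0 t1 N h a q) := Rrow_rowOK hsym he ha hq
    have hfd : FinDiff (Rrow t0 t1 N h a q) (chessRow t0 t1 h) := Rrow_finDiff
    cases hstep with
    | backtrack l₁ l₂ u v huv hvu =>
      rw [Rrow_insert2 l₁ l₂ u v]
      have hu : Rrow t0 t1 N h a (l₁ ++ u :: l₂) (-(N:ℤ) + l₁.length) = u := by
        rw [Rrow_window (by simp), getD_at_len]
      exact pleat_transport hsym hrow hfd (by rw [hu]; exact huv)
    | square l₁ l₂ u x y z h1G h2G h3G h4G hne1 hne2 =>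
      rw [Rrow_insert4 l₁ l₂ u x y z]
      have hu : Rrow t0 t1 N h a (l₁ ++ u :: l₂) (-(N:ℤ) + l₁.length) = u := by
        rw [Rrow_window (by simp), getD_at_len]
      exact sqIns_transport hsym hrow hfd (by rw [hu]; exact h1G) h2G h3G (by rw [hu]; exact h4G)
  constructor
  · rintro ⟨hw, hc⟩
    exact ⟨hqw.mp hw, (hct hw).mp hc⟩
  · rintro ⟨hw, hc⟩
    have hw' : QW G a q := hqw.mpr hw
    exact ⟨hw', (hct hw').mpr hc⟩

lemma qq_equiv (hsym : Symmetric G) (he : G t0 t1) {N : ℕ} {h : ℤ} {a : V}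
    (ha : a = chessRow t0 t1 h (-(N:ℤ))) {q q' : List V} (hse : SquareEquiv G q q') :
    QQ G t0 t1 N h a q ↔ QQ G t0 t1 N h a q' := by
  induction hse with
  | refl => exact Iff.rfl
  | tail _ hstep ih =>
    rcases hstep with hs | hs
    · exact ih.trans (qq_step hsym he ha hs)
    · exact ih.trans (qq_step hsym he ha hs).symm

end Induction

section MainRow
variable {G : V → V → Prop} {t0 t1 : V}

lemma chainTo_of_finDiff (hsym : Symmetric G) (he : G t0 t1)
    (hsq : ∀ p : List V, (p ≠ [] ∧ List.Chain' G p) ∧ p.head? = p.getLast? →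
      Even (p.length - 1) → ∃ a : V, p.head? = some a ∧ SquareEquiv G p [a])
    (h : ℤ) (f : ℤ → V) (hrow : RowOK G f) (hfd : FinDiff f (chessRow t0 t1 h)) :
    ChainTo G t0 t1 h f := by
  classical
  obtain ⟨N, hN⟩ := bound_of_finDiff hfd
  set a := f (-(N:ℤ)) with hadef
  have ha : a = chessRow t0 t1 h (-(N:ℤ)) := by
    rw [hadef]; exact hN _ (by omega)
  set q : List V := (List.range (4 * N + 1)).map (fun j : ℕ => f (-(N:ℤ) + (j:ℤ))) with hqdef
  have hlen : q.length = 4 * N + 1 := by simp [hqdef]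
  have hget : ∀ (j : ℕ) (hj : j < q.length), q[j] = f (-(N:ℤ) + j) := by
    intro j hj
    simp [hqdef]
  have hne : q ≠ [] := by
    intro hcon
    rw [hcon] at hlen
    simp at hlen
  have hchain : List.Chain' G q := by
    unfold List.Chain'
    rw [List.isChain_iff_getElem]
    intro i hi
    rw [hget i (by omega), hget (i+1) (by omega)]
    have e : -(N:ℤ) + (i + 1 : ℕ) = (-(N:ℤ) + i) + 1 := by push_cast; ring
    rw [e]
    exact hrow _
  have hhead : q.head? = some a := by
    rw [hqdef, List.range_succ_eq_map]
    simp [hadef]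
  have hlast : q.getLast? = some a := by
    have h1 : q.getLast? = some (f (-(N:ℤ) + (4 * N : ℕ))) := by
      rw [hqdef, List.range_succ, List.map_append]
      simp only [List.map_cons, List.map_nil]
      rw [getLast?_append_cons]
      rfl
    rw [h1]
    congr 1
    rw [hN _ (by omega), ha]
    exact chessRow_congr t0 t1 ⟨2 * N, by push_cast; ring⟩
  have hodd : Odd q.length := by rw [hlen]; exact ⟨2 * N, by ring⟩
  have hqw : QW G a q := ⟨hne, hchain, hhead, hlast, hodd⟩
  obtain ⟨a', ha'h, hequiv⟩ := hsq q ⟨⟨hne, hchain⟩, hhead.trans hlast.symm⟩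
    (by rw [hlen]; exact ⟨2 * N, by omega⟩)
  have haa : a' = a := by
    rw [hhead] at ha'h
    exact (Option.some_inj.mp ha'h).symm
  rw [haa] at hequiv
  have hRf : Rrow t0 t1 N h a q = f := by
    funext i
    unfold Rrow
    by_cases w : -(N:ℤ) ≤ i ∧ i < -(N:ℤ) + q.length
    · rw [if_pos w, List.getD_eq_getElem _ a (by omega), hget _ (by omega)]
      congr 1
      omega
    · rw [if_neg w]
      rw [hlen] at w
      exact (hN i (by omega)).symm
  have hQQa : QQ G t0 t1 N h a [a] := by
    refine ⟨⟨by simp, List.isChain_singleton a, rfl, rfl, ⟨0, rfl⟩⟩, ?_⟩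
    rw [Rrow_singleton ha]
    exact chainTo_chess hsym he h
  have hfin := (qq_equiv hsym he ha hequiv).mpr hQQa
  have h2 := hfin.2
  rw [hRf] at h2
  exact h2

end MainRow
end SGP

theorem stripGluing_aux {V : Type} (G : V → V → Prop)
    (hsym : Symmetric G)
    (hsq : ∀ p : List V, (p ≠ [] ∧ List.Chain' G p) ∧ p.head? = p.getLast? →
      Even (p.length - 1) → ∃ a : V, p.head? = some a ∧ SquareEquiv G p [a])
    (t0 t1 : V) (he : G t0 t1) (r : ℕ) (x x' : (Fin 2 → ℤ) → V)
    (hx : ∀ u v : Fin 2 → ℤ, (∑ i, |u i - v i|) = 1 → G (x u) (x v))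
    (hx' : ∀ u v : Fin 2 → ℤ, (∑ i, |u i - v i|) = 1 → G (x' u) (x' v))
    (hfdx : FinDiff x (chessboard t0 t1 2)) (hfdx' : FinDiff x' (chessboard t0 t1 2))
    (hagree : ∀ n : Fin 2 → ℤ, |n 0| ≤ (r : ℤ) → |n 1| ≤ (r : ℤ) → x n = x' n) :
    ∃ y, (∀ u v : Fin 2 → ℤ, (∑ i, |u i - v i|) = 1 → G (y u) (y v)) ∧
      FinDiff y (chessboard t0 t1 2) ∧
      (∀ n : Fin 2 → ℤ, -(r : ℤ) ≤ n 0 → -(r : ℤ) ≤ n 1 → n 1 ≤ (r : ℤ) → y n = x n) ∧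
      (∀ n : Fin 2 → ℤ, n 0 ≤ (r : ℤ) → -(r : ℤ) ≤ n 1 → n 1 ≤ (r : ℤ) → y n = x' n) := by
  classical
  have vecpair : ∀ n : Fin 2 → ℤ, ![n 0, n 1] = n := by
    intro n; funext i; fin_cases i <;> rfl
  have chessb : ∀ n : Fin 2 → ℤ, chessboard t0 t1 2 n = SGP.chessRow t0 t1 (n 1) (n 0) := by
    intro n
    unfold chessboard SGP.chessRow
    rw [Fin.sum_univ_two]
  have hsumh : ∀ a b : ℤ, (∑ i, |(![a, b] : Fin 2 → ℤ) i - (![a + 1, b] : Fin 2 → ℤ) i|) = 1 := by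
    intro a b
    rw [Fin.sum_univ_two]
    simp only [Matrix.cons_val_zero, Matrix.cons_val_one, Matrix.head_cons]
    rw [show a - (a + 1) = -1 from by ring, show b - b = 0 from by ring]
    simp
  have hsumv : ∀ a b : ℤ, (∑ i, |(![a, b] : Fin 2 → ℤ) i - (![a, b + 1] : Fin 2 → ℤ) i|) = 1 := by
    intro a b
    rw [Fin.sum_univ_two]
    simp only [Matrix.cons_val_zero, Matrix.cons_val_one, Matrix.head_cons]
    rw [show a - a = 0 from by ring, show b - (b + 1) = -1 from by ring]
    simp
  have hxh : ∀ a b : ℤ, G (x ![a, b]) (x ![a + 1, b]) := fun a b => hx _ _ (hsumh a b)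
  have hxv : ∀ a b : ℤ, G (x ![a, b]) (x ![a, b + 1]) := fun a b => hx _ _ (hsumv a b)
  have hx'h : ∀ a b : ℤ, G (x' ![a, b]) (x' ![a + 1, b]) := fun a b => hx' _ _ (hsumh a b)
  have hx'v : ∀ a b : ℤ, G (x' ![a, b]) (x' ![a, b + 1]) := fun a b => hx' _ _ (hsumv a b)
  have habox : ∀ a b : ℤ, -(r:ℤ) ≤ a → a ≤ (r:ℤ) → -(r:ℤ) ≤ b → b ≤ (r:ℤ) →
      x ![a, b] = x' ![a, b] := by
    intro a b h1 h2 h3 h4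
    apply hagree
    · simp only [Matrix.cons_val_zero]
      rw [abs_le]; exact ⟨h1, h2⟩
    · simp only [Matrix.cons_val_one, Matrix.head_cons]
      rw [abs_le]; exact ⟨h3, h4⟩
  set S : ℤ → ℤ → V := fun b aa => if -(r:ℤ) ≤ aa then x ![aa, b] else x' ![aa, b] with hSdef
  have hSrow : ∀ b : ℤ, -(r:ℤ) ≤ b → b ≤ (r:ℤ) → SGP.RowOK G (S b) := by
    intro b hb1 hb2 aa
    show G (if -(r:ℤ) ≤ aa then x ![aa, b] else x' ![aa, b])
      (if -(r:ℤ) ≤ aa + 1 then x ![aa + 1, b] else x' ![aa + 1, b])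
    by_cases h1 : -(r:ℤ) ≤ aa
    · rw [if_pos h1, if_pos (by omega)]; exact hxh aa b
    by_cases h2 : aa + 1 = -(r:ℤ)
    · rw [if_neg h1, if_pos (by omega), habox (aa + 1) b (by omega) (by omega) hb1 hb2]
      exact hx'h aa b
    · rw [if_neg h1, if_neg (by omega)]; exact hx'h aa b
  have hSvert : ∀ b : ℤ, SGP.RowAdj G (S b) (S (b + 1)) := by
    intro b aa
    show G (if -(r:ℤ) ≤ aa then x ![aa, b] else x' ![aa, b])
      (if -(r:ℤ) ≤ aa then x ![aa, b + 1] else x' ![aa, b + 1])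
    by_cases h1 : -(r:ℤ) ≤ aa
    · rw [if_pos h1, if_pos h1]; exact hxv aa b
    · rw [if_neg h1, if_neg h1]; exact hx'v aa b
  have hinj : ∀ b : ℤ, Function.Injective (fun aa : ℤ => (![aa, b] : Fin 2 → ℤ)) := by
    intro b a1 a2 h12
    have := congrFun h12 0
    simpa using this
  have hrowfd : ∀ (w : (Fin 2 → ℤ) → V), FinDiff w (chessboard t0 t1 2) → ∀ b : ℤ,
      {aa : ℤ | w ![aa, b] ≠ SGP.chessRow t0 t1 b aa}.Finite := by
    intro w hw b
    have hsubeq : {aa : ℤ | w ![aa, b] ≠ SGP.chessRow t0 t1 b aa}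
        = (fun aa : ℤ => (![aa, b] : Fin 2 → ℤ)) ⁻¹' {n | w n ≠ chessboard t0 t1 2 n} := by
      ext aa
      simp only [Set.mem_setOf_eq, Set.mem_preimage]
      rw [chessb ![aa, b]]
      simp only [Matrix.cons_val_zero, Matrix.cons_val_one, Matrix.head_cons]
    rw [hsubeq]
    exact Set.Finite.preimage ((hinj b).injOn) hw
  have hSfd : ∀ b : ℤ, FinDiff (S b) (SGP.chessRow t0 t1 b) := by
    intro b
    apply Set.Finite.subset ((hrowfd x hfdx b).union (hrowfd x' hfdx' b))
    intro aa haa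
    simp only [Set.mem_setOf_eq] at haa
    by_cases h1 : -(r:ℤ) ≤ aa
    · left
      simp only [Set.mem_setOf_eq]
      intro hcon
      apply haa
      show (if -(r:ℤ) ≤ aa then x ![aa, b] else x' ![aa, b]) = _
      rw [if_pos h1]; exact hcon
    · right
      simp only [Set.mem_setOf_eq]
      intro hcon
      apply haa
      show (if -(r:ℤ) ≤ aa then x ![aa, b] else x' ![aa, b]) = _
      rw [if_neg h1]; exact hcon
  obtain ⟨kT, FT, hFT0, hFTrow, hFTfd, hFTadj, hFTtail⟩ :=
    SGP.chainTo_of_finDiff hsym he hsq (r : ℤ) (S (r : ℤ))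
      (hSrow (r : ℤ) (by omega) le_rfl) (hSfd (r : ℤ))
  obtain ⟨kB, FB, hFB0, hFBrow, hFBfd, hFBadj, hFBtail⟩ :=
    SGP.chainTo_of_finDiff hsym he hsq (-(r : ℤ)) (S (-(r : ℤ)))
      (hSrow (-(r : ℤ)) le_rfl (by omega)) (hSfd (-(r : ℤ)))
  set Y : ℤ → ℤ → V := fun b => if (r:ℤ) < b then FT (b - (r:ℤ)).toNat
    else if b < -(r:ℤ) then FB (-(r:ℤ) - b).toNat else S b with hYdef
  have HT : ∀ b : ℤ, (r:ℤ) < b → Y b = FT (b - (r:ℤ)).toNat := by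
    intro b hb
    show (if (r:ℤ) < b then FT (b - (r:ℤ)).toNat else _) = _
    rw [if_pos hb]
  have HB : ∀ b : ℤ, b < -(r:ℤ) → Y b = FB (-(r:ℤ) - b).toNat := by
    intro b hb
    show (if (r:ℤ) < b then FT (b - (r:ℤ)).toNat else _) = _
    rw [if_neg (by omega), if_pos hb]
  have HM : ∀ b : ℤ, -(r:ℤ) ≤ b → b ≤ (r:ℤ) → Y b = S b := by
    intro b hb1 hb2
    show (if (r:ℤ) < b then FT (b - (r:ℤ)).toNat else _) = _
    rw [if_neg (by omega), if_neg (by omega)]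
  set y : (Fin 2 → ℤ) → V := fun n => Y (n 1) (n 0) with hydef
  have hy : ∀ n : Fin 2 → ℤ, y n = Y (n 1) (n 0) := fun _ => rfl
  have hYrow : ∀ b : ℤ, SGP.RowOK G (Y b) := by
    intro b
    rcases lt_trichotomy (r:ℤ) b with hb | hb | hb
    · rw [HT b hb]; exact hFTrow _
    · rw [HM b (by omega) (by omega)]; exact hSrow b (by omega) (by omega)
    · by_cases hb2 : -(r:ℤ) ≤ b
      · rw [HM b hb2 (by omega)]; exact hSrow b hb2 (by omega)
      · rw [HB b (by omega)]; exact hFBrow _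
  have hYadj : ∀ b : ℤ, SGP.RowAdj G (Y b) (Y (b + 1)) := by
    intro b
    rcases lt_trichotomy (r:ℤ) b with hb | hb | hb
    · rw [HT b hb, HT (b + 1) (by omega),
        show (b + 1 - (r:ℤ)).toNat = (b - (r:ℤ)).toNat + 1 from by omega]
      exact hFTadj _
    · rw [HM b (by omega) (by omega), HT (b + 1) (by omega),
        show (b + 1 - (r:ℤ)).toNat = 1 from by omega, ← hb, ← hFT0]
      exact hFTadj 0
    · by_cases hb2 : -(r:ℤ) ≤ b
      · rw [HM b hb2 (by omega), HM (b + 1) (by omega) (by omega)]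
        exact hSvert b
      · by_cases hb3 : b + 1 = -(r:ℤ)
        · rw [HB b (by omega), HM (b + 1) (by omega) (by omega),
            show (-(r:ℤ) - b).toNat = 1 from by omega, hb3, ← hFB0]
          exact SGP.rowAdj_symm hsym (hFBadj 0)
        · rw [HB b (by omega), HB (b + 1) (by omega),
            show (-(r:ℤ) - b).toNat = (-(r:ℤ) - (b + 1)).toNat + 1 from by omega]
          exact SGP.rowAdj_symm hsym (hFBadj _)
  have hyhom : ∀ u v : Fin 2 → ℤ, (∑ i, |u i - v i|) = 1 → G (y u) (y v) := by
    intro u v huv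
    rw [Fin.sum_univ_two] at huv
    have hc : (u 0 = v 0 ∧ (u 1 = v 1 + 1 ∨ v 1 = u 1 + 1)) ∨
        (u 1 = v 1 ∧ (u 0 = v 0 + 1 ∨ v 0 = u 0 + 1)) := by
      rcases abs_cases (u 0 - v 0) with ⟨e0, _⟩ | ⟨e0, _⟩ <;>
        rcases abs_cases (u 1 - v 1) with ⟨e1, _⟩ | ⟨e1, _⟩ <;> omega
    rw [hy u, hy v]
    rcases hc with ⟨h0, h1 | h1⟩ | ⟨h1, h0 | h0⟩
    · rw [h0, h1]; exact hsym (hYadj (v 1) (v 0))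
    · rw [h0, h1]; exact hYadj (u 1) (v 0)
    · rw [h1, h0]; exact hsym (hYrow (v 1) (v 0))
    · rw [h1, h0]; exact hYrow (v 1) (u 0)
  have hyx : ∀ n : Fin 2 → ℤ, -(r:ℤ) ≤ n 0 → -(r:ℤ) ≤ n 1 → n 1 ≤ (r:ℤ) → y n = x n := by
    intro n h1 h2 h3
    rw [hy n, HM (n 1) h2 h3]
    show (if -(r:ℤ) ≤ n 0 then x ![n 0, n 1] else x' ![n 0, n 1]) = x n
    rw [if_pos h1, vecpair]
  have hyx' : ∀ n : Fin 2 → ℤ, n 0 ≤ (r:ℤ) → -(r:ℤ) ≤ n 1 → n 1 ≤ (r:ℤ) → y n = x' n := by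
    intro n h1 h2 h3
    rw [hy n, HM (n 1) h2 h3]
    show (if -(r:ℤ) ≤ n 0 then x ![n 0, n 1] else x' ![n 0, n 1]) = x' n
    by_cases h4 : -(r:ℤ) ≤ n 0
    · rw [if_pos h4, habox (n 0) (n 1) h4 h1 h2 h3, vecpair]
    · rw [if_neg h4, vecpair]
  have hYfd : ∀ b : ℤ, {aa : ℤ | Y b aa ≠ SGP.chessRow t0 t1 b aa}.Finite := by
    intro b
    rcases lt_trichotomy (r:ℤ) b with hb | hb | hb
    · rw [HT b hb]
      have hj := hFTfd (b - (r:ℤ)).toNat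
      rw [show (r:ℤ) + (((b - (r:ℤ)).toNat : ℕ) : ℤ) = b from by omega] at hj
      exact hj
    · rw [HM b (by omega) (by omega)]
      exact hSfd b
    · by_cases hb2 : -(r:ℤ) ≤ b
      · rw [HM b hb2 (by omega)]; exact hSfd b
      · rw [HB b (by omega)]
        have hj := hFBfd (-(r:ℤ) - b).toNat
        have ecr : SGP.chessRow t0 t1 (-(r:ℤ) + (((-(r:ℤ) - b).toNat : ℕ) : ℤ))
            = SGP.chessRow t0 t1 b := by
          funext aa
          exact SGP.chessRow_congr t0 t1 ⟨(((-(r:ℤ) - b).toNat : ℕ) : ℤ), by omega⟩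
        rw [ecr] at hj
        exact hj
  have hyfd : FinDiff y (chessboard t0 t1 2) := by
    have hbig : {n : Fin 2 → ℤ | y n ≠ chessboard t0 t1 2 n} ⊆
        ⋃ b ∈ Finset.Icc (-(r:ℤ) - (kB : ℤ)) ((r:ℤ) + (kT : ℤ)),
          (fun aa : ℤ => (![aa, b] : Fin 2 → ℤ)) ''
            {aa : ℤ | Y b aa ≠ SGP.chessRow t0 t1 b aa} := by
      intro n hn
      simp only [Set.mem_setOf_eq] at hn
      have hn' : Y (n 1) (n 0) ≠ SGP.chessRow t0 t1 (n 1) (n 0) := by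
        rw [← chessb n]
        exact hn
      have hmem : n 1 ∈ Finset.Icc (-(r:ℤ) - (kB : ℤ)) ((r:ℤ) + (kT : ℤ)) := by
        rw [Finset.mem_Icc]
        by_contra hcon
        rw [not_and_or] at hcon
        apply hn'
        rcases hcon with hcon | hcon
        · push_neg at hcon
          rw [HB (n 1) (by omega), hFBtail _ (by omega)]
          exact SGP.chessRow_congr t0 t1 ⟨(((-(r:ℤ) - n 1).toNat : ℕ) : ℤ), by omega⟩
        · push_neg at hcon
          rw [HT (n 1) (by omega), hFTtail _ (by omega)]
          exact SGP.chessRow_congr t0 t1 ⟨0, by omega⟩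
      exact Set.mem_biUnion hmem ⟨n 0, hn', by show ![n 0, n 1] = n; exact vecpair n⟩
    apply Set.Finite.subset _ hbig
    apply Set.Finite.biUnion (Finset.finite_toSet _)
    intro b _
    exact (hYfd b).image _
  exact ⟨y, hyhom, hyfd, hyx, hyx'⟩

/-- If every even-length cycle of `G` is square-decomposable, then for
any edge `(t0, t1)` of `G` the two-dimensional homshift `X²_G` has the strip-gluing
property relative to the `(t0, t1)`-chessboard configuration. -/
theorem stripGluing_of_trivial_evenSquareGroup {V : Type} [Fintype V] (G : V → V → Prop)
    (hsym : Symmetric G) (hconn : GraphConnected G)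
    (hsq : ∀ p : List V, IsCycle G p → Even (walkLen p) → IsSquareDecomposable G p)
    (t0 t1 : V) (he : G t0 t1) :
    StripGluingOn (homSet G 2) (chessboard t0 t1 2) := by
  intro r x x' hx hx' hfdx hfdx' hagree
  obtain ⟨y, h1, h2, h3, h4⟩ := stripGluing_aux G hsym
    (fun p hc hev => hsq p hc hev) t0 t1 he r x x' hx hx' hfdx hfdx' hagree
  exact ⟨y, h1, h2, h3, h4⟩
end

section
/- Let G be a finite connected undirected graph that is not bipartite, let d ≥ 2, fix an edge (t0, t1) of G, and let x be the d-dimensional (t0, t1)-chessboard configuration. Then the Gibbs equivalence class Δ_{X^d_G}(x), consisting of all configurations of X^d_G that differ from x at only finitely many coordinates, is dense in X^d_G. -/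
variable {V : Type}

section GibbsAux

inductive Wk (G : V → V → Prop) : V → V → ℕ → Prop
  | nil (u : V) : Wk G u u 0
  | cons {u v w : V} {n : ℕ} (h : G u v) (hw : Wk G v w n) : Wk G u w (n + 1)

lemma Wk.append {G : V → V → Prop} {u v w : V} {m n : ℕ}
    (h1 : Wk G u v m) (h2 : Wk G v w n) : Wk G u w (m + n) := by
  induction h1 with
  | nil => simpa using h2
  | cons h hw ih =>
      rw [Nat.succ_add]
      exact Wk.cons h (ih h2)

lemma Wk.snoc' {G : V → V → Prop} {u v w : V} {n : ℕ}
    (h1 : Wk G u v n) (h2 : G v w) : Wk G u w (n + 1) :=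
  h1.append (Wk.cons h2 (Wk.nil w))

lemma Wk.reverse {G : V → V → Prop} (hsym : Symmetric G) {u v : V} {n : ℕ}
    (h : Wk G u v n) : Wk G v u n := by
  induction h with
  | nil => exact Wk.nil _
  | cons h hw ih => exact ih.snoc' (hsym h)

lemma Wk.zero_eq {G : V → V → Prop} {u v : V} (h : Wk G u v 0) : u = v := by
  cases h; rfl

lemma wk_of_list {G : V → V → Prop} :
    ∀ p : List V, List.Chain' G p → ∀ u v : V, p.head? = some u → p.getLast? = some v →
      Wk G u v (p.length - 1) := by
  intro p
  induction p with
  | nil => intro _ u v h; simp at h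
  | cons a q ih =>
      intro hch u v hh hl
      cases q with
      | nil =>
          simp at hh hl
          subst hh; subst hl
          exact Wk.nil _
      | cons b r =>
          simp only [List.Chain', List.isChain_cons_cons] at hch
          simp only [List.head?_cons, Option.some.injEq] at hh
          subst hh
          have hl' : (b :: r).getLast? = some v := by
            rwa [List.getLast?_cons_cons] at hl
          have := ih hch.2 b v rfl hl'
          have h2 := Wk.cons hch.1 this
          have hlen : (a :: b :: r).length - 1 = (b :: r).length - 1 + 1 := by
            simp [List.length_cons]
          rw [hlen]
          exact h2

lemma exists_wk {G : V → V → Prop} (hconn : GraphConnected G) (u v : V) :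
    ∃ n, Wk G u v n := by
  obtain ⟨p, ⟨hne, hch⟩, hh, hl⟩ := hconn u v
  exact ⟨p.length - 1, wk_of_list p hch u v hh hl⟩

lemma exists_odd_closed {G : V → V → Prop} (hsym : Symmetric G)
    (hconn : GraphConnected G) (hnbip : ¬ GraphBipartite G) (t0 : V) :
    ∃ (z : V) (ℓ : ℕ), Wk G z z ℓ ∧ ℓ % 2 = 1 := by
  by_contra hno
  push_neg at hno
  apply hnbip
  classical
  refine ⟨fun u => decide (∃ n, Wk G t0 u (2 * n)), ?_⟩
  intro u v huv
  by_cases hu : ∃ n, Wk G t0 u (2 * n) <;> by_cases hv : ∃ n, Wk G t0 v (2 * n)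
  · exfalso
    obtain ⟨a, ha⟩ := hu
    obtain ⟨b, hb⟩ := hv
    have h1 : Wk G t0 v (2 * a + 1) := ha.snoc' huv
    have h2 : Wk G v t0 (2 * b) := hb.reverse hsym
    have h3 : Wk G t0 t0 (2 * a + 1 + 2 * b) := h1.append h2
    have := hno t0 (2 * a + 1 + 2 * b) h3
    omega
  · simp [hu, hv]
  · simp [hu, hv]
  · exfalso
    obtain ⟨n, hn⟩ := exists_wk hconn t0 u
    have hodd : n % 2 = 1 := by
      rcases Nat.even_or_odd n with hev | ho
      · rcases hev with ⟨k, hk⟩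
        exact absurd ⟨k, by rw [show 2 * k = n by omega]; exact hn⟩ hu
      · rcases ho with ⟨k, hk⟩; omega
    have hwv : Wk G t0 v (n + 1) := hn.snoc' huv
    obtain ⟨k, hk⟩ : ∃ k, n = 2 * k + 1 := ⟨n / 2, by omega⟩
    exact hv ⟨k + 1, by rw [show 2 * (k + 1) = n + 1 by omega]; exact hwv⟩

lemma exists_even_wk {G : V → V → Prop} (hsym : Symmetric G)
    (hconn : GraphConnected G) (hnbip : ¬ GraphBipartite G) (t0 v : V) :
    ∃ m, Wk G v t0 (2 * m) := by
  obtain ⟨z, ℓ, hz, hodd⟩ := exists_odd_closed hsym hconn hnbip t0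
  obtain ⟨n1, h1⟩ := exists_wk hconn v z
  obtain ⟨n2, h2⟩ := exists_wk hconn z t0
  rcases Nat.even_or_odd (n1 + n2) with hev | ho
  · refine ⟨(n1 + n2) / 2, ?_⟩
    have h3 := h1.append h2
    rwa [show 2 * ((n1 + n2) / 2) = n1 + n2 by rcases hev with ⟨k, hk⟩; omega]
  · refine ⟨(n1 + ℓ + n2) / 2, ?_⟩
    have h3 := (h1.append hz).append h2
    rwa [show 2 * ((n1 + ℓ + n2) / 2) = n1 + ℓ + n2 by
      rcases ho with ⟨k, hk⟩; omega]

lemma Wk.toFun {G : V → V → Prop} {u w : V} {n : ℕ} (h : Wk G u w n) :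
    ∃ g : ℕ → V, g 0 = u ∧ g n = w ∧ ∀ i, i < n → G (g i) (g (i + 1)) := by
  induction h with
  | nil u => exact ⟨fun _ => u, rfl, rfl, fun i hi => absurd hi (by omega)⟩
  | @cons u v w n h hw ih =>
      obtain ⟨g', hg0, hgn, hge⟩ := ih
      refine ⟨fun i => if i = 0 then u else g' (i - 1), by simp, by simp [hgn], ?_⟩
      intro i hi
      rcases Nat.eq_zero_or_pos i with rfl | hp
      · simpa [hg0] using h
      · have h1 : ¬ (i = 0) := by omega
        have h2 : ¬ (i + 1 = 0) := by omega
        simp only [h1, h2, if_false]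
        have := hge (i - 1) (by omega)
        rwa [show i - 1 + 1 = i by omega] at this

lemma tail_walk {G : V → V → Prop} (hsym : Symmetric G)
    (hconn : GraphConnected G) (hnbip : ¬ GraphBipartite G) {t0 t1 : V} (he : G t0 t1)
    (v : V) :
    ∃ r : ℕ → V, r 0 = v ∧ (∀ i, G (r i) (r (i + 1))) ∧
      ∃ J, ∀ j, J ≤ j → r j = if Even j then t0 else t1 := by
  obtain ⟨m, hm⟩ := exists_even_wk hsym hconn hnbip t0 v
  obtain ⟨g, hg0, hgn, hge⟩ := hm.toFun
  refine ⟨fun i => if i < 2 * m then g i else if Even i then t0 else t1, ?_, ?_, 2 * m, ?_⟩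
  · rcases Nat.eq_zero_or_pos m with rfl | hp
    · simpa using (by simpa [hg0] using hgn.symm : t0 = v)
    · simp [hg0, (show 0 < 2 * m by omega)]
  · intro i
    by_cases h1 : i + 1 < 2 * m
    · simp only [show i < 2 * m by omega, h1, if_true]
      exact hge i (by omega)
    · by_cases h2 : i < 2 * m
      · have h3 : i + 1 = 2 * m := by omega
        simp only [h2, if_true, h1, if_false]
        have hev : Even (i + 1) := ⟨m, by omega⟩
        simp only [hev, if_true]
        have := hge i (by omega)
        rwa [h3, hgn] at this
      · simp only [h2, h1, if_false]
        rcases Nat.even_or_odd i with hev | hod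
        · have hno : ¬ Even (i + 1) := by
            simp [Nat.even_add_one, hev]
          rw [if_pos hev, if_neg hno]
          exact he
        · have hni : ¬ Even i := Nat.not_even_iff_odd.mpr hod
          have hyes : Even (i + 1) := by simp [Nat.even_add_one, hni]
          rw [if_neg hni, if_pos hyes]
          exact hsym he
  · intro j hj
    simp [show ¬ (j < 2 * m) by omega]

end GibbsAux


def inBox (N : ℕ) {m : ℕ} (u : Fin m → ℤ) : Prop := ∀ i, |u i| ≤ (N : ℤ)

def IsBoxHom (G : V → V → Prop) (N : ℕ) {m : ℕ} (Φ : (Fin m → ℤ) → V) : Prop :=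
  ∀ u v : Fin m → ℤ, inBox N u → inBox N v → (∑ i, |u i - v i|) = 1 → G (Φ u) (Φ v)

def cbk (t0 t1 : V) {m : ℕ} (k : ℕ) (n : Fin m → ℤ) : V :=
  if Even ((∑ i, n i) + (k : ℤ)) then t0 else t1

lemma inBox_init {N m : ℕ} {u : Fin (m+1) → ℤ} (hu : inBox N u) : inBox N (Fin.init u) :=
  fun i => hu i.castSucc

lemma inBox_snoc {N m : ℕ} {w : Fin m → ℤ} {c : ℤ} (hw : inBox N w) (hc : |c| ≤ (N : ℤ)) :
    inBox N (Fin.snoc w c) := by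
  intro i
  refine Fin.lastCases ?_ ?_ i
  · simpa [Fin.snoc_last] using hc
  · intro j; simpa [Fin.snoc_castSucc] using hw j

lemma sum_abs_snoc {m : ℕ} (w w' : Fin m → ℤ) (c c' : ℤ) :
    ∑ i : Fin (m+1), |Fin.snoc w c i - Fin.snoc w' c' i| =
      (∑ i : Fin m, |w i - w' i|) + |c - c'| := by
  rw [Fin.sum_univ_castSucc]
  simp [Fin.snoc_castSucc, Fin.snoc_last]

lemma dist_split {m : ℕ} (u v : Fin (m+1) → ℤ) (h : (∑ i, |u i - v i|) = 1) :
    (Fin.init u = Fin.init v ∧ |u (Fin.last m) - v (Fin.last m)| = 1) ∨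
    ((∑ i, |Fin.init u i - Fin.init v i|) = 1 ∧ u (Fin.last m) = v (Fin.last m)) := by
  rw [Fin.sum_univ_castSucc] at h
  have hS : 0 ≤ ∑ i : Fin m, |u i.castSucc - v i.castSucc| :=
    Finset.sum_nonneg (fun i _ => abs_nonneg _)
  have hL : 0 ≤ |u (Fin.last m) - v (Fin.last m)| := abs_nonneg _
  have hsame : (∑ i : Fin m, |Fin.init u i - Fin.init v i|) =
      ∑ i : Fin m, |u i.castSucc - v i.castSucc| := rfl
  rcases (by omega :
      ((∑ i : Fin m, |u i.castSucc - v i.castSucc|) = 0 ∧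
        |u (Fin.last m) - v (Fin.last m)| = 1) ∨
      ((∑ i : Fin m, |u i.castSucc - v i.castSucc|) = 1 ∧
        |u (Fin.last m) - v (Fin.last m)| = 0)) with ⟨h1, h2⟩ | ⟨h1, h2⟩
  · left
    refine ⟨funext fun i => ?_, h2⟩
    have h3 := (Finset.sum_eq_zero_iff_of_nonneg (fun i _ => abs_nonneg _)).mp h1 i
      (Finset.mem_univ i)
    have h4 := abs_eq_zero.mp h3
    show u i.castSucc = v i.castSucc
    omega
  · right
    refine ⟨by rw [hsame]; exact h1, ?_⟩
    have h4 := abs_eq_zero.mp h2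
    omega

lemma chain_lemma {G : V → V → Prop} (hsym : Symmetric G) {t0 t1 : V}
    (hA : ∀ v : V, ∃ r : ℕ → V, r 0 = v ∧ (∀ i, G (r i) (r (i + 1))) ∧
      ∃ J, ∀ j, J ≤ j → r j = if Even j then t0 else t1) :
    ∀ (m N : ℕ), Even N → ∀ Φ : (Fin m → ℤ) → V, IsBoxHom G N Φ →
      ∃ R : ℕ → (Fin m → ℤ) → V,
        (∀ u, inBox N u → R 0 u = Φ u) ∧
        (∀ k, IsBoxHom G N (R k)) ∧
        (∀ k u, inBox N u → G (R k u) (R (k + 1) u)) ∧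
        ∃ J, ∀ j u, J ≤ j → inBox N u → R j u = cbk t0 t1 j u := by
  intro m
  induction m with
  | zero =>
      intro N hN Φ hΦ
      obtain ⟨r, hr0, hre, J, hrJ⟩ := hA (Φ (fun i => i.elim0))
      refine ⟨fun k _ => r k, ?_, ?_, ?_, J, ?_⟩
      · intro u _
        show r 0 = Φ u
        rw [hr0]
        congr 1
        exact Subsingleton.elim _ _
      · intro k u v _ _ hd
        exfalso
        simp at hd
      · intro k u _
        exact hre k
      · intro j u hj _
        show r j = cbk t0 t1 j u
        rw [hrJ j hj]
        simp [cbk, Int.even_coe_nat]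
  | succ m ih =>
      intro N hN Φ hΦ
      have hrow : IsBoxHom G N (fun w : Fin m → ℤ => Φ (Fin.snoc w (-(N : ℤ)))) := by
        intro u v hu hv hd
        apply hΦ (Fin.snoc u (-(N:ℤ))) (Fin.snoc v (-(N:ℤ)))
          (inBox_snoc hu (by simp)) (inBox_snoc hv (by simp))
        rw [sum_abs_snoc]
        simpa using hd
      obtain ⟨ρ, hρ0, hρhom, hρmove, Jρ, hρJ⟩ := ih N hN _ hrow
      refine ⟨fun k u => if (k : ℤ) ≤ u (Fin.last m) + (N : ℤ)
          then Φ (Fin.snoc (Fin.init u) (u (Fin.last m) - (k : ℤ)))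
          else ρ ((k : ℤ) - (u (Fin.last m) + (N : ℤ))).toNat (Fin.init u),
        ?_, ?_, ?_, ?_⟩
      · -- R 0 = Φ on box
        intro u hu
        dsimp only
        have hl := abs_le.mp (hu (Fin.last m))
        rw [if_pos (by push_cast; omega)]
        rw [show u (Fin.last m) - ((0:ℕ):ℤ) = u (Fin.last m) by push_cast; ring]
        rw [Fin.snoc_init_self]
      · -- IsBoxHom of each R k
        intro k u v hu hv hd
        dsimp only
        have hlu := abs_le.mp (hu (Fin.last m))
        have hlv := abs_le.mp (hv (Fin.last m))
        have hbu := inBox_init hu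
        have hbv := inBox_init hv
        rcases dist_split u v hd with ⟨hiuv, hlast1⟩ | ⟨hd1, hls⟩
        · -- same init, last coords differ by 1
          have hts := (abs_eq (by norm_num : (0:ℤ) ≤ 1)).mp hlast1
          by_cases hcu : (k : ℤ) ≤ u (Fin.last m) + (N : ℤ) <;>
            by_cases hcv : (k : ℤ) ≤ v (Fin.last m) + (N : ℤ)
          · rw [if_pos hcu, if_pos hcv]
            apply hΦ
            · exact inBox_snoc hbu (by rw [abs_le]; omega)
            · exact inBox_snoc hbv (by rw [abs_le]; omega)
            · rw [hiuv, sum_abs_snoc]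
              simp only [sub_self, abs_zero, Finset.sum_const_zero, zero_add]
              rw [show u (Fin.last m) - (k:ℤ) - (v (Fin.last m) - (k:ℤ)) =
                u (Fin.last m) - v (Fin.last m) by ring]
              exact hlast1
          · -- u in Φ branch, v in ρ branch : k = u_l + N, v_l = u_l - 1
            rw [if_pos hcu, if_neg hcv]
            have h1 : u (Fin.last m) - v (Fin.last m) = 1 := by rcases hts with h | h <;> omega
            have h2 : (k : ℤ) = u (Fin.last m) + N := by omega
            rw [show u (Fin.last m) - (k:ℤ) = -(N:ℤ) by omega]
            rw [show ((k : ℤ) - (v (Fin.last m) + (N : ℤ))).toNat = 1 by omega]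
            rw [← hρ0 (Fin.init u) hbu, hiuv]
            exact hρmove 0 (Fin.init v) hbv
          · -- u in ρ branch, v in Φ branch
            rw [if_neg hcu, if_pos hcv]
            have h1 : v (Fin.last m) - u (Fin.last m) = 1 := by rcases hts with h | h <;> omega
            have h2 : (k : ℤ) = v (Fin.last m) + N := by omega
            rw [show v (Fin.last m) - (k:ℤ) = -(N:ℤ) by omega]
            rw [show ((k : ℤ) - (u (Fin.last m) + (N : ℤ))).toNat = 1 by omega]
            rw [← hρ0 (Fin.init v) hbv, ← hiuv]
            exact hsym (hρmove 0 (Fin.init u) hbu)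
          · rw [if_neg hcu, if_neg hcv]
            rcases hts with h | h
            · rw [hiuv, show ((k : ℤ) - (v (Fin.last m) + (N : ℤ))).toNat =
                ((k : ℤ) - (u (Fin.last m) + (N : ℤ))).toNat + 1 by omega]
              exact hρmove _ (Fin.init v) hbv
            · rw [hiuv, show ((k : ℤ) - (u (Fin.last m) + (N : ℤ))).toNat =
                ((k : ℤ) - (v (Fin.last m) + (N : ℤ))).toNat + 1 by omega]
              exact hsym (hρmove _ (Fin.init v) hbv)
        · -- same last coordinate, inits at distance 1
          rw [← hls]
          by_cases hcu : (k : ℤ) ≤ u (Fin.last m) + (N : ℤ)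
          · rw [if_pos hcu, if_pos hcu]
            apply hΦ
            · exact inBox_snoc hbu (by rw [abs_le]; omega)
            · exact inBox_snoc hbv (by rw [abs_le]; omega)
            · rw [sum_abs_snoc]
              simpa using hd1
          · rw [if_neg hcu, if_neg hcu]
            exact hρhom _ (Fin.init u) (Fin.init v) hbu hbv hd1
      · -- chain moves
        intro k u hu
        dsimp only
        have hl := abs_le.mp (hu (Fin.last m))
        have hbu := inBox_init hu
        by_cases h1 : ((k:ℤ) + 1) ≤ u (Fin.last m) + (N : ℤ)
        · rw [if_pos (by omega : (k:ℤ) ≤ u (Fin.last m) + (N:ℤ)),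
            if_pos (by push_cast; omega : (((k+1 : ℕ)):ℤ) ≤ u (Fin.last m) + (N:ℤ))]
          apply hΦ
          · exact inBox_snoc hbu (by rw [abs_le]; omega)
          · exact inBox_snoc hbu (by rw [abs_le]; push_cast; omega)
          · rw [sum_abs_snoc]
            rw [show (∑ i : Fin m, |Fin.init u i - Fin.init u i|) = 0 by simp]
            push_cast
            rw [show u (Fin.last m) - (k:ℤ) - (u (Fin.last m) - ((k:ℤ)+1)) = 1 by ring]
            simp
        · by_cases h2 : (k : ℤ) ≤ u (Fin.last m) + (N : ℤ)
          · -- seam : k = u_l + N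
            rw [if_pos h2, if_neg (by push_cast; omega)]
            rw [show u (Fin.last m) - (k:ℤ) = -(N:ℤ) by omega]
            rw [show ((((k+1):ℕ)):ℤ) - (u (Fin.last m) + (N:ℤ)) = 1 by push_cast; omega]
            rw [show ((1:ℤ)).toNat = 1 from rfl]
            rw [← hρ0 (Fin.init u) hbu]
            exact hρmove 0 (Fin.init u) hbu
          · rw [if_neg h2, if_neg (by push_cast; omega)]
            rw [show ((((k+1):ℕ)):ℤ) - (u (Fin.last m) + (N:ℤ)) =
              ((k:ℤ) - (u (Fin.last m) + (N:ℤ))) + 1 by push_cast; ring]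
            rw [show (((k:ℤ) - (u (Fin.last m) + (N:ℤ))) + 1).toNat =
              ((k:ℤ) - (u (Fin.last m) + (N:ℤ))).toNat + 1 by omega]
            exact hρmove _ (Fin.init u) hbu
      · -- tail
        refine ⟨Jρ + 2 * N + 1, ?_⟩
        intro j u hj hu
        dsimp only
        have hl := abs_le.mp (hu (Fin.last m))
        have hbu := inBox_init hu
        have hbr : ¬ ((j:ℤ) ≤ u (Fin.last m) + (N : ℤ)) := by
          have : (Jρ + 2*N + 1 : ℤ) ≤ (j : ℤ) := by exact_mod_cast hj
          push_cast at this ⊢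
          omega
        rw [if_neg hbr]
        have hidx : Jρ ≤ ((j:ℤ) - (u (Fin.last m) + (N : ℤ))).toNat := by
          have : (Jρ + 2*N + 1 : ℤ) ≤ (j : ℤ) := by exact_mod_cast hj
          push_cast at this
          omega
        rw [hρJ _ (Fin.init u) hidx hbu]
        have hsum : (∑ i : Fin (m+1), u i) =
            (∑ i : Fin m, Fin.init u i) + u (Fin.last m) := Fin.sum_univ_castSucc u
        have hidxz : ((((j:ℤ) - (u (Fin.last m) + (N : ℤ))).toNat : ℕ) : ℤ) =
            (j:ℤ) - (u (Fin.last m) + (N : ℤ)) := Int.toNat_of_nonneg (by omega)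
        obtain ⟨p, hp⟩ := hN
        simp only [cbk]
        refine if_congr ?_ rfl rfl
        rw [Int.even_iff, Int.even_iff]
        omega


def clampz (N : ℕ) (a : ℤ) : ℤ :=
  if a < -(N : ℤ) then -(N : ℤ) else if a ≤ (N : ℤ) then a else (N : ℤ)

def clampv (N : ℕ) {d : ℕ} (n : Fin d → ℤ) : Fin d → ℤ := fun i => clampz N (n i)

noncomputable def excsum (N : ℕ) {d : ℕ} (n : Fin d → ℤ) : ℕ :=
  (∑ i, |n i - clampz N (n i)|).toNat

lemma clampz_abs_le (N : ℕ) (a : ℤ) : |clampz N a| ≤ (N : ℤ) := by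
  simp only [Int.abs_eq_natAbs]
  unfold clampz
  split_ifs <;> omega

lemma clampz_eq_self {N : ℕ} {a : ℤ} (h : |a| ≤ (N : ℤ)) : clampz N a = a := by
  simp only [Int.abs_eq_natAbs] at h
  unfold clampz
  split_ifs <;> omega

lemma abs_sub_clamp_ge (N : ℕ) (a : ℤ) : |a| - (N : ℤ) ≤ |a - clampz N a| := by
  simp only [Int.abs_eq_natAbs]
  unfold clampz
  split_ifs <;> omega

lemma clampz_cases (N : ℕ) (a b : ℤ) (h : |a - b| = 1) :
    (clampz N a = clampz N b ∧
      (|a - clampz N a| = |b - clampz N b| + 1 ∨ |b - clampz N b| = |a - clampz N a| + 1)) ∨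
    (|clampz N a - clampz N b| = 1 ∧ |a - clampz N a| = |b - clampz N b|) := by
  simp only [Int.abs_eq_natAbs] at h ⊢
  unfold clampz
  split_ifs <;> omega

lemma inBox_clampv (N : ℕ) {d : ℕ} (n : Fin d → ℤ) : inBox N (clampv N n) :=
  fun i => clampz_abs_le N (n i)

lemma clampv_eq_self {N : ℕ} {d : ℕ} {n : Fin d → ℤ} (h : inBox N n) : clampv N n = n :=
  funext fun i => clampz_eq_self (h i)

lemma excsum_cast (N : ℕ) {d : ℕ} (n : Fin d → ℤ) :
    ((excsum N n : ℕ) : ℤ) = ∑ i, |n i - clampz N (n i)| :=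
  Int.toNat_of_nonneg (Finset.sum_nonneg fun i _ => abs_nonneg _)

lemma excsum_eq_zero {N : ℕ} {d : ℕ} {n : Fin d → ℤ} (h : inBox N n) : excsum N n = 0 := by
  unfold excsum
  rw [show (∑ i, |n i - clampz N (n i)|) = 0 from
    Finset.sum_eq_zero fun i _ => by rw [clampz_eq_self (h i)]; simp]
  rfl

lemma excsum_parity (N : ℕ) {d : ℕ} (n : Fin d → ℤ) :
    Even ((∑ i, clampv N n i + ((excsum N n : ℕ) : ℤ)) - ∑ i, n i) := by
  rw [excsum_cast]
  have h : ((∑ i, clampv N n i) + (∑ i, |n i - clampz N (n i)|)) - (∑ i, n i)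
      = ∑ i, (|n i - clampz N (n i)| - (n i - clampz N (n i))) := by
    rw [Finset.sum_sub_distrib, Finset.sum_sub_distrib]
    show _ = (∑ i, |n i - clampz N (n i)|) - ((∑ i, n i) - ∑ i, clampv N n i)
    ring
  rw [h]
  refine Finset.sum_induction _ (fun z : ℤ => Even z) (fun a b ha hb => ha.add hb) Even.zero ?_
  intro i _
  rcases abs_cases (n i - clampz N (n i)) with ⟨h1, _⟩ | ⟨h1, _⟩
  · rw [h1]; simp
  · rw [h1]; exact ⟨-(n i - clampz N (n i)), by ring⟩

lemma excsum_large (N J : ℕ) {d : ℕ} (n : Fin d → ℤ) (i : Fin d)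
    (h : (N : ℤ) + (J : ℤ) < |n i|) : J ≤ excsum N n := by
  have h2 : |n i - clampz N (n i)| ≤ ∑ j, |n j - clampz N (n j)| :=
    Finset.single_le_sum (f := fun j => |n j - clampz N (n j)|)
      (fun j _ => abs_nonneg _) (Finset.mem_univ i)
  have h5 := abs_sub_clamp_ge N (n i)
  have h4 := excsum_cast N n
  omega

lemma single_diff {d : ℕ} (u v : Fin d → ℤ) (h : (∑ i, |u i - v i|) = 1) :
    ∃ i₀, |u i₀ - v i₀| = 1 ∧ ∀ i, i ≠ i₀ → u i = v i := by
  obtain ⟨i₀, _, hne⟩ := Finset.exists_ne_zero_of_sum_ne_zero (by rw [h]; norm_num :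
    (∑ i, |u i - v i|) ≠ 0)
  have hsplit := Finset.add_sum_erase Finset.univ (fun i => |u i - v i|) (Finset.mem_univ i₀)
  beta_reduce at hsplit
  have habs : 0 ≤ |u i₀ - v i₀| := abs_nonneg _
  have hrestnn : 0 ≤ ∑ i ∈ Finset.univ.erase i₀, |u i - v i| :=
    Finset.sum_nonneg fun i _ => abs_nonneg _
  have hrest0 : ∑ i ∈ Finset.univ.erase i₀, |u i - v i| = 0 := by omega
  refine ⟨i₀, by omega, ?_⟩
  intro i hi
  have h6 := (Finset.sum_eq_zero_iff_of_nonneg (fun i _ => abs_nonneg _)).mp hrest0 i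
    (Finset.mem_erase.mpr ⟨hi, Finset.mem_univ i⟩)
  have h7 := abs_eq_zero.mp h6
  omega

lemma clamp_neighbor {d : ℕ} (N : ℕ) (u v : Fin d → ℤ) (h : (∑ i, |u i - v i|) = 1) :
    (clampv N u = clampv N v ∧
      (excsum N u = excsum N v + 1 ∨ excsum N v = excsum N u + 1)) ∨
    ((∑ i, |clampv N u i - clampv N v i|) = 1 ∧ excsum N u = excsum N v) := by
  obtain ⟨i₀, hone, hothers⟩ := single_diff u v h
  have hC3 := clampz_cases N (u i₀) (v i₀) hone
  have hothersc : ∀ i, i ≠ i₀ → clampz N (u i) = clampz N (v i) := fun i hi => by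
    rw [hothers i hi]
  have hrestuv : ∑ i ∈ Finset.univ.erase i₀, |u i - clampz N (u i)| =
      ∑ i ∈ Finset.univ.erase i₀, |v i - clampz N (v i)| :=
    Finset.sum_congr rfl fun i hi => by rw [hothers i (Finset.ne_of_mem_erase hi)]
  have hsplitu := Finset.add_sum_erase Finset.univ (fun i => |u i - clampz N (u i)|)
    (Finset.mem_univ i₀)
  have hsplitv := Finset.add_sum_erase Finset.univ (fun i => |v i - clampz N (v i)|)
    (Finset.mem_univ i₀)
  beta_reduce at hsplitu hsplitv
  have hku := excsum_cast N u
  have hkv := excsum_cast N v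
  rcases hC3 with ⟨hcl, hex⟩ | ⟨hcl, hex⟩
  · left
    refine ⟨funext fun i => ?_, ?_⟩
    · by_cases hi : i = i₀
      · subst hi; exact hcl
      · exact hothersc i hi
    · rcases hex with hex | hex
      · left; omega
      · right; omega
  · right
    constructor
    · rw [← Finset.add_sum_erase Finset.univ (fun i => |clampv N u i - clampv N v i|)
        (Finset.mem_univ i₀)]
      have hz : ∑ i ∈ Finset.univ.erase i₀, |clampv N u i - clampv N v i| = 0 :=
        Finset.sum_eq_zero fun i hi => by
          show |clampz N (u i) - clampz N (v i)| = 0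
          rw [hothersc i (Finset.ne_of_mem_erase hi)]; simp
      rw [hz]
      show |clampz N (u i₀) - clampz N (v i₀)| + 0 = 1
      omega

    · omega


/-- For `G` finite connected non-bipartite, `d ≥ 2` and an edge
`(t0, t1)` of `G`, the Gibbs equivalence class of the `(t0, t1)`-chessboard configuration
is dense in the homshift `X^d_G`. -/
theorem gibbs_class_of_chessboard_dense {V : Type} [Fintype V] (G : V → V → Prop)
    (hsym : Symmetric G) (hconn : GraphConnected G) (hnbip : ¬ GraphBipartite G)
    (d : ℕ) (hd : 2 ≤ d) (t0 t1 : V) (he : G t0 t1) :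
    homSet G d ⊆ @closure _ (cfgTop V d)
      {y | IsHomConfig G d y ∧ FinDiff y (chessboard t0 t1 d)} := by
  intro x hx
  have hxhom : IsHomConfig G d x := hx
  letI : TopologicalSpace V := ⊥
  letI : TopologicalSpace ((Fin d → ℤ) → V) := cfgTop V d
  rw [mem_closure_iff_nhds]
  intro t ht
  have hnhds : @nhds _ (cfgTop V d) x = Filter.pi (fun n => pure (x n)) := by
    have h1 := @nhds_pi (Fin d → ℤ) (fun _ => V) (fun _ => (⊥ : TopologicalSpace V)) x
    have h2 : (@nhds V ⊥) = pure := @nhds_discrete V ⊥ ⟨rfl⟩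
    rw [show cfgTop V d = @Pi.topologicalSpace (Fin d → ℤ) (fun _ => V) (fun _ => ⊥) from rfl,
      h1, h2]
  rw [hnhds] at ht
  obtain ⟨I, hIfin, s, hs, hsub⟩ := Filter.mem_pi.mp ht
  obtain ⟨Nb, hNb⟩ : ∃ Nb : ℕ, ∀ n ∈ I, ∀ i, |n i| ≤ (Nb : ℤ) := by
    classical
    refine ⟨hIfin.toFinset.sup (fun n => Finset.univ.sup (fun i => (n i).natAbs)), ?_⟩
    intro n hn i
    have h1 : (n i).natAbs ≤ Finset.univ.sup (fun i => (n i).natAbs) :=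
      Finset.le_sup (f := fun i => (n i).natAbs) (Finset.mem_univ i)
    have h2 : Finset.univ.sup (fun i => (n i).natAbs) ≤
        hIfin.toFinset.sup (fun n => Finset.univ.sup (fun i => (n i).natAbs)) :=
      Finset.le_sup (f := fun n => Finset.univ.sup fun i => (n i).natAbs)
        (hIfin.mem_toFinset.mpr hn)
    have h3 := le_trans h1 h2
    simp only [Int.abs_eq_natAbs]
    exact_mod_cast h3
  set N : ℕ := 2 * Nb with hN
  have hNeven : Even N := ⟨Nb, by omega⟩
  have hIbox : ∀ n ∈ I, inBox N n := by
    intro n hn i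
    have h1 := hNb n hn i
    have h4 : (Nb : ℤ) ≤ (N : ℤ) := by push_cast; omega
    omega
  have hA : ∀ v : V, ∃ r : ℕ → V, r 0 = v ∧ (∀ i, G (r i) (r (i + 1))) ∧
      ∃ J, ∀ j, J ≤ j → r j = if Even j then t0 else t1 :=
    tail_walk hsym hconn hnbip he
  have hxbox : IsBoxHom G N x := fun u v _ _ hd1 => hxhom u v hd1
  obtain ⟨R, hR0, hRhom, hRmove, J, hRJ⟩ := chain_lemma hsym hA d N hNeven x hxbox
  set y : (Fin d → ℤ) → V := fun n => R (excsum N n) (clampv N n) with hy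
  have hagree : ∀ n, inBox N n → y n = x n := by
    intro n hn
    rw [hy]
    dsimp only
    rw [excsum_eq_zero hn, clampv_eq_self hn]
    exact hR0 n hn
  have hyhom : IsHomConfig G d y := by
    intro u v huv
    rcases clamp_neighbor N u v huv with ⟨hceq, hex | hex⟩ | ⟨hcd, hexeq⟩
    · rw [hy]; dsimp only
      rw [hceq, hex]
      exact hsym (hRmove (excsum N v) (clampv N v) (inBox_clampv N v))
    · rw [hy]; dsimp only
      rw [hceq, hex]
      exact hRmove (excsum N u) (clampv N v) (inBox_clampv N v)
    · rw [hy]; dsimp only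
      rw [hexeq]
      exact hRhom (excsum N v) (clampv N u) (clampv N v) (inBox_clampv N u)
        (inBox_clampv N v) hcd
  have htail : ∀ n, J ≤ excsum N n → y n = chessboard t0 t1 d n := by
    intro n hJle
    rw [hy]; dsimp only
    rw [hRJ (excsum N n) (clampv N n) hJle (inBox_clampv N n)]
    simp only [cbk, chessboard]
    refine if_congr ?_ rfl rfl
    exact Int.even_sub.mp (excsum_parity N n)
  have hfd : FinDiff y (chessboard t0 t1 d) := by
    have hss : {n | y n ≠ chessboard t0 t1 d n} ⊆
        {n : Fin d → ℤ | ∀ i, |n i| ≤ ((N + J : ℕ) : ℤ)} := by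
      intro n hn
      simp only [Set.mem_setOf_eq]
      by_contra hbig
      push_neg at hbig
      obtain ⟨i, hi⟩ := hbig
      exact hn (htail n (excsum_large N J n i (by push_cast at hi ⊢; omega)))
    have hfin : {n : Fin d → ℤ | ∀ i, |n i| ≤ ((N + J : ℕ) : ℤ)}.Finite := by
      apply Set.Finite.subset (Set.Finite.pi (fun _ : Fin d =>
        Set.finite_Icc (-(((N + J : ℕ) : ℤ))) ((N + J : ℕ) : ℤ)))
      intro n hn
      rw [Set.mem_pi]
      intro i _
      rw [Set.mem_Icc]
      exact abs_le.mp (hn i)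
    exact hfin.subset hss
  refine ⟨y, ?_, hyhom, hfd⟩
  apply hsub
  rw [Set.mem_pi]
  intro n hn
  rw [hagree n (hIbox n hn)]
  exact Filter.mem_pure.mp (hs n)
end
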